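/- arXiv:math/0501015 — 13 statements merged into one kernel-verified Lean document; each statement's English description precedes it below -/
import Mathlib

section
/- Let α, β > 0, n ≥ 1 and f₁, f₂, f₃ : Aⁿ → X be mappings such that ‖D^n_{λ₁,…,λₙ}[f₁,f₂,f₃](a₁,b₁,…,aₙ,bₙ)‖ ≤ α and ‖δⁿ[f₁,f₂,f₃](a₁,…,a_{n+1})‖ ≤ β for all a₁,…,a_{n+1}, b₁,…,bₙ ∈ A and all λ₁,…,λₙ ∈ ℂ, and such that for each 1 ≤ k ≤ 3, f_k(a₁,…,aₙ) = 0 whenever a_i = 0 for some i. Then there exists a unique n-cocycle F : Aⁿ → X such that ‖f₁(a₁,…,aₙ) − F(a₁,…,aₙ)‖ ≤ 3·2ⁿ·α, ‖f₂(a₁,…,aₙ) − F(a₁,…,aₙ)‖ ≤ 3·(1 + 1/n)·2ⁿ·α, and ‖f₃(a₁,…,aₙ) − F(a₁,…,aₙ)‖ ≤ 6·2ⁿ·α for all a₁,…,aₙ ∈ A. -/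
open Function Finset Filter

variable {A X : Type*}

section Defs

variable [NonUnitalNormedRing A] [NormedSpace ℂ A]
  [NormedAddCommGroup X] [NormedSpace ℂ X]

/-- The Pexiderized multi-linearity defect operator `Dⁿ_{λ₁,…,λₙ}[f₁,f₂,f₃]`. -/
def Dmap (n : ℕ) (f₁ f₂ f₃ : (Fin n → A) → X)
    (lam : Fin n → ℂ) (a b : Fin n → A) : X :=
  ∑ j : Fin n,
    (f₁ (Function.update a j (lam j • a j + lam j • b j))
      - lam j • f₂ a - lam j • f₃ (Function.update a j (b j)))

/-- The Pexiderized Hochschild coboundary operator `δⁿ[f₁,f₂,f₃]`.  Here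
`lsmul a x` denotes the left module action `a·x` and `rsmul a x` denotes the
right module action `x·a`. -/
noncomputable def deltaMap (n : ℕ) (lsmul rsmul : A →L[ℂ] X →L[ℂ] X)
    (f₁ f₂ f₃ : (Fin n → A) → X) (a : Fin (n + 1) → A) : X :=
  lsmul (a 0) (f₁ (fun i => a i.succ))
    + ∑ j : Fin n, ((-1 : ℤ) ^ ((j : ℕ) + 1)) •
        f₂ (fun i : Fin n =>
          if (i : ℕ) < (j : ℕ) then a i.castSucc
          else if (i : ℕ) = (j : ℕ) then a j.castSucc * a j.succ
          else a i.succ)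
    + ((-1 : ℤ) ^ (n + 1)) • rsmul (a (Fin.last n)) (f₃ (fun i : Fin n => a i.castSucc))

/-- `F : Aⁿ → X` is multi-linear: `ℂ`-linear in each variable separately. -/
def IsMultiLinear (n : ℕ) (F : (Fin n → A) → X) : Prop :=
  ∀ (i : Fin n) (a : Fin n → A) (c : ℂ) (x y : A),
    F (Function.update a i (x + y))
        = F (Function.update a i x) + F (Function.update a i y)
    ∧ F (Function.update a i (c • x)) = c • F (Function.update a i x)

/-- `F : Aⁿ → X` is an `n`-cocycle: multi-linear with `δⁿF = 0`. -/
def IsCocycle (n : ℕ) (lsmul rsmul : A →L[ℂ] X →L[ℂ] X)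
    (F : (Fin n → A) → X) : Prop :=
  IsMultiLinear n F ∧ ∀ a : Fin (n + 1) → A, deltaMap n lsmul rsmul F F F a = 0

end Defs
open Topology

section Aux

variable [NonUnitalNormedRing A] [NormedSpace ℂ A]
  [NormedAddCommGroup X] [NormedSpace ℂ X]

variable {n : ℕ} {f₁ f₂ f₃ : (Fin n → A) → X} {α : ℝ}

lemma aux_key
    (hD : ∀ (lam : Fin n → ℂ) (a b : Fin n → A), ‖Dmap n f₁ f₂ f₃ lam a b‖ ≤ α)
    (hv₁ : ∀ (a : Fin n → A) (i : Fin n), a i = 0 → f₁ a = 0)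
    (j : Fin n) (a : Fin n → A) (y : A) (l : ℂ) :
    ‖f₁ (Function.update a j (l • a j + l • y)) - l • f₂ a
        - l • f₃ (Function.update a j y)‖ ≤ α := by
  have h := hD (fun i => if i = j then l else 0) a (Function.update a j y)
  rw [Dmap] at h
  rw [Finset.sum_eq_single_of_mem j (Finset.mem_univ j)] at h
  · simpa using h
  · intro i _ hij
    have h0 : f₁ (Function.update a i (0:A)) = 0 := hv₁ _ i (by simp)
    simp [hij, h0]

lemma aux_12 (hn : 1 ≤ n)
    (hkey : ∀ (j : Fin n) (a : Fin n → A) (y : A) (l : ℂ),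
      ‖f₁ (Function.update a j (l • a j + l • y)) - l • f₂ a
        - l • f₃ (Function.update a j y)‖ ≤ α)
    (hv₃ : ∀ (a : Fin n → A) (i : Fin n), a i = 0 → f₃ a = 0)
    (a : Fin n → A) : ‖f₁ a - f₂ a‖ ≤ α := by
  have h := hkey ⟨0, hn⟩ a 0 1
  have h3 : f₃ (Function.update a ⟨0, hn⟩ 0) = 0 := hv₃ _ ⟨0, hn⟩ (by simp)
  simpa [Function.update_eq_self, h3] using h

lemma aux_13 (hn : 1 ≤ n)
    (hkey : ∀ (j : Fin n) (a : Fin n → A) (y : A) (l : ℂ),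
      ‖f₁ (Function.update a j (l • a j + l • y)) - l • f₂ a
        - l • f₃ (Function.update a j y)‖ ≤ α)
    (hv₂ : ∀ (a : Fin n → A) (i : Fin n), a i = 0 → f₂ a = 0)
    (a : Fin n → A) : ‖f₁ a - f₃ a‖ ≤ α := by
  set j : Fin n := ⟨0, hn⟩
  have h := hkey j (Function.update a j 0) (a j) 1
  have h2 : f₂ (Function.update a j 0) = 0 := hv₂ _ j (by simp)
  simp only [Function.update_self, Function.update_idem, one_smul, smul_zero, zero_add,
    h2, sub_zero, Function.update_eq_self] at h
  simpa [Function.update_eq_self] using h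

lemma aux_add
    (hkey : ∀ (j : Fin n) (a : Fin n → A) (y : A) (l : ℂ),
      ‖f₁ (Function.update a j (l • a j + l • y)) - l • f₂ a
        - l • f₃ (Function.update a j y)‖ ≤ α)
    (h12 : ∀ a, ‖f₁ a - f₂ a‖ ≤ α) (h13 : ∀ a, ‖f₁ a - f₃ a‖ ≤ α)
    (j : Fin n) (a : Fin n → A) (x y : A) :
    ‖f₁ (Function.update a j (x + y)) - f₁ (Function.update a j x)
      - f₁ (Function.update a j y)‖ ≤ 3 * α := by
  have h := hkey j (Function.update a j x) y 1
  simp only [Function.update_self, Function.update_idem, one_smul] at h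
  have e : f₁ (Function.update a j (x + y)) - f₁ (Function.update a j x)
        - f₁ (Function.update a j y)
      = (f₁ (Function.update a j (x + y)) - f₂ (Function.update a j x)
          - f₃ (Function.update a j y))
        + (f₂ (Function.update a j x) - f₁ (Function.update a j x))
        + (f₃ (Function.update a j y) - f₁ (Function.update a j y)) := by abel
  rw [e]
  calc _ ≤ ‖f₁ (Function.update a j (x + y)) - f₂ (Function.update a j x)
          - f₃ (Function.update a j y)‖
        + ‖f₂ (Function.update a j x) - f₁ (Function.update a j x)‖
        + ‖f₃ (Function.update a j y) - f₁ (Function.update a j y)‖ := norm_add₃_le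
    _ ≤ α + α + α := by
        refine add_le_add (add_le_add h ?_) ?_
        · rw [norm_sub_rev]; exact h12 _
        · rw [norm_sub_rev]; exact h13 _
    _ = 3 * α := by ring

lemma aux_hom
    (hkey : ∀ (j : Fin n) (a : Fin n → A) (y : A) (l : ℂ),
      ‖f₁ (Function.update a j (l • a j + l • y)) - l • f₂ a
        - l • f₃ (Function.update a j y)‖ ≤ α)
    (h12 : ∀ a, ‖f₁ a - f₂ a‖ ≤ α)
    (hv₃ : ∀ (a : Fin n → A) (i : Fin n), a i = 0 → f₃ a = 0)
    (j : Fin n) (a : Fin n → A) (x : A) (l : ℂ) :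
    ‖f₁ (Function.update a j (l • x)) - l • f₁ (Function.update a j x)‖
      ≤ α + ‖l‖ * α := by
  have h := hkey j (Function.update a j x) 0 l
  have h3 : f₃ (Function.update a j 0) = 0 := hv₃ _ j (by simp)
  simp only [Function.update_self, Function.update_idem, smul_zero, add_zero, h3,
    sub_zero] at h
  have e : f₁ (Function.update a j (l • x)) - l • f₁ (Function.update a j x)
      = (f₁ (Function.update a j (l • x)) - l • f₂ (Function.update a j x))
        + l • (f₂ (Function.update a j x) - f₁ (Function.update a j x)) := by
    rw [smul_sub]; abel
  rw [e]
  calc _ ≤ ‖f₁ (Function.update a j (l • x)) - l • f₂ (Function.update a j x)‖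
        + ‖l • (f₂ (Function.update a j x) - f₁ (Function.update a j x))‖ := norm_add_le _ _
    _ ≤ α + ‖l‖ * α := by
        have hb : ‖l • (f₂ (Function.update a j x) - f₁ (Function.update a j x))‖
            ≤ ‖l‖ * α := by
          rw [norm_smul]; gcongr; rw [norm_sub_rev]; exact h12 _
        exact add_le_add h hb

lemma aux_double
    (hadd : ∀ (j : Fin n) (a : Fin n → A) (x y : A),
      ‖f₁ (Function.update a j (x + y)) - f₁ (Function.update a j x)
        - f₁ (Function.update a j y)‖ ≤ 3 * α)
    (a : Fin n → A) :
    ‖f₁ (fun i => (2:ℂ) • a i) - ((2:ℂ) ^ n) • f₁ a‖ ≤ 3 * α * (2 ^ n - 1) := by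
  have key : ∀ s : Finset (Fin n),
      ‖f₁ (fun i => if i ∈ s then (2:ℂ) • a i else a i) - ((2:ℂ) ^ s.card) • f₁ a‖
        ≤ 3 * α * (2 ^ s.card - 1) := by
    intro s
    induction s using Finset.induction_on with
    | empty => simp
    | @insert j s hj ih =>
      set b : Fin n → A := fun i => if i ∈ s then (2:ℂ) • a i else a i with hbdef
      have hb : (fun i => if i ∈ insert j s then (2:ℂ) • a i else a i)
          = Function.update b j (a j + a j) := by
        funext i
        by_cases hi : i = j
        · subst hi; simp [hbdef, hj, two_smul]
        · simp [Function.update_of_ne hi, hbdef, Finset.mem_insert, hi]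
      have hbj : Function.update b j (a j) = b := by
        funext i
        by_cases hi : i = j
        · subst hi; simp [hbdef, hj]
        · simp [Function.update_of_ne hi]
      have h1 : ‖f₁ (Function.update b j (a j + a j)) - f₁ b - f₁ b‖ ≤ 3 * α := by
        have h := hadd j b (a j) (a j)
        rwa [hbj] at h
      rw [hb, Finset.card_insert_of_notMem hj]
      have e : f₁ (Function.update b j (a j + a j)) - (2:ℂ) ^ (s.card + 1) • f₁ a
          = (f₁ (Function.update b j (a j + a j)) - f₁ b - f₁ b)
            + (2:ℂ) • (f₁ b - (2:ℂ) ^ s.card • f₁ a) := by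
        have hp : (2:ℂ) ^ (s.card + 1) = 2 * 2 ^ s.card := by rw [pow_succ]; ring
        rw [hp]
        module
      rw [e]
      calc _ ≤ ‖f₁ (Function.update b j (a j + a j)) - f₁ b - f₁ b‖
            + ‖(2:ℂ) • (f₁ b - (2:ℂ) ^ s.card • f₁ a)‖ := norm_add_le _ _
        _ ≤ 3 * α + 2 * (3 * α * (2 ^ s.card - 1)) := by
            refine add_le_add h1 ?_
            rw [norm_smul]
            have h2c : ‖(2:ℂ)‖ = 2 := by simp
            rw [h2c]
            have h2 : (0:ℝ) ≤ 2 := by norm_num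
            exact mul_le_mul_of_nonneg_left ih h2
        _ = 3 * α * (2 ^ (s.card + 1) - 1) := by ring
  have h := key Finset.univ
  simpa using h

lemma aux_scale {G : (Fin n → A) → X} (hM : IsMultiLinear n G) (l : ℂ) (a : Fin n → A) :
    G (fun i => l • a i) = l ^ n • G a := by
  have key : ∀ s : Finset (Fin n),
      G (fun i => if i ∈ s then l • a i else a i) = l ^ s.card • G a := by
    intro s
    induction s using Finset.induction_on with
    | empty => simp
    | @insert j s hj ih =>
      set b : Fin n → A := fun i => if i ∈ s then l • a i else a i with hbdef
      have hb : (fun i => if i ∈ insert j s then l • a i else a i)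
          = Function.update b j (l • a j) := by
        funext i
        by_cases hi : i = j
        · subst hi; simp [hbdef, hj]
        · simp [Function.update_of_ne hi, hbdef, Finset.mem_insert, hi]
      have hbj : Function.update b j (a j) = b := by
        funext i
        by_cases hi : i = j
        · subst hi; simp [hbdef, hj]
        · simp [Function.update_of_ne hi]
      rw [hb, Finset.card_insert_of_notMem hj]
      have h := (hM j b l (a j) 0).2
      rw [hbj] at h
      rw [h, ih, smul_smul, ← pow_succ']
  have h := key Finset.univ
  simpa using h

lemma aux_zsmul_norm (k : ℕ) (z : X) : ‖((-1:ℤ)^k) • z‖ = ‖z‖ := by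
  rw [← Int.cast_smul_eq_zsmul ℂ, norm_smul]; simp

end Aux

section Aux2

variable [NonUnitalNormedRing A] [NormedSpace ℂ A]
  [IsScalarTower ℂ A A] [SMulCommClass ℂ A A]
  [NormedAddCommGroup X] [NormedSpace ℂ X]

variable {n : ℕ}

lemma aux_deltaScale (lsmul rsmul : A →L[ℂ] X →L[ℂ] X) {F : (Fin n → A) → X}
    (hM : IsMultiLinear n F) (l : ℂ) (a : Fin (n + 1) → A) :
    deltaMap n lsmul rsmul F F F (fun i => l • a i)
      = l ^ (n + 1) • deltaMap n lsmul rsmul F F F a := by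
  have e1 : lsmul (l • a 0) (F fun i => l • a i.succ)
      = l ^ (n + 1) • lsmul (a 0) (F fun i => a i.succ) := by
    have hs : F (fun i => l • a i.succ) = l ^ n • F (fun i => a i.succ) :=
      aux_scale hM l _
    rw [hs, map_smul lsmul l (a 0), ContinuousLinearMap.smul_apply, map_smul, smul_smul]
    congr 1
    ring
  have e3 : rsmul (l • a (Fin.last n)) (F fun i => l • a i.castSucc)
      = l ^ (n + 1) • rsmul (a (Fin.last n)) (F fun i => a i.castSucc) := by
    have hs : F (fun i => l • a i.castSucc) = l ^ n • F (fun i => a i.castSucc) :=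
      aux_scale hM l _
    rw [hs, map_smul rsmul l (a (Fin.last n)), ContinuousLinearMap.smul_apply, map_smul,
      smul_smul]
    congr 1
    ring
  have e2 : ∀ j : Fin n,
      F (fun i : Fin n =>
          if (i : ℕ) < (j : ℕ) then l • a i.castSucc
          else if (i : ℕ) = (j : ℕ) then l • a j.castSucc * (l • a j.succ)
          else l • a i.succ)
        = l ^ (n + 1) • F (fun i : Fin n =>
          if (i : ℕ) < (j : ℕ) then a i.castSucc
          else if (i : ℕ) = (j : ℕ) then a j.castSucc * a j.succ
          else a i.succ) := by
    intro j
    set s : Fin n → A := fun i =>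
      if (i : ℕ) < (j : ℕ) then a i.castSucc
      else if (i : ℕ) = (j : ℕ) then a j.castSucc * a j.succ
      else a i.succ with hsdef
    set u : Fin n → A := fun i => l • s i with hudef
    have hT : (fun i : Fin n =>
          if (i : ℕ) < (j : ℕ) then l • a i.castSucc
          else if (i : ℕ) = (j : ℕ) then l • a j.castSucc * (l • a j.succ)
          else l • a i.succ) = Function.update u j (l • u j) := by
      funext i
      by_cases hi : i = j
      · subst hi
        simp [hudef, hsdef, smul_mul_smul_comm, smul_smul]
      · have hi' : (i : ℕ) ≠ (j : ℕ) := fun h => hi (Fin.ext h)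
        rw [Function.update_of_ne hi]
        simp only [hudef, hsdef]
        by_cases hlt : (i : ℕ) < (j : ℕ)
        · simp [hlt]
        · simp [hlt, hi']
    have huj : Function.update u j (u j) = u := Function.update_eq_self j u
    rw [hT]
    have h := (hM j u l (u j) 0).2
    rw [huj] at h
    rw [h, aux_scale hM l s, smul_smul, ← pow_succ']
  simp only [deltaMap]
  rw [e1, e3]
  rw [smul_add, smul_add, Finset.smul_sum]
  congr 1
  congr 1
  · refine Finset.sum_congr rfl (fun j _ => ?_)
    rw [e2 j, smul_comm]
  · rw [smul_comm]

lemma aux_deltaSub (lsmul rsmul : A →L[ℂ] X →L[ℂ] X)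
    (F f₁ f₂ f₃ : (Fin n → A) → X) (a : Fin (n + 1) → A) :
    deltaMap n lsmul rsmul F F F a - deltaMap n lsmul rsmul f₁ f₂ f₃ a
      = lsmul (a 0) (F (fun i => a i.succ) - f₁ (fun i => a i.succ))
        + ∑ j : Fin n, ((-1 : ℤ) ^ ((j : ℕ) + 1)) •
            (F (fun i : Fin n =>
              if (i : ℕ) < (j : ℕ) then a i.castSucc
              else if (i : ℕ) = (j : ℕ) then a j.castSucc * a j.succ
              else a i.succ)
            - f₂ (fun i : Fin n =>
              if (i : ℕ) < (j : ℕ) then a i.castSucc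
              else if (i : ℕ) = (j : ℕ) then a j.castSucc * a j.succ
              else a i.succ))
        + ((-1 : ℤ) ^ (n + 1)) • rsmul (a (Fin.last n))
            (F (fun i : Fin n => a i.castSucc) - f₃ (fun i : Fin n => a i.castSucc)) := by
  simp only [deltaMap, map_sub, smul_sub, Finset.sum_sub_distrib]
  abel

end Aux2

section Aux3

variable [NonUnitalNormedRing A] [NormedSpace ℂ A]
  [NormedAddCommGroup X] [NormedSpace ℂ X]

/-- The Hyers–Ulam approximating sequence. -/
noncomputable def gseq (n : ℕ) (f : (Fin n → A) → X) (a : Fin n → A) (m : ℕ) : X :=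
  (((2:ℂ) ^ n)⁻¹) ^ m • f (fun i => ((2:ℂ) ^ m) • a i)

variable {n : ℕ} {f : (Fin n → A) → X} {α : ℝ}

lemma gseq_zero (a : Fin n → A) : gseq n f a 0 = f a := by
  simp [gseq]

lemma gseq_dist
    (hdouble : ∀ a : Fin n → A,
      ‖f (fun i => (2:ℂ) • a i) - ((2:ℂ) ^ n) • f a‖ ≤ 3 * α * (2 ^ n - 1))
    (a : Fin n → A) (m : ℕ) :
    dist (gseq n f a m) (gseq n f a (m + 1))
      ≤ (3 * α * (2 ^ n - 1) / 2 ^ n) * (((2:ℝ) ^ n)⁻¹) ^ m := by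
  have h2n : ((2:ℂ) ^ n) ≠ 0 := pow_ne_zero _ two_ne_zero
  have harg : (fun i => ((2:ℂ) ^ (m + 1)) • a i)
      = (fun i => (2:ℂ) • ((2:ℂ) ^ m) • a i) := by
    funext i; rw [pow_succ', mul_smul]
  have hsc : (((2:ℂ) ^ n)⁻¹) ^ (m + 1) * (2:ℂ) ^ n = (((2:ℂ) ^ n)⁻¹) ^ m := by
    rw [pow_succ, mul_assoc, inv_mul_cancel₀ h2n, mul_one]
  have e : gseq n f a m - gseq n f a (m + 1)
      = (((2:ℂ) ^ n)⁻¹) ^ (m + 1) • (((2:ℂ) ^ n) • f (fun i => ((2:ℂ) ^ m) • a i)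
          - f (fun i => (2:ℂ) • ((2:ℂ) ^ m) • a i)) := by
    simp only [gseq, harg, smul_sub, smul_smul, hsc]
  rw [dist_eq_norm, e, norm_smul, norm_pow]
  have hnq : ‖((2:ℂ) ^ n)⁻¹‖ = ((2:ℝ) ^ n)⁻¹ := by simp
  rw [hnq]
  calc (((2:ℝ) ^ n)⁻¹) ^ (m + 1) * ‖((2:ℂ) ^ n) • f (fun i => ((2:ℂ) ^ m) • a i)
          - f (fun i => (2:ℂ) • ((2:ℂ) ^ m) • a i)‖
      ≤ (((2:ℝ) ^ n)⁻¹) ^ (m + 1) * (3 * α * (2 ^ n - 1)) := by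
        refine mul_le_mul_of_nonneg_left ?_ (by positivity)
        rw [norm_sub_rev]
        exact hdouble _
    _ = (3 * α * (2 ^ n - 1) / 2 ^ n) * (((2:ℝ) ^ n)⁻¹) ^ m := by
        rw [pow_succ]
        ring

lemma gseq_update (a : Fin n → A) (j : Fin n) (z : A) (m : ℕ) :
    gseq n f (Function.update a j z) m
      = (((2:ℂ) ^ n)⁻¹) ^ m
          • f (Function.update (fun i => ((2:ℂ) ^ m) • a i) j (((2:ℂ) ^ m) • z)) := by
  have harg : (fun i => ((2:ℂ) ^ m) • Function.update a j z i)
      = Function.update (fun i => ((2:ℂ) ^ m) • a i) j (((2:ℂ) ^ m) • z) := by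
    funext i
    by_cases hi : i = j
    · subst hi; simp
    · simp [Function.update_of_ne hi]
  simp only [gseq, harg]

end Aux3

/-- **Theorem 2.1** (Pexiderized stability of `n`-cocycles). -/
theorem stability_of_cocycles
    [NonUnitalNormedRing A] [NormedSpace ℂ A]
    [IsScalarTower ℂ A A] [SMulCommClass ℂ A A]
    [NormedAddCommGroup X] [NormedSpace ℂ X] [CompleteSpace X]
    (lsmul rsmul : A →L[ℂ] X →L[ℂ] X)
    (hassoc_l : ∀ (a b : A) (x : X), lsmul (a * b) x = lsmul a (lsmul b x))
    (hassoc_r : ∀ (a b : A) (x : X), rsmul (a * b) x = rsmul b (rsmul a x))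
    (hcompat : ∀ (a b : A) (x : X), rsmul b (lsmul a x) = lsmul a (rsmul b x))
    (n : ℕ) (hn : 1 ≤ n) (α β : ℝ) (hα : 0 < α) (hβ : 0 < β)
    (f₁ f₂ f₃ : (Fin n → A) → X)
    (hD : ∀ (lam : Fin n → ℂ) (a b : Fin n → A),
      ‖Dmap n f₁ f₂ f₃ lam a b‖ ≤ α)
    (hδ : ∀ a : Fin (n + 1) → A, ‖deltaMap n lsmul rsmul f₁ f₂ f₃ a‖ ≤ β)
    (hv₁ : ∀ (a : Fin n → A) (i : Fin n), a i = 0 → f₁ a = 0)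
    (hv₂ : ∀ (a : Fin n → A) (i : Fin n), a i = 0 → f₂ a = 0)
    (hv₃ : ∀ (a : Fin n → A) (i : Fin n), a i = 0 → f₃ a = 0) :
    ∃! F : (Fin n → A) → X, IsCocycle n lsmul rsmul F ∧
      ∀ a : Fin n → A,
        ‖f₁ a - F a‖ ≤ 3 * 2 ^ n * α ∧
        ‖f₂ a - F a‖ ≤ 3 * (1 + 1 / (n : ℝ)) * 2 ^ n * α ∧
        ‖f₃ a - F a‖ ≤ 6 * 2 ^ n * α := by
  classical
  have hkey := aux_key hD hv₁
  have h12 := aux_12 hn hkey hv₃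
  have h13 := aux_13 hn hkey hv₂
  have hadd := aux_add hkey h12 h13
  have hhom := aux_hom hkey h12 hv₃
  have hdouble := aux_double hadd
  have hrpos : (0:ℝ) < ((2:ℝ) ^ n)⁻¹ := by positivity
  have hpow2 : (1:ℝ) < 2 ^ n := one_lt_pow₀ (by norm_num) (by omega)
  have hr : ((2:ℝ) ^ n)⁻¹ < 1 := by
    rw [inv_lt_one_iff₀]; right; exact hpow2
  -- construct the limit
  have hlim : ∀ a : Fin n → A, ∃ x : X, Tendsto (gseq n f₁ a) atTop (𝓝 x) := fun a =>
    cauchySeq_tendsto_of_complete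
      (cauchySeq_of_le_geometric _ _ hr (gseq_dist hdouble a))
  choose F hF using hlim
  -- the basic bound
  have hb1 : ∀ a, ‖f₁ a - F a‖ ≤ 3 * α := by
    intro a
    have h := dist_le_of_le_geometric_of_tendsto₀ _ _ hr (gseq_dist hdouble a) (hF a)
    rw [gseq_zero, dist_eq_norm] at h
    have heq : (3 * α * (2 ^ n - 1) / 2 ^ n) / (1 - ((2:ℝ) ^ n)⁻¹) = 3 * α := by
      have h2 : (0:ℝ) < 2 ^ n := by positivity
      have hne : (2:ℝ) ^ n - 1 ≠ 0 := by linarith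
      field_simp
    rw [heq] at h
    exact h
  have hb2 : ∀ a, ‖f₂ a - F a‖ ≤ 4 * α := by
    intro a
    have e : f₂ a - F a = (f₁ a - F a) - (f₁ a - f₂ a) := by abel
    rw [e]
    calc _ ≤ ‖f₁ a - F a‖ + ‖f₁ a - f₂ a‖ := norm_sub_le _ _
      _ ≤ 3 * α + α := add_le_add (hb1 a) (h12 a)
      _ = 4 * α := by ring
  have hb3 : ∀ a, ‖f₃ a - F a‖ ≤ 4 * α := by
    intro a
    have e : f₃ a - F a = (f₁ a - F a) - (f₁ a - f₃ a) := by abel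
    rw [e]
    calc _ ≤ ‖f₁ a - F a‖ + ‖f₁ a - f₃ a‖ := norm_sub_le _ _
      _ ≤ 3 * α + α := add_le_add (hb1 a) (h13 a)
      _ = 4 * α := by ring
  -- vanishing helpers
  have hzero : ∀ (h : ℕ → X) (L : X) (C : ℝ), Tendsto h atTop (𝓝 L) →
      (∀ m, ‖h m‖ ≤ C * (((2:ℝ) ^ n)⁻¹) ^ m) → L = 0 := by
    intro h L C hT hb
    have h0 : Tendsto (fun m : ℕ => C * (((2:ℝ) ^ n)⁻¹) ^ m) atTop (𝓝 0) := by
      have := tendsto_pow_atTop_nhds_zero_of_lt_one (le_of_lt hrpos) hr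
      simpa using this.const_mul C
    have hL : ‖L‖ ≤ 0 := le_of_tendsto_of_tendsto' hT.norm h0 hb
    exact norm_le_zero_iff.1 hL
  have hzero' : ∀ (L : X) (C : ℝ), (∀ m : ℕ, ‖L‖ ≤ C * ((2:ℝ)⁻¹) ^ m) → L = 0 := by
    intro L C hb
    have h0 : Tendsto (fun m : ℕ => C * ((2:ℝ)⁻¹) ^ m) atTop (𝓝 0) := by
      have := tendsto_pow_atTop_nhds_zero_of_lt_one (by norm_num : (0:ℝ) ≤ 2⁻¹)
        (by norm_num : (2:ℝ)⁻¹ < 1)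
      simpa using this.const_mul C
    have hL : ‖L‖ ≤ 0 := ge_of_tendsto' h0 hb
    exact norm_le_zero_iff.1 hL
  -- multilinearity of F
  have hFadd : ∀ (j : Fin n) (a : Fin n → A) (x y : A),
      F (Function.update a j (x + y))
        = F (Function.update a j x) + F (Function.update a j y) := by
    intro j a x y
    have hT : Tendsto (fun m => gseq n f₁ (Function.update a j (x + y)) m
        - gseq n f₁ (Function.update a j x) m - gseq n f₁ (Function.update a j y) m) atTop
        (𝓝 (F (Function.update a j (x + y)) - F (Function.update a j x)
          - F (Function.update a j y))) :=
      ((hF _).sub (hF _)).sub (hF _)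
    have hb : ∀ m, ‖gseq n f₁ (Function.update a j (x + y)) m
        - gseq n f₁ (Function.update a j x) m - gseq n f₁ (Function.update a j y) m‖
        ≤ (3 * α) * (((2:ℝ) ^ n)⁻¹) ^ m := by
      intro m
      have e : gseq n f₁ (Function.update a j (x + y)) m
            - gseq n f₁ (Function.update a j x) m - gseq n f₁ (Function.update a j y) m
          = (((2:ℂ) ^ n)⁻¹) ^ m
              • (f₁ (Function.update (fun i => ((2:ℂ) ^ m) • a i) j
                    (((2:ℂ) ^ m) • x + ((2:ℂ) ^ m) • y))
                - f₁ (Function.update (fun i => ((2:ℂ) ^ m) • a i) j (((2:ℂ) ^ m) • x))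
                - f₁ (Function.update (fun i => ((2:ℂ) ^ m) • a i) j (((2:ℂ) ^ m) • y))) := by
        simp only [gseq_update, smul_add, smul_sub]
      rw [e, norm_smul, norm_pow]
      have hnq : ‖((2:ℂ) ^ n)⁻¹‖ = ((2:ℝ) ^ n)⁻¹ := by simp
      rw [hnq]
      calc _ ≤ (((2:ℝ) ^ n)⁻¹) ^ m * (3 * α) :=
            mul_le_mul_of_nonneg_left (hadd j _ _ _) (by positivity)
        _ = (3 * α) * (((2:ℝ) ^ n)⁻¹) ^ m := by ring
    have h0 := hzero _ _ _ hT hb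
    rw [sub_sub, sub_eq_zero] at h0
    exact h0
  have hFsmul : ∀ (j : Fin n) (a : Fin n → A) (c : ℂ) (x : A),
      F (Function.update a j (c • x)) = c • F (Function.update a j x) := by
    intro j a c x
    have hT : Tendsto (fun m => gseq n f₁ (Function.update a j (c • x)) m
        - c • gseq n f₁ (Function.update a j x) m) atTop
        (𝓝 (F (Function.update a j (c • x)) - c • F (Function.update a j x))) :=
      (hF _).sub ((hF _).const_smul c)
    have hb : ∀ m, ‖gseq n f₁ (Function.update a j (c • x)) m
        - c • gseq n f₁ (Function.update a j x) m‖
        ≤ (α + ‖c‖ * α) * (((2:ℝ) ^ n)⁻¹) ^ m := by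
      intro m
      have e : gseq n f₁ (Function.update a j (c • x)) m
            - c • gseq n f₁ (Function.update a j x) m
          = (((2:ℂ) ^ n)⁻¹) ^ m
              • (f₁ (Function.update (fun i => ((2:ℂ) ^ m) • a i) j
                    (c • (((2:ℂ) ^ m) • x)))
                - c • f₁ (Function.update (fun i => ((2:ℂ) ^ m) • a i) j
                    (((2:ℂ) ^ m) • x))) := by
        simp only [gseq_update, smul_sub]
        rw [smul_comm ((2:ℂ) ^ m) c x, smul_comm c ((((2:ℂ) ^ n)⁻¹) ^ m)]
      rw [e, norm_smul, norm_pow]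
      have hnq : ‖((2:ℂ) ^ n)⁻¹‖ = ((2:ℝ) ^ n)⁻¹ := by simp
      rw [hnq]
      calc _ ≤ (((2:ℝ) ^ n)⁻¹) ^ m * (α + ‖c‖ * α) :=
            mul_le_mul_of_nonneg_left (hhom j _ _ c) (by positivity)
        _ = (α + ‖c‖ * α) * (((2:ℝ) ^ n)⁻¹) ^ m := by ring
    have h0 := hzero _ _ _ hT hb
    rw [sub_eq_zero] at h0
    exact h0
  have hMF : IsMultiLinear n F := fun i a c x y => ⟨hFadd i a x y, hFsmul i a c x⟩
  -- operator bounds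
  have hls : ∀ (u : A) (v : Fin n → A), ‖lsmul u (F v - f₁ v)‖ ≤ ‖lsmul‖ * ‖u‖ * (3 * α) := by
    intro u v
    calc ‖lsmul u (F v - f₁ v)‖ ≤ ‖lsmul u‖ * ‖F v - f₁ v‖ := (lsmul u).le_opNorm _
      _ ≤ (‖lsmul‖ * ‖u‖) * (3 * α) := by
          refine mul_le_mul (lsmul.le_opNorm u) ?_ (norm_nonneg _) (by positivity)
          rw [norm_sub_rev]; exact hb1 v
      _ = ‖lsmul‖ * ‖u‖ * (3 * α) := by ring
  have hrs : ∀ (u : A) (v : Fin n → A), ‖rsmul u (F v - f₃ v)‖ ≤ ‖rsmul‖ * ‖u‖ * (4 * α) := by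
    intro u v
    calc ‖rsmul u (F v - f₃ v)‖ ≤ ‖rsmul u‖ * ‖F v - f₃ v‖ := (rsmul u).le_opNorm _
      _ ≤ (‖rsmul‖ * ‖u‖) * (4 * α) := by
          refine mul_le_mul (rsmul.le_opNorm u) ?_ (norm_nonneg _) (by positivity)
          rw [norm_sub_rev]; exact hb3 v
      _ = ‖rsmul‖ * ‖u‖ * (4 * α) := by ring
  -- δF = 0
  have hdeltaF : ∀ a : Fin (n + 1) → A, deltaMap n lsmul rsmul F F F a = 0 := by
    intro a
    apply hzero' _ (β + (‖lsmul‖ * ‖a 0‖ * (3 * α) + ‖rsmul‖ * ‖a (Fin.last n)‖ * (4 * α))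
      + n * (4 * α))
    intro m
    have hLn : ‖((2:ℂ) ^ m)‖ = (2:ℝ) ^ m := by simp
    have hscale := aux_deltaScale lsmul rsmul hMF ((2:ℂ) ^ m) a
    have hnorm_eq : ‖deltaMap n lsmul rsmul F F F (fun i => ((2:ℂ) ^ m) • a i)‖
        = ((2:ℝ) ^ m) ^ (n + 1) * ‖deltaMap n lsmul rsmul F F F a‖ := by
      rw [hscale, norm_smul, norm_pow, hLn]
    have hdiff := aux_deltaSub lsmul rsmul F f₁ f₂ f₃ (fun i => ((2:ℂ) ^ m) • a i)
    have hdiffnorm : ‖deltaMap n lsmul rsmul F F F (fun i => ((2:ℂ) ^ m) • a i)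
        - deltaMap n lsmul rsmul f₁ f₂ f₃ (fun i => ((2:ℂ) ^ m) • a i)‖
        ≤ ‖lsmul‖ * ((2:ℝ) ^ m * ‖a 0‖) * (3 * α) + n * (4 * α)
          + ‖rsmul‖ * ((2:ℝ) ^ m * ‖a (Fin.last n)‖) * (4 * α) := by
      rw [hdiff]
      refine norm_add₃_le.trans ?_
      refine add_le_add (add_le_add ?_ ?_) ?_
      · refine le_trans (hls _ _) (le_of_eq ?_)
        simp only [norm_smul, hLn]
      · refine (norm_sum_le _ _).trans ?_
        calc _ ≤ ∑ _j : Fin n, (4:ℝ) * α := by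
              refine Finset.sum_le_sum (fun j _ => ?_)
              rw [aux_zsmul_norm, norm_sub_rev]
              exact hb2 _
          _ = n * (4 * α) := by
              rw [Finset.sum_const, Finset.card_univ, Fintype.card_fin, nsmul_eq_mul]
      · rw [aux_zsmul_norm]
        refine le_trans (hrs _ _) (le_of_eq ?_)
        simp only [norm_smul, hLn]
    have htri : ‖deltaMap n lsmul rsmul F F F (fun i => ((2:ℂ) ^ m) • a i)‖
        ≤ β + (‖lsmul‖ * ((2:ℝ) ^ m * ‖a 0‖) * (3 * α) + n * (4 * α)
          + ‖rsmul‖ * ((2:ℝ) ^ m * ‖a (Fin.last n)‖) * (4 * α)) := by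
      have e : deltaMap n lsmul rsmul F F F (fun i => ((2:ℂ) ^ m) • a i)
          = deltaMap n lsmul rsmul f₁ f₂ f₃ (fun i => ((2:ℂ) ^ m) • a i)
            + (deltaMap n lsmul rsmul F F F (fun i => ((2:ℂ) ^ m) • a i)
              - deltaMap n lsmul rsmul f₁ f₂ f₃ (fun i => ((2:ℂ) ^ m) • a i)) := by abel
      rw [e]
      exact (norm_add_le _ _).trans (add_le_add (hδ _) hdiffnorm)
    rw [hnorm_eq] at htri
    have hP1 : (1:ℝ) ≤ 2 ^ m := one_le_pow₀ one_le_two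
    have hPpos : (0:ℝ) < 2 ^ m := by positivity
    have hP2 : ((2:ℝ) ^ m) ^ 2 ≤ ((2:ℝ) ^ m) ^ (n + 1) :=
      pow_le_pow_right₀ hP1 (by omega)
    have hDpos : (0:ℝ) ≤ ‖deltaMap n lsmul rsmul F F F a‖ := norm_nonneg _
    have h1 : ((2:ℝ) ^ m) ^ 2 * ‖deltaMap n lsmul rsmul F F F a‖
        ≤ ((2:ℝ) ^ m) ^ (n + 1) * ‖deltaMap n lsmul rsmul F F F a‖ :=
      mul_le_mul_of_nonneg_right hP2 hDpos
    have hN0 : (0:ℝ) ≤ n * (4 * α) := by positivity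
    have hgoal : ‖deltaMap n lsmul rsmul F F F a‖ * 2 ^ m
        ≤ β + (‖lsmul‖ * ‖a 0‖ * (3 * α) + ‖rsmul‖ * ‖a (Fin.last n)‖ * (4 * α))
          + n * (4 * α) := by
      refine le_of_mul_le_mul_right ?_ hPpos
      nlinarith [htri, h1, mul_le_mul_of_nonneg_left hP1 hβ.le,
        mul_le_mul_of_nonneg_left hP1 hN0]
    have hinv : ((2:ℝ)⁻¹) ^ m = ((2:ℝ) ^ m)⁻¹ := by rw [← inv_pow]
    rw [hinv, ← div_eq_mul_inv, le_div_iff₀ hPpos]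
    exact hgoal
  -- conclusion: existence
  refine ⟨F, ⟨⟨hMF, hdeltaF⟩, ?_⟩, ?_⟩
  · intro a
    have h2pow : (1:ℝ) ≤ 2 ^ n := le_of_lt hpow2
    have h2n' : (2:ℝ) ≤ 2 ^ n := by
      calc (2:ℝ) = 2 ^ 1 := (pow_one 2).symm
        _ ≤ 2 ^ n := pow_le_pow_right₀ one_le_two hn
    have hn1 : (1:ℝ) ≤ (n:ℝ) := by exact_mod_cast hn
    have h1n : (0:ℝ) < 1 / (n:ℝ) := by positivity
    refine ⟨?_, ?_, ?_⟩
    · refine (hb1 a).trans ?_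
      nlinarith
    · refine (hb2 a).trans ?_
      have h6 : (6:ℝ) ≤ 3 * (1 + 1 / (n:ℝ)) * 2 ^ n := by nlinarith
      nlinarith
    · refine (hb3 a).trans ?_
      nlinarith
  -- uniqueness
  · rintro F' ⟨⟨hMF', hdelta'⟩, hbF'⟩
    funext a
    have key : F' a - F a = 0 := by
      apply hzero' _ (3 * 2 ^ n * α + 3 * α)
      intro m
      have hLn : ‖((2:ℂ) ^ m)‖ = (2:ℝ) ^ m := by simp
      have hsF := aux_scale hMF ((2:ℂ) ^ m) a
      have hsF' := aux_scale hMF' ((2:ℂ) ^ m) a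
      have e : F' (fun i => ((2:ℂ) ^ m) • a i) - F (fun i => ((2:ℂ) ^ m) • a i)
          = ((2:ℂ) ^ m) ^ n • (F' a - F a) := by
        rw [hsF, hsF', smul_sub]
      have hb' : ‖F' (fun i => ((2:ℂ) ^ m) • a i) - F (fun i => ((2:ℂ) ^ m) • a i)‖
          ≤ 3 * 2 ^ n * α + 3 * α := by
        have e2 : F' (fun i => ((2:ℂ) ^ m) • a i) - F (fun i => ((2:ℂ) ^ m) • a i)
            = (f₁ (fun i => ((2:ℂ) ^ m) • a i) - F (fun i => ((2:ℂ) ^ m) • a i))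
              - (f₁ (fun i => ((2:ℂ) ^ m) • a i) - F' (fun i => ((2:ℂ) ^ m) • a i)) := by
          abel
        rw [e2]
        refine (norm_sub_le _ _).trans ?_
        rw [add_comm]
        exact add_le_add (hbF' _).1 ((hb1 _).trans (by nlinarith [hpow2.le]))
      rw [e, norm_smul, norm_pow, hLn] at hb'
      have hP1 : (1:ℝ) ≤ 2 ^ m := one_le_pow₀ one_le_two
      have hPpos : (0:ℝ) < 2 ^ m := by positivity
      have hQ : (2:ℝ) ^ m ≤ ((2:ℝ) ^ m) ^ n := by
        calc (2:ℝ) ^ m = ((2:ℝ) ^ m) ^ 1 := (pow_one _).symm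
          _ ≤ ((2:ℝ) ^ m) ^ n := pow_le_pow_right₀ hP1 hn
      have hinv : ((2:ℝ)⁻¹) ^ m = ((2:ℝ) ^ m)⁻¹ := by rw [← inv_pow]
      rw [hinv, ← div_eq_mul_inv, le_div_iff₀ hPpos]
      calc ‖F' a - F a‖ * 2 ^ m ≤ ‖F' a - F a‖ * ((2:ℝ) ^ m) ^ n :=
            mul_le_mul_of_nonneg_left hQ (norm_nonneg _)
        _ = ((2:ℝ) ^ m) ^ n * ‖F' a - F a‖ := by ring
        _ ≤ 3 * 2 ^ n * α + 3 * α := hb'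
    have := sub_eq_zero.1 key
    exact this
end

section
/- Let α, β, γ > 0, x ∈ X, and f₁, f₂, f₃ : A → X be mappings with f₁(0) = f₂(0) = f₃(0) = 0 such that ‖f₁(λa + λb) − λ f₂(a) − λ f₃(b)‖ ≤ α, ‖a·f₁(b) − f₂(ab) + f₃(a)·b‖ ≤ β, and ‖a·x − x·a − f₁(a)‖ ≤ γ for all a, b ∈ A and all λ ∈ ℂ. Then there exists a ℂ-linear mapping F : A → X with a·F(b) − F(ab) + F(a)·b = 0 for all a,b ∈ A such that ‖f₁(a) − F(a)‖ ≤ 6α, ‖f₂(a) − F(a)‖ ≤ 12α, ‖f₃(a) − F(a)‖ ≤ 12α, and F(a) = a·x − x·a for all a ∈ A. -/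
open Filter Topology

/-- **Theorem 2.2**: Pexiderized stability of `1`-coboundaries.  Here
`lsmul a x` denotes the left module action `a·x` and `rsmul a x` denotes the
right module action `x·a`. -/
theorem stability_of_one_coboundaries
    {A X : Type*} [NonUnitalNormedRing A] [NormedSpace ℂ A]
    [IsScalarTower ℂ A A] [SMulCommClass ℂ A A]
    [NormedAddCommGroup X] [NormedSpace ℂ X] [CompleteSpace X]
    (lsmul rsmul : A →L[ℂ] X →L[ℂ] X)
    (hassoc_l : ∀ (a b : A) (x : X), lsmul (a * b) x = lsmul a (lsmul b x))
    (hassoc_r : ∀ (a b : A) (x : X), rsmul (a * b) x = rsmul b (rsmul a x))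
    (hcompat : ∀ (a b : A) (x : X), rsmul b (lsmul a x) = lsmul a (rsmul b x))
    (α β γ : ℝ) (hα : 0 < α) (hβ : 0 < β) (hγ : 0 < γ)
    (x : X) (f₁ f₂ f₃ : A → X)
    (hD : ∀ (lam : ℂ) (a b : A),
      ‖f₁ (lam • a + lam • b) - lam • f₂ a - lam • f₃ b‖ ≤ α)
    (hδ : ∀ a b : A, ‖lsmul a (f₁ b) - f₂ (a * b) + rsmul b (f₃ a)‖ ≤ β)
    (hx : ∀ a : A, ‖lsmul a x - rsmul a x - f₁ a‖ ≤ γ)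
    (h₁ : f₁ 0 = 0) (h₂ : f₂ 0 = 0) (h₃ : f₃ 0 = 0) :
    ∃ F : A → X, IsLinearMap ℂ F ∧
      (∀ a b : A, lsmul a (F b) - F (a * b) + rsmul b (F a) = 0) ∧
      (∀ a : A, ‖f₁ a - F a‖ ≤ 6 * α) ∧
      (∀ a : A, ‖f₂ a - F a‖ ≤ 12 * α) ∧
      (∀ a : A, ‖f₃ a - F a‖ ≤ 12 * α) ∧
      (∀ a : A, F a = lsmul a x - rsmul a x) := by
  set F : A → X := fun a => lsmul a x - rsmul a x with hF
  -- basic approximation facts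
  have h12 : ∀ a : A, ‖f₁ a - f₂ a‖ ≤ α := by
    intro a
    have := hD 1 a 0
    simpa [h₃] using this
  have h13 : ∀ b : A, ‖f₁ b - f₃ b‖ ≤ α := by
    intro b
    have := hD 1 0 b
    simpa [h₂] using this
  have hadd : ∀ a b : A, ‖f₁ (a + b) - f₁ a - f₁ b‖ ≤ 3 * α := by
    intro a b
    have h0 := hD 1 a b
    simp only [one_smul] at h0
    calc ‖f₁ (a + b) - f₁ a - f₁ b‖
        = ‖(f₁ (a + b) - f₂ a - f₃ b) + (f₂ a - f₁ a) + (f₃ b - f₁ b)‖ := by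
          congr 1; abel
      _ ≤ ‖f₁ (a + b) - f₂ a - f₃ b‖ + ‖f₂ a - f₁ a‖ + ‖f₃ b - f₁ b‖ := by
          exact norm_add₃_le
      _ ≤ α + α + α := by
          gcongr
          · simpa [norm_sub_rev] using h12 a
          · simpa [norm_sub_rev] using h13 b
      _ = 3 * α := by ring
  -- iterated doubling estimate
  have hpow : ∀ (a : A) (n : ℕ),
      ‖f₁ ((2 ^ n : ℂ) • a) - (2 ^ n : ℂ) • f₁ a‖ ≤ 3 * α * (2 ^ n - 1) := by
    intro a n
    induction n with
    | zero => simp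
    | succ n ih =>
      have key : (2 ^ (n + 1) : ℂ) • a = (2 ^ n : ℂ) • a + (2 ^ n : ℂ) • a := by
        rw [← add_smul]; ring_nf
      have h0 := hadd ((2 ^ n : ℂ) • a) ((2 ^ n : ℂ) • a)
      have key2 : (2 ^ (n + 1) : ℂ) • f₁ a
          = (2 ^ n : ℂ) • f₁ a + (2 ^ n : ℂ) • f₁ a := by
        rw [← add_smul]; ring_nf
      calc ‖f₁ ((2 ^ (n + 1) : ℂ) • a) - (2 ^ (n + 1) : ℂ) • f₁ a‖
          = ‖(f₁ ((2 ^ n : ℂ) • a + (2 ^ n : ℂ) • a)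
                - f₁ ((2 ^ n : ℂ) • a) - f₁ ((2 ^ n : ℂ) • a))
              + ((f₁ ((2 ^ n : ℂ) • a) - (2 ^ n : ℂ) • f₁ a)
                + (f₁ ((2 ^ n : ℂ) • a) - (2 ^ n : ℂ) • f₁ a))‖ := by
            rw [key, key2]
            congr 1
            abel
        _ ≤ ‖f₁ ((2 ^ n : ℂ) • a + (2 ^ n : ℂ) • a)
                - f₁ ((2 ^ n : ℂ) • a) - f₁ ((2 ^ n : ℂ) • a)‖
              + (‖f₁ ((2 ^ n : ℂ) • a) - (2 ^ n : ℂ) • f₁ a‖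
                + ‖f₁ ((2 ^ n : ℂ) • a) - (2 ^ n : ℂ) • f₁ a‖) :=
            (norm_add_le _ _).trans (by gcongr; exact norm_add_le _ _)
        _ ≤ 3 * α + (3 * α * (2 ^ n - 1) + 3 * α * (2 ^ n - 1)) := by gcongr
        _ = 3 * α * (2 ^ (n + 1) - 1) := by ring
  -- F is linear
  have hlin : IsLinearMap ℂ F := by
    constructor
    · intro a b; simp [hF]; abel
    · intro c a; simp [hF, smul_sub]
  -- F approximates f₁ within 3α
  have hF1 : ∀ a : A, ‖f₁ a - F a‖ ≤ 3 * α := by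
    intro a
    have hsmul : ∀ c : ℂ, F (c • a) = c • F a := fun c => hlin.map_smul c a
    have key : ∀ n : ℕ, ‖f₁ a - F a‖ ≤ γ / 2 ^ n + 3 * α := by
      intro n
      have h2n : (0:ℝ) < 2 ^ n := by positivity
      have est : ‖(2 ^ n : ℂ) • (f₁ a - F a)‖ ≤ γ + 3 * α * (2 ^ n - 1) := by
        calc ‖(2 ^ n : ℂ) • (f₁ a - F a)‖
            = ‖(((2 ^ n : ℂ) • f₁ a - f₁ ((2 ^ n : ℂ) • a))
                + (f₁ ((2 ^ n : ℂ) • a) - F ((2 ^ n : ℂ) • a))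
                + (F ((2 ^ n : ℂ) • a) - (2 ^ n : ℂ) • F a))‖ := by
              congr 1; rw [smul_sub]; abel
          _ ≤ ‖(2 ^ n : ℂ) • f₁ a - f₁ ((2 ^ n : ℂ) • a)‖
                + ‖f₁ ((2 ^ n : ℂ) • a) - F ((2 ^ n : ℂ) • a)‖
                + ‖F ((2 ^ n : ℂ) • a) - (2 ^ n : ℂ) • F a‖ := norm_add₃_le
          _ ≤ 3 * α * (2 ^ n - 1) + γ + 0 := by
              gcongr
              · simpa [norm_sub_rev] using hpow a n
              · simpa [hF, norm_sub_rev] using hx ((2 ^ n : ℂ) • a)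
              · simp [hsmul]
          _ = γ + 3 * α * (2 ^ n - 1) := by ring
      rw [norm_smul] at est
      have hnorm : ‖(2 ^ n : ℂ)‖ = (2 : ℝ) ^ n := by
        simp
      rw [hnorm] at est
      have h' : γ / 2 ^ n + 3 * α = (γ + 3 * α * 2 ^ n) / 2 ^ n := by
        field_simp
      rw [h', le_div_iff₀ h2n]
      nlinarith [est, hα]
    have htend : Tendsto (fun n : ℕ => γ / 2 ^ n + 3 * α) atTop (𝓝 (0 + 3 * α)) := by
      apply Tendsto.add_const
      simpa [div_eq_mul_inv, ← inv_pow] using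
        (tendsto_pow_atTop_nhds_zero_of_lt_one (by norm_num : (0:ℝ) ≤ 2⁻¹)
          (by norm_num : (2:ℝ)⁻¹ < 1)).const_mul γ
    have := ge_of_tendsto' htend key
    simpa using this
  refine ⟨F, hlin, ?_, ?_, ?_, ?_, fun a => rfl⟩
  · intro a b
    simp only [hF, map_sub]
    rw [hassoc_l a b x, hassoc_r a b x, hcompat a b x]
    abel
  · intro a
    calc ‖f₁ a - F a‖ ≤ 3 * α := hF1 a
      _ ≤ 6 * α := by linarith
  · intro a
    calc ‖f₂ a - F a‖ ≤ ‖f₂ a - f₁ a‖ + ‖f₁ a - F a‖ := norm_sub_le_norm_sub_add_norm_sub _ _ _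
      _ ≤ α + 3 * α := by
          gcongr
          · simpa [norm_sub_rev] using h12 a
          · exact hF1 a
      _ ≤ 12 * α := by linarith
  · intro a
    calc ‖f₃ a - F a‖ ≤ ‖f₃ a - f₁ a‖ + ‖f₁ a - F a‖ := norm_sub_le_norm_sub_add_norm_sub _ _ _
      _ ≤ α + 3 * α := by
          gcongr
          · simpa [norm_sub_rev] using h13 a
          · exact hF1 a
      _ ≤ 12 * α := by linarith
end

section
/- Let α, β > 0 and f : A → X be a mapping with f(0) = 0 such that ‖f(λa + λb) − λ f(a) − λ f(b)‖ ≤ α and ‖f(ab) − a·f(b) − f(a)·b‖ ≤ β for all a, b ∈ A and all λ ∈ ℂ. Then there exists a unique ℂ-linear derivation F : A → X (i.e. F(ab) = a·F(b) + F(a)·b for all a,b ∈ A) such that ‖f(a) − F(a)‖ ≤ 6α for all a ∈ A. -/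
private lemma norm_vanish {X : Type*} [NormedAddCommGroup X] (x : X) (c : ℝ)
    (h : ∀ n : ℕ, (n : ℝ) * ‖x‖ ≤ c) : x = 0 := by
  by_contra hx
  have hpos : 0 < ‖x‖ := norm_pos_iff.mpr hx
  obtain ⟨n, hn⟩ := exists_nat_gt (c / ‖x‖)
  have : c < (n : ℝ) * ‖x‖ := by
    have := (div_lt_iff₀ hpos).mp hn
    linarith
  linarith [h n]

/-- **Remark 2.3 (i)**: Hyers--Ulam stability of the derivation equation `f(ab) = a·f(b) + f(a)·b` together with the Cauchy equation.  Here `lsmul a x` denotes the left module action `a·x` and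
`rsmul a x` denotes the right module action `x·a`. -/
theorem hyers_ulam_stability_of_derivations
    {A X : Type*} [NonUnitalNormedRing A] [NormedSpace ℂ A]
    [IsScalarTower ℂ A A] [SMulCommClass ℂ A A]
    [NormedAddCommGroup X] [NormedSpace ℂ X] [CompleteSpace X]
    (lsmul rsmul : A →L[ℂ] X →L[ℂ] X)
    (hassoc_l : ∀ (a b : A) (x : X), lsmul (a * b) x = lsmul a (lsmul b x))
    (hassoc_r : ∀ (a b : A) (x : X), rsmul (a * b) x = rsmul b (rsmul a x))
    (hcompat : ∀ (a b : A) (x : X), rsmul b (lsmul a x) = lsmul a (rsmul b x))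
    (α β : ℝ) (hα : 0 < α) (hβ : 0 < β)
    (f : A → X) (h0 : f 0 = 0)
    (hD : ∀ (lam : ℂ) (a b : A),
      ‖f (lam • a + lam • b) - lam • f a - lam • f b‖ ≤ α)
    (hδ : ∀ a b : A, ‖f (a * b) - lsmul a (f b) - rsmul b (f a)‖ ≤ β) :
    ∃! F : A → X, IsLinearMap ℂ F ∧
      (∀ a b : A, F (a * b) = lsmul a (F b) + rsmul b (F a)) ∧
      ∀ a : A, ‖f a - F a‖ ≤ 6 * α := by
  -- approximate homogeneity
  have hE2 : ∀ (lam : ℂ) (a : A), ‖f (lam • a) - lam • f a‖ ≤ α := by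
    intro lam a
    have := hD lam a 0
    simpa [h0, smul_zero] using this
  -- exact homogeneity
  have hhom : ∀ (lam : ℂ) (a : A), f (lam • a) = lam • f a := by
    intro lam a
    have key : ∀ n : ℕ, (n : ℝ) * ‖f (lam • a) - lam • f a‖ ≤ 2 * α := by
      intro n
      have h1 := hE2 ((n : ℂ) * lam) a
      have h2 := hE2 (n : ℂ) (lam • a)
      simp only [mul_smul] at h1
      have h3 : ‖(n : ℂ) • f (lam • a) - (n : ℂ) • lam • f a‖ ≤ 2 * α := by
        have := norm_sub_le_norm_sub_add_norm_sub ((n : ℂ) • f (lam • a))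
          (f ((n : ℂ) • lam • a)) ((n : ℂ) • lam • f a)
        rw [norm_sub_rev] at h2
        calc ‖(n : ℂ) • f (lam • a) - (n : ℂ) • lam • f a‖
            ≤ ‖(n : ℂ) • f (lam • a) - f ((n : ℂ) • lam • a)‖ +
              ‖f ((n : ℂ) • lam • a) - (n : ℂ) • lam • f a‖ := this
          _ ≤ α + α := add_le_add h2 h1
          _ = 2 * α := by ring
      rw [← smul_sub, norm_smul, Complex.norm_natCast] at h3
      exact h3
    have := norm_vanish _ _ key
    rwa [sub_eq_zero] at this
  -- exact additivity
  have hadd : ∀ a b : A, f (a + b) = f a + f b := by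
    intro a b
    have key : ∀ n : ℕ, (n : ℝ) * ‖f (a + b) - (f a + f b)‖ ≤ α := by
      intro n
      have := hD (n : ℂ) a b
      rw [← smul_add, hhom] at this
      have h3 : ‖(n : ℂ) • (f (a + b) - (f a + f b))‖ ≤ α := by
        rw [smul_sub, smul_add]
        convert this using 2
        abel
      rwa [norm_smul, Complex.norm_natCast] at h3
    have := norm_vanish _ _ key
    rwa [sub_eq_zero] at this
  -- exact derivation
  have hder : ∀ a b : A, f (a * b) = lsmul a (f b) + rsmul b (f a) := by
    intro a b
    have key : ∀ n : ℕ,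
        (n : ℝ) * ‖f (a * b) - (lsmul a (f b) + rsmul b (f a))‖ ≤ β := by
      intro n
      have := hδ ((n : ℂ) • a) b
      rw [smul_mul_assoc, hhom, hhom, map_smul, map_smul,
        ContinuousLinearMap.smul_apply] at this
      have h3 : ‖(n : ℂ) • (f (a * b) - (lsmul a (f b) + rsmul b (f a)))‖ ≤ β := by
        rw [smul_sub, smul_add]
        convert this using 2
        abel
      rwa [norm_smul, Complex.norm_natCast] at h3
    have := norm_vanish _ _ key
    rwa [sub_eq_zero] at this
  refine ⟨f, ⟨⟨hadd, fun c x => hhom c x⟩, hder, fun a => by simp [hα.le]⟩, ?_⟩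
  rintro G ⟨hGlin, -, hGbound⟩
  funext a
  have key : ∀ n : ℕ, (n : ℝ) * ‖G a - f a‖ ≤ 6 * α := by
    intro n
    have h1 := hGbound ((n : ℂ) • a)
    rw [hhom, hGlin.map_smul] at h1
    rw [← smul_sub, norm_smul, Complex.norm_natCast, norm_sub_rev] at h1
    exact h1
  have := norm_vanish _ _ key
  rw [sub_eq_zero] at this
  exact this
end

section
/- Let α, β > 0 and f : A → X be a mapping with f(0) = 0 such that ‖f(λa + λb) − λ f(a) − λ f(b)‖ ≤ α and ‖a·f(b) − f(a)·b‖ ≤ β for all a, b ∈ A and all λ ∈ ℂ. Then there exists a unique ℂ-linear mapping F : A → X with a·F(b) = F(a)·b for all a,b ∈ A such that ‖f(a) − F(a)‖ ≤ 6α for all a ∈ A. -/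
open Filter Topology

/-- **Remark 2.3 (ii)**: Hyers--Ulam stability of the equation `a·f(b) = f(a)·b` together with the Cauchy equation.  Here `lsmul a x` denotes the left module action `a·x` and
`rsmul a x` denotes the right module action `x·a`. -/
theorem hyers_ulam_stability_of_intertwiners
    {A X : Type*} [NonUnitalNormedRing A] [NormedSpace ℂ A]
    [IsScalarTower ℂ A A] [SMulCommClass ℂ A A]
    [NormedAddCommGroup X] [NormedSpace ℂ X] [CompleteSpace X]
    (lsmul rsmul : A →L[ℂ] X →L[ℂ] X)
    (hassoc_l : ∀ (a b : A) (x : X), lsmul (a * b) x = lsmul a (lsmul b x))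
    (hassoc_r : ∀ (a b : A) (x : X), rsmul (a * b) x = rsmul b (rsmul a x))
    (hcompat : ∀ (a b : A) (x : X), rsmul b (lsmul a x) = lsmul a (rsmul b x))
    (α β : ℝ) (hα : 0 < α) (hβ : 0 < β)
    (f : A → X) (h0 : f 0 = 0)
    (hD : ∀ (lam : ℂ) (a b : A),
      ‖f (lam • a + lam • b) - lam • f a - lam • f b‖ ≤ α)
    (hδ : ∀ a b : A, ‖lsmul a (f b) - rsmul b (f a)‖ ≤ β) :
    ∃! F : A → X, IsLinearMap ℂ F ∧
      (∀ a b : A, lsmul a (F b) = rsmul b (F a)) ∧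
      ∀ a : A, ‖f a - F a‖ ≤ 6 * α := by
  classical
  set g : A → ℕ → X := fun a n => ((2:ℂ)^n)⁻¹ • f ((2:ℂ)^n • a) with hgdef
  have hadd' : ∀ a b : A, ‖f (a + b) - f a - f b‖ ≤ α := fun a b => by
    simpa using hD 1 a b
  have hlam' : ∀ (lam : ℂ) (a : A), ‖f (lam • a) - lam • f a‖ ≤ α := fun lam a => by
    simpa [h0] using hD lam a 0
  have hnorm2 : ∀ n : ℕ, ‖((2:ℂ)^n)⁻¹‖ = ((2:ℝ)^n)⁻¹ := by
    intro n
    rw [norm_inv, norm_pow]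
    norm_num
  -- the sequence is Cauchy
  have hdist : ∀ (a : A) (n : ℕ), dist (g a n) (g a (n+1)) ≤ (α/2) * (1/2)^n := by
    intro a n
    have h2 : ((2:ℂ)^(n+1)) • a = (2:ℂ) • ((2:ℂ)^n • a) := by
      rw [← mul_smul, ← pow_succ']
    have key : g a n - g a (n+1)
        = ((2:ℂ)^(n+1))⁻¹ • ((2:ℂ) • f ((2:ℂ)^n • a) - f ((2:ℂ)^(n+1) • a)) := by
      simp only [hgdef, smul_sub, smul_smul]
      congr 2
      rw [pow_succ]
      field_simp
    rw [dist_eq_norm, key, norm_smul, hnorm2]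
    have hb : ‖(2:ℂ) • f ((2:ℂ)^n • a) - f ((2:ℂ)^(n+1) • a)‖ ≤ α := by
      rw [norm_sub_rev, h2]
      exact hlam' 2 ((2:ℂ)^n • a)
    calc ((2:ℝ)^(n+1))⁻¹ * ‖(2:ℂ) • f ((2:ℂ)^n • a) - f ((2:ℂ)^(n+1) • a)‖
        ≤ ((2:ℝ)^(n+1))⁻¹ * α := by gcongr
      _ = (α/2) * (1/2)^n := by
          rw [pow_succ, mul_inv, one_div, inv_pow]
          ring
  have hcau : ∀ a : A, CauchySeq (g a) := fun a =>
    cauchySeq_of_le_geometric (1/2) (α/2) (by norm_num) (hdist a)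
  choose F hF using fun a => cauchySeq_tendsto_of_complete (hcau a)
  -- basics
  have hg0 : ∀ a : A, g a 0 = f a := fun a => by simp [hgdef]
  -- zero-tendsto helper
  have hzero : ∀ (C : ℝ) (u : ℕ → X), (∀ n, ‖u n‖ ≤ ((2:ℝ)^n)⁻¹ * C) →
      Tendsto u atTop (𝓝 0) := by
    intro C u hu
    apply squeeze_zero_norm hu
    have h1 : Tendsto (fun n : ℕ => ((2:ℝ)^n)⁻¹) atTop (𝓝 0) := by
      simp only [← inv_pow]
      exact tendsto_pow_atTop_nhds_zero_of_lt_one (by norm_num) (by norm_num)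
    simpa using h1.mul_const C
  -- additivity of F
  have hFadd : ∀ a b : A, F (a + b) = F a + F b := by
    intro a b
    have hd : Tendsto (fun n => g (a+b) n - (g a n + g b n)) atTop (𝓝 0) := by
      apply hzero α
      intro n
      have he : g (a+b) n - (g a n + g b n)
          = ((2:ℂ)^n)⁻¹ • (f ((2:ℂ)^n • a + (2:ℂ)^n • b) - f ((2:ℂ)^n • a) - f ((2:ℂ)^n • b)) := by
        simp only [hgdef, smul_add, smul_sub, sub_sub]
      rw [he, norm_smul, hnorm2]
      gcongr
      exact hadd' _ _
    have := hd.add ((hF a).add (hF b))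
    simp only [sub_add_cancel, zero_add] at this
    exact tendsto_nhds_unique (hF (a+b)) this
  -- homogeneity of F
  have hFsmul : ∀ (lam : ℂ) (a : A), F (lam • a) = lam • F a := by
    intro lam a
    have hd : Tendsto (fun n => g (lam • a) n - lam • g a n) atTop (𝓝 0) := by
      apply hzero α
      intro n
      have he : g (lam • a) n - lam • g a n
          = ((2:ℂ)^n)⁻¹ • (f (lam • ((2:ℂ)^n • a)) - lam • f ((2:ℂ)^n • a)) := by
        simp only [hgdef, smul_sub, smul_comm lam ((2:ℂ)^n)⁻¹, smul_comm lam ((2:ℂ)^n)]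
      rw [he, norm_smul, hnorm2]
      gcongr
      exact hlam' _ _
    have := hd.add ((hF a).const_smul lam)
    simp only [sub_add_cancel, zero_add] at this
    exact tendsto_nhds_unique (hF (lam • a)) this
  -- intertwining
  have hFcomm : ∀ a b : A, lsmul a (F b) = rsmul b (F a) := by
    intro a b
    have hl : Tendsto (fun n => lsmul a (g b n)) atTop (𝓝 (lsmul a (F b))) :=
      ((lsmul a).continuous.tendsto _).comp (hF b)
    have hr : Tendsto (fun n => rsmul b (g a n)) atTop (𝓝 (rsmul b (F a))) :=
      ((rsmul b).continuous.tendsto _).comp (hF a)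
    have hd : Tendsto (fun n => lsmul a (g b n) - rsmul b (g a n)) atTop (𝓝 0) := by
      apply hzero β
      intro n
      have he : lsmul a (g b n) - rsmul b (g a n)
          = ((2:ℂ)^n)⁻¹ • ((2:ℂ)^n)⁻¹ •
            (lsmul ((2:ℂ)^n • a) (f ((2:ℂ)^n • b)) - rsmul ((2:ℂ)^n • b) (f ((2:ℂ)^n • a))) := by
        simp only [hgdef, map_smul, ContinuousLinearMap.smul_apply]
        match_scalars <;> field_simp
      rw [he, norm_smul, norm_smul, hnorm2]
      have hip : ((2:ℝ)^n)⁻¹ ≤ 1 := by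
        rw [← inv_pow]
        exact pow_le_one₀ (by norm_num) (by norm_num)
      have hDb := hδ ((2:ℂ)^n • a) ((2:ℂ)^n • b)
      have hnn0 : (0:ℝ) ≤ ((2:ℝ)^n)⁻¹ := by positivity
      calc ((2:ℝ)^n)⁻¹ * (((2:ℝ)^n)⁻¹ * ‖lsmul ((2:ℂ)^n • a) (f ((2:ℂ)^n • b)) - rsmul ((2:ℂ)^n • b) (f ((2:ℂ)^n • a))‖)
          ≤ 1 * (((2:ℝ)^n)⁻¹ * β) :=
            mul_le_mul hip (mul_le_mul_of_nonneg_left hDb hnn0) (by positivity) (by norm_num)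
        _ = ((2:ℝ)^n)⁻¹ * β := one_mul _
    have := hd.add hr
    simp only [sub_add_cancel, zero_add] at this
    exact tendsto_nhds_unique hl this
  -- the bound
  have hFbound : ∀ a : A, ‖f a - F a‖ ≤ 6 * α := by
    intro a
    have := dist_le_of_le_geometric_of_tendsto₀ (1/2) (α/2) (by norm_num) (hdist a) (hF a)
    rw [hg0 a, dist_eq_norm] at this
    have hle : α / 2 / (1 - 1/2) = α := by ring
    rw [hle] at this
    linarith
  refine ⟨F, ⟨⟨hFadd, hFsmul⟩, hFcomm, hFbound⟩, ?_⟩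
  rintro G ⟨hGlin, hGcomm, hGbound⟩
  funext a
  have hbound : ∀ n : ℕ, ‖G a - F a‖ ≤ ((2:ℝ)^n)⁻¹ * (12 * α) := by
    intro n
    have hG2 : G ((2:ℂ)^n • a) = (2:ℂ)^n • G a := hGlin.map_smul _ _
    have hF2 : F ((2:ℂ)^n • a) = (2:ℂ)^n • F a := hFsmul _ _
    have heq : G a - F a = ((2:ℂ)^n)⁻¹ • (G ((2:ℂ)^n • a) - F ((2:ℂ)^n • a)) := by
      rw [hG2, hF2, smul_sub, smul_smul, smul_smul,
        inv_mul_cancel₀ (pow_ne_zero n (two_ne_zero)), one_smul, one_smul]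
    rw [heq, norm_smul, hnorm2]
    gcongr
    calc ‖G ((2:ℂ)^n • a) - F ((2:ℂ)^n • a)‖
        ≤ ‖G ((2:ℂ)^n • a) - f ((2:ℂ)^n • a)‖ + ‖f ((2:ℂ)^n • a) - F ((2:ℂ)^n • a)‖ := by
          simpa using norm_sub_le_norm_sub_add_norm_sub (G ((2:ℂ)^n • a)) (f ((2:ℂ)^n • a)) (F ((2:ℂ)^n • a))
      _ ≤ 6 * α + 6 * α := by
          gcongr
          · rw [norm_sub_rev]; exact hGbound _
          · exact hFbound _
      _ = 12 * α := by ring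
  have h1 : Tendsto (fun n : ℕ => ((2:ℝ)^n)⁻¹ * (12 * α)) atTop (𝓝 0) := by
    have h2 : Tendsto (fun n : ℕ => ((2:ℝ)^n)⁻¹) atTop (𝓝 0) := by
      simp only [← inv_pow]
      exact tendsto_pow_atTop_nhds_zero_of_lt_one (by norm_num) (by norm_num)
    simpa using h2.mul_const (12 * α)
  have hle0 : ‖G a - F a‖ ≤ 0 := ge_of_tendsto h1 (Eventually.of_forall hbound)
  have : G a - F a = 0 := by
    rw [← norm_le_zero_iff]
    exact hle0
  exact sub_eq_zero.mp this
end

section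
/- Let α, β > 0 and f : A → X be a mapping with f(0) = 0 such that ‖f(λa + λb) − λ f(a) − λ f(b)‖ ≤ α and ‖f(ab) − a·f(b)‖ ≤ β for all a, b ∈ A and all λ ∈ ℂ. Then there exists a unique ℂ-linear mapping F : A → X with F(ab) = a·F(b) for all a,b ∈ A such that ‖f(a) − F(a)‖ ≤ 6α for all a ∈ A. -/
open Filter Topology

/-- **Remark 2.3 (iii)**: Hyers--Ulam stability of the equation `f(ab) = a·f(b)` together with the Cauchy equation.  Here `lsmul a x` denotes the left module action `a·x` and
`rsmul a x` denotes the right module action `x·a`. -/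
theorem hyers_ulam_stability_of_left_multipliers
    {A X : Type*} [NonUnitalNormedRing A] [NormedSpace ℂ A]
    [IsScalarTower ℂ A A] [SMulCommClass ℂ A A]
    [NormedAddCommGroup X] [NormedSpace ℂ X] [CompleteSpace X]
    (lsmul rsmul : A →L[ℂ] X →L[ℂ] X)
    (hassoc_l : ∀ (a b : A) (x : X), lsmul (a * b) x = lsmul a (lsmul b x))
    (hassoc_r : ∀ (a b : A) (x : X), rsmul (a * b) x = rsmul b (rsmul a x))
    (hcompat : ∀ (a b : A) (x : X), rsmul b (lsmul a x) = lsmul a (rsmul b x))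
    (α β : ℝ) (hα : 0 < α) (hβ : 0 < β)
    (f : A → X) (h0 : f 0 = 0)
    (hD : ∀ (lam : ℂ) (a b : A),
      ‖f (lam • a + lam • b) - lam • f a - lam • f b‖ ≤ α)
    (hδ : ∀ a b : A, ‖f (a * b) - lsmul a (f b)‖ ≤ β) :
    ∃! F : A → X, IsLinearMap ℂ F ∧
      (∀ a b : A, F (a * b) = lsmul a (F b)) ∧
      ∀ a : A, ‖f a - F a‖ ≤ 6 * α := by
  classical
  -- Basic estimates
  have hadd : ∀ x y : A, ‖f (x + y) - f x - f y‖ ≤ α := by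
    intro x y
    simpa using hD 1 x y
  have hsmul : ∀ (lam : ℂ) (x : A), ‖f (lam • x) - lam • f x‖ ≤ α := by
    intro lam x
    simpa [h0] using hD lam x 0
  -- norm of (2^n : ℂ)
  have hnorm2 : ∀ n : ℕ, ‖((2 : ℂ) ^ n)⁻¹‖ = (2 : ℝ)⁻¹ ^ n := by
    intro n
    rw [norm_inv, norm_pow]
    simp [inv_pow]
  -- the approximating sequence
  set g : A → ℕ → X := fun a n => ((2 : ℂ) ^ n)⁻¹ • f ((2 : ℂ) ^ n • a) with hg
  have hg0 : ∀ a, g a 0 = f a := by intro a; simp [hg]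
  have key : ∀ a n, dist (g a n) (g a (n + 1)) ≤ (α / 2) * (1 / 2) ^ n := by
    intro a n
    have h2v : ((2 : ℂ) ^ (n + 1)) • a = (2 : ℂ) • ((2 : ℂ) ^ n • a) := by
      rw [smul_smul, pow_succ, mul_comm]
    have hinv : ((2 : ℂ) ^ n)⁻¹ = ((2 : ℂ) ^ (n + 1))⁻¹ * 2 := by
      rw [pow_succ, mul_inv, mul_assoc, inv_mul_cancel₀ two_ne_zero, mul_one]
    have hdiff : g a n - g a (n + 1) =
        -(((2 : ℂ) ^ (n + 1))⁻¹ •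
          (f ((2 : ℂ) • ((2 : ℂ) ^ n • a)) - (2 : ℂ) • f ((2 : ℂ) ^ n • a))) := by
      show ((2:ℂ)^n)⁻¹ • f ((2:ℂ)^n • a)
          - ((2:ℂ)^(n+1))⁻¹ • f ((2:ℂ)^(n+1) • a) = _
      rw [h2v, hinv, smul_sub]
      module
    rw [dist_eq_norm, hdiff, norm_neg, norm_smul, hnorm2 (n + 1)]
    calc (2 : ℝ)⁻¹ ^ (n + 1) *
          ‖f ((2:ℂ) • ((2:ℂ)^n • a)) - (2:ℂ) • f ((2:ℂ)^n • a)‖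
        ≤ (2 : ℝ)⁻¹ ^ (n + 1) * α :=
          mul_le_mul_of_nonneg_left (hsmul 2 _) (by positivity)
      _ = (α / 2) * (1 / 2) ^ n := by
          rw [pow_succ, one_div]
          ring
  have hcau : ∀ a, CauchySeq (g a) := fun a =>
    cauchySeq_of_le_geometric (1 / 2) (α / 2) (by norm_num) (key a)
  choose F hF using fun a => cauchySeq_tendsto_of_complete (hcau a)
  -- the approximation bound
  have hbound : ∀ a, ‖f a - F a‖ ≤ 6 * α := by
    intro a
    have := dist_le_of_le_geometric_of_tendsto₀ (1 / 2) (α / 2)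
      (by norm_num) (key a) (hF a)
    rw [hg0 a, dist_eq_norm] at this
    have h6 : (α / 2) / (1 - 1 / 2) = α := by ring
    rw [h6] at this
    linarith
  -- a squeeze lemma
  have squeeze : ∀ (u v : ℕ → X) (L : X) (C : ℝ),
      Tendsto v atTop (𝓝 L) → (∀ n, ‖u n - v n‖ ≤ C * (1 / 2) ^ n) →
      Tendsto u atTop (𝓝 L) := by
    intro u v L C hv hb
    have hz : Tendsto (fun n : ℕ => C * (1 / 2 : ℝ) ^ n) atTop (𝓝 0) := by
      have := tendsto_pow_atTop_nhds_zero_of_lt_one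
        (by norm_num : (0:ℝ) ≤ 1 / 2) (by norm_num : (1/2 : ℝ) < 1)
      simpa using this.const_mul C
    have h0' : Tendsto (fun n => u n - v n) atTop (𝓝 0) :=
      squeeze_zero_norm hb hz
    have := h0'.add hv
    simpa using this
  -- additivity
  have hFadd : ∀ a b : A, F (a + b) = F a + F b := by
    intro a b
    refine tendsto_nhds_unique (hF (a + b)) (squeeze _ (fun n => g a n + g b n) _ α
      ((hF a).add (hF b)) ?_)
    intro n
    have heq : g (a + b) n - (g a n + g b n) =
        ((2 : ℂ) ^ n)⁻¹ • (f ((2:ℂ)^n • a + (2:ℂ)^n • b)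
          - f ((2:ℂ)^n • a) - f ((2:ℂ)^n • b)) := by
      simp only [hg, smul_add, smul_sub]
      abel
    rw [heq, norm_smul, hnorm2 n]
    calc (2 : ℝ)⁻¹ ^ n * ‖_‖ ≤ (2 : ℝ)⁻¹ ^ n * α :=
          mul_le_mul_of_nonneg_left (hadd _ _) (by positivity)
      _ = α * (1 / 2) ^ n := by rw [one_div, mul_comm]
  -- homogeneity
  have hFsmul : ∀ (lam : ℂ) (a : A), F (lam • a) = lam • F a := by
    intro lam a
    refine tendsto_nhds_unique (hF (lam • a)) (squeeze _ (fun n => lam • g a n) _ α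
      ((hF a).const_smul lam) ?_)
    intro n
    have heq : g (lam • a) n - lam • g a n =
        ((2 : ℂ) ^ n)⁻¹ • (f (lam • ((2:ℂ)^n • a)) - lam • f ((2:ℂ)^n • a)) := by
      simp only [hg, smul_sub, smul_comm lam ((2:ℂ)^n), smul_smul]
      rw [mul_comm lam (((2:ℂ)^n)⁻¹)]
    rw [heq, norm_smul, hnorm2 n]
    calc (2 : ℝ)⁻¹ ^ n * ‖_‖ ≤ (2 : ℝ)⁻¹ ^ n * α :=
          mul_le_mul_of_nonneg_left (hsmul _ _) (by positivity)
      _ = α * (1 / 2) ^ n := by rw [one_div, mul_comm]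
  -- multiplicativity
  have hFmul : ∀ a b : A, F (a * b) = lsmul a (F b) := by
    intro a b
    have hv : Tendsto (fun n => lsmul a (g b n)) atTop (𝓝 (lsmul a (F b))) :=
      ((lsmul a).continuous.tendsto (F b)).comp (hF b)
    refine tendsto_nhds_unique (hF (a * b)) (squeeze _ (fun n => lsmul a (g b n)) _ β hv ?_)
    intro n
    have hmb : (2 : ℂ) ^ n • (a * b) = a * ((2:ℂ)^n • b) := (mul_smul_comm _ _ _).symm
    have heq : g (a * b) n - lsmul a (g b n) =
        ((2 : ℂ) ^ n)⁻¹ • (f (a * ((2:ℂ)^n • b)) - lsmul a (f ((2:ℂ)^n • b))) := by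
      simp only [hg, hmb, smul_sub, map_smul]
    rw [heq, norm_smul, hnorm2 n]
    calc (2 : ℝ)⁻¹ ^ n * ‖_‖ ≤ (2 : ℝ)⁻¹ ^ n * β :=
          mul_le_mul_of_nonneg_left (hδ _ _) (by positivity)
      _ = β * (1 / 2) ^ n := by rw [one_div, mul_comm]
  refine ⟨F, ⟨⟨hFadd, fun c x => hFsmul c x⟩, hFmul, hbound⟩, ?_⟩
  -- uniqueness
  rintro G ⟨hGlin, -, hGbound⟩
  funext a
  have hdist : ∀ n : ℕ, ‖G a - F a‖ ≤ (12 * α) * (1 / 2) ^ n := by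
    intro n
    have h1 : ‖f ((2:ℂ)^n • a) - F ((2:ℂ)^n • a)‖ ≤ 6 * α := hbound _
    have h2 : ‖f ((2:ℂ)^n • a) - G ((2:ℂ)^n • a)‖ ≤ 6 * α := hGbound _
    have hFe : F ((2:ℂ)^n • a) = (2:ℂ)^n • F a := hFsmul _ _
    have hGe : G ((2:ℂ)^n • a) = (2:ℂ)^n • G a := hGlin.map_smul _ _
    have h3 : ‖(2:ℂ)^n • G a - (2:ℂ)^n • F a‖ ≤ 12 * α := by
      rw [← hGe, ← hFe]
      have htri := dist_triangle (G ((2:ℂ)^n • a)) (f ((2:ℂ)^n • a)) (F ((2:ℂ)^n • a))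
      simp only [dist_eq_norm] at htri
      have h2' : ‖G ((2:ℂ)^n • a) - f ((2:ℂ)^n • a)‖ ≤ 6 * α := by
        rw [norm_sub_rev]; exact h2
      calc ‖G ((2:ℂ)^n • a) - F ((2:ℂ)^n • a)‖
          ≤ ‖G ((2:ℂ)^n • a) - f ((2:ℂ)^n • a)‖
            + ‖f ((2:ℂ)^n • a) - F ((2:ℂ)^n • a)‖ := htri
        _ ≤ 6 * α + 6 * α := add_le_add h2' h1
        _ = 12 * α := by ring
    rw [← smul_sub, norm_smul, norm_pow] at h3
    have h2n : ‖(2:ℂ)‖ = 2 := by simp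
    rw [h2n] at h3
    rw [← le_div_iff₀' (by positivity : (0:ℝ) < 2 ^ n)] at h3
    calc ‖G a - F a‖ ≤ 12 * α / 2 ^ n := h3
      _ = (12 * α) * (1 / 2) ^ n := by rw [div_pow, one_pow]; ring
  have hz : Tendsto (fun n : ℕ => (12 * α) * (1 / 2 : ℝ) ^ n) atTop (𝓝 0) := by
    have := tendsto_pow_atTop_nhds_zero_of_lt_one
      (by norm_num : (0:ℝ) ≤ 1 / 2) (by norm_num : (1/2 : ℝ) < 1)
    simpa using this.const_mul (12 * α)
  have hle : ‖G a - F a‖ ≤ 0 := ge_of_tendsto' hz hdist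
  have : G a - F a = 0 := norm_le_zero_iff.mp hle
  exact sub_eq_zero.mp this
end

section
/- Let α, β > 0 and f : A → X be a mapping with f(0) = 0 such that ‖f(λa + λb) − λ f(a) − λ f(b)‖ ≤ α and ‖f(ab) − f(a)·b‖ ≤ β for all a, b ∈ A and all λ ∈ ℂ. Then there exists a unique ℂ-linear mapping F : A → X with F(ab) = F(a)·b for all a,b ∈ A such that ‖f(a) − F(a)‖ ≤ 6α for all a ∈ A. -/
open Filter Topology

/-- **Remark 2.3 (iv)**: Hyers--Ulam stability of the equation `f(ab) = f(a)·b` together with the Cauchy equation.  Here `lsmul a x` denotes the left module action `a·x` and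
`rsmul a x` denotes the right module action `x·a`. -/
theorem hyers_ulam_stability_of_right_multipliers
    {A X : Type*} [NonUnitalNormedRing A] [NormedSpace ℂ A]
    [IsScalarTower ℂ A A] [SMulCommClass ℂ A A]
    [NormedAddCommGroup X] [NormedSpace ℂ X] [CompleteSpace X]
    (lsmul rsmul : A →L[ℂ] X →L[ℂ] X)
    (hassoc_l : ∀ (a b : A) (x : X), lsmul (a * b) x = lsmul a (lsmul b x))
    (hassoc_r : ∀ (a b : A) (x : X), rsmul (a * b) x = rsmul b (rsmul a x))
    (hcompat : ∀ (a b : A) (x : X), rsmul b (lsmul a x) = lsmul a (rsmul b x))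
    (α β : ℝ) (hα : 0 < α) (hβ : 0 < β)
    (f : A → X) (h0 : f 0 = 0)
    (hD : ∀ (lam : ℂ) (a b : A),
      ‖f (lam • a + lam • b) - lam • f a - lam • f b‖ ≤ α)
    (hδ : ∀ a b : A, ‖f (a * b) - rsmul b (f a)‖ ≤ β) :
    ∃! F : A → X, IsLinearMap ℂ F ∧
      (∀ a b : A, F (a * b) = rsmul b (F a)) ∧
      ∀ a : A, ‖f a - F a‖ ≤ 6 * α := by
  classical
  -- `(2:ℂ)` acts as `(2:ℝ)` on `X`
  have h2X : ∀ y : X, (2:ℂ) • y = (2:ℝ) • y := fun y => by rw [two_smul, two_smul]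
  -- the approximate doubling identity, with complex parameter
  have hstep2 : ∀ (lam : ℂ) (y : A), ‖f ((2 * lam) • y) - (2 * lam) • f y‖ ≤ α := by
    intro lam y
    have h := hD lam y y
    rw [mul_smul, two_smul, mul_smul (2:ℂ) lam (f y), two_smul]
    simpa [sub_sub] using h
  have hstep : ∀ y : A, ‖f ((2:ℂ) • y) - (2:ℂ) • f y‖ ≤ α := by
    intro y
    simpa using hstep2 1 y
  -- the approximating sequence
  set g : ℕ → A → X := fun n a => (1/2 : ℝ) ^ n • f ((2:ℂ) ^ n • a) with hgdef
  have hgsub : ∀ (n : ℕ) (a : A), g (n+1) a - g n a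
      = (1/2:ℝ)^(n+1) • (f ((2:ℂ)^(n+1) • a) - (2:ℂ) • f ((2:ℂ)^n • a)) := by
    intro n a
    rw [smul_sub, h2X, smul_smul,
      show ((1/2:ℝ)^(n+1) * 2) = (1/2:ℝ)^n by ring]
  have hdist : ∀ (a : A) (n : ℕ), dist (g n a) (g (n+1) a) ≤ α / 2 / 2^n := by
    intro a n
    rw [dist_eq_norm, norm_sub_rev, hgsub, norm_smul, Real.norm_eq_abs,
      abs_of_nonneg (by positivity)]
    have harg : (2:ℂ)^(n+1) • a = ((2:ℂ) * 1) • ((2:ℂ)^n • a) := by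
      rw [smul_smul, mul_one, ← pow_succ']
    have hb : ‖f ((2:ℂ)^(n+1) • a) - (2:ℂ) • f ((2:ℂ)^n • a)‖ ≤ α := by
      rw [harg]
      simpa using hstep2 1 ((2:ℂ)^n • a)
    calc (1/2:ℝ)^(n+1) * ‖f ((2:ℂ)^(n+1) • a) - (2:ℂ) • f ((2:ℂ)^n • a)‖
        ≤ (1/2:ℝ)^(n+1) * α := by
          exact mul_le_mul_of_nonneg_left hb (by positivity)
      _ = α / 2 / 2^n := by
          rw [div_div, one_div, inv_pow, inv_mul_eq_div, ← pow_succ']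
  have hcau : ∀ a : A, CauchySeq (fun n => g n a) := fun a =>
    cauchySeq_of_le_geometric_two (hdist a)
  have hFex : ∀ a : A, ∃ L : X, Tendsto (fun n => g n a) atTop (𝓝 L) := fun a =>
    cauchySeq_tendsto_of_complete (hcau a)
  choose F hF using hFex
  -- the geometric-sequence null sequence
  have hnull : ∀ C : ℝ, Tendsto (fun n : ℕ => (1/2:ℝ)^n * C) atTop (𝓝 0) := by
    intro C
    have := (tendsto_pow_atTop_nhds_zero_of_lt_one (by norm_num : (0:ℝ) ≤ 1/2)
      (by norm_num : (1/2:ℝ) < 1)).mul_const C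
    simpa using this
  -- the error bound
  have hbound : ∀ a : A, ‖f a - F a‖ ≤ 6 * α := by
    intro a
    have h := dist_le_of_le_geometric_two_of_tendsto₀ (hdist a) (hF a)
    have hg0 : g 0 a = f a := by simp [hgdef]
    rw [hg0, dist_eq_norm] at h
    linarith
  -- additivity
  have hadd : ∀ a b : A, F (a + b) = F a + F b := by
    intro a b
    have h1 : Tendsto (fun n => g n a + g n b) atTop (𝓝 (F a + F b)) :=
      (hF a).add (hF b)
    have h2 : Tendsto (fun n => g n (a+b) - (g n a + g n b)) atTop (𝓝 0) := by
      apply squeeze_zero_norm (a := fun n : ℕ => (1/2:ℝ)^n * α) _ (hnull α)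
      intro n
      have heq : g n (a+b) - (g n a + g n b)
          = (1/2:ℝ)^n • (f ((2:ℂ)^n • a + (2:ℂ)^n • b)
              - f ((2:ℂ)^n • a) - f ((2:ℂ)^n • b)) := by
        simp only [hgdef, smul_add, smul_sub]
        abel
      rw [heq, norm_smul, Real.norm_eq_abs, abs_of_nonneg (by positivity)]
      have := hD 1 ((2:ℂ)^n • a) ((2:ℂ)^n • b)
      simp only [one_smul] at this
      exact mul_le_mul_of_nonneg_left this (by positivity)
    have h3 : Tendsto (fun n => g n (a+b)) atTop (𝓝 (0 + (F a + F b))) := by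
      have := h2.add h1
      simpa using this
    have := tendsto_nhds_unique (hF (a+b)) h3
    simpa using this
  -- homogeneity
  have hsmul : ∀ (lam : ℂ) (a : A), F (lam • a) = lam • F a := by
    intro lam a
    have h1 : Tendsto (fun n => g (n+1) (lam • a)) atTop (𝓝 (F (lam • a))) :=
      (hF (lam • a)).comp (tendsto_add_atTop_nat 1)
    have h2 : Tendsto (fun n => lam • g n a) atTop (𝓝 (lam • F a)) :=
      (hF a).const_smul lam
    have h3 : Tendsto (fun n => g (n+1) (lam • a) - lam • g n a) atTop (𝓝 0) := by
      apply squeeze_zero_norm (a := fun n : ℕ => (1/2:ℝ)^n * α) _ (hnull α)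
      intro n
      have heq : g (n+1) (lam • a) - lam • g n a
          = (1/2:ℝ)^(n+1) • (f ((2 * lam) • ((2:ℂ)^n • a))
              - (2 * lam) • f ((2:ℂ)^n • a)) := by
        simp only [hgdef]
        rw [smul_sub]
        congr 1
        · congr 2
          rw [smul_smul, smul_smul]
          ring_nf
        · rw [smul_comm lam ((1/2:ℝ)^n), mul_smul (2:ℂ) lam, h2X, smul_smul,
            show ((1/2:ℝ)^(n+1) * 2) = (1/2:ℝ)^n by ring]
      rw [heq, norm_smul, Real.norm_eq_abs, abs_of_nonneg (by positivity)]
      have hb := hstep2 lam ((2:ℂ)^n • a)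
      calc (1/2:ℝ)^(n+1) * ‖_‖ ≤ (1/2:ℝ)^(n+1) * α :=
            mul_le_mul_of_nonneg_left hb (by positivity)
        _ ≤ (1/2:ℝ)^n * α := by
            apply mul_le_mul_of_nonneg_right _ hα.le
            apply pow_le_pow_of_le_one (by norm_num) (by norm_num)
            omega
    have h4 : Tendsto (fun n => g (n+1) (lam • a)) atTop (𝓝 (0 + lam • F a)) := by
      have := h3.add h2
      simpa using this
    have := tendsto_nhds_unique h1 h4
    simpa using this
  -- the multiplier property
  have hmul : ∀ a b : A, F (a * b) = rsmul b (F a) := by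
    intro a b
    have h1 : Tendsto (fun n => rsmul b (g n a)) atTop (𝓝 (rsmul b (F a))) :=
      ((rsmul b).continuous.tendsto (F a)).comp (hF a)
    have h3 : Tendsto (fun n => g n (a * b) - rsmul b (g n a)) atTop (𝓝 0) := by
      apply squeeze_zero_norm (a := fun n : ℕ => (1/2:ℝ)^n * β) _ (hnull β)
      intro n
      have heq : g n (a * b) - rsmul b (g n a)
          = (1/2:ℝ)^n • (f (((2:ℂ)^n • a) * b) - rsmul b (f ((2:ℂ)^n • a))) := by
        simp only [hgdef]
        rw [smul_sub, smul_mul_assoc, (rsmul b).map_smul_of_tower]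
      rw [heq, norm_smul, Real.norm_eq_abs, abs_of_nonneg (by positivity)]
      exact mul_le_mul_of_nonneg_left (hδ _ b) (by positivity)
    have h4 : Tendsto (fun n => g n (a * b)) atTop (𝓝 (0 + rsmul b (F a))) := by
      have := h3.add h1
      simpa using this
    have := tendsto_nhds_unique (hF (a * b)) h4
    simpa using this
  refine ⟨F, ⟨⟨hadd, hsmul⟩, hmul, hbound⟩, ?_⟩
  rintro G ⟨hGlin, -, hGbound⟩
  funext a
  have key : ∀ n : ℕ, ‖G a - F a‖ ≤ (1/2:ℝ)^n * (12 * α) := by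
    intro n
    have h2n : ‖(2:ℂ)^n‖ = (2:ℝ)^n := by
      rw [norm_pow, RCLike.norm_two]
    have hsc : (2:ℂ)^n • (G a - F a) = G ((2:ℂ)^n • a) - F ((2:ℂ)^n • a) := by
      rw [smul_sub, hGlin.map_smul, hsmul]
    have h1 : ‖G ((2:ℂ)^n • a) - F ((2:ℂ)^n • a)‖ ≤ 12 * α := by
      calc ‖G ((2:ℂ)^n • a) - F ((2:ℂ)^n • a)‖
          ≤ ‖f ((2:ℂ)^n • a) - G ((2:ℂ)^n • a)‖ + ‖f ((2:ℂ)^n • a) - F ((2:ℂ)^n • a)‖ := by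
            rw [← norm_neg (f _ - G _)]
            convert norm_add_le _ _ using 2
            exacts [rfl, by abel]
        _ ≤ 6 * α + 6 * α := add_le_add (hGbound _) (hbound _)
        _ = 12 * α := by ring
    have : (2:ℝ)^n * ‖G a - F a‖ ≤ 12 * α := by
      rw [show (2:ℝ)^n = ‖(2:ℂ)^n‖ from h2n.symm, ← norm_smul, hsc]
      exact h1
    rw [show (1/2:ℝ)^n * (12 * α) = (12 * α) / 2^n by rw [div_pow, one_pow]; ring]
    rw [le_div_iff₀ (by positivity)]
    linarith [this]
  have h0' : ‖G a - F a‖ ≤ 0 :=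
    ge_of_tendsto (hnull (12 * α)) (Eventually.of_forall key)
  have : G a - F a = 0 := norm_le_zero_iff.mp h0'
  exact sub_eq_zero.mp this
end

section
/- Let α, β, γ, η > 0, n ≥ 2, and let f₁, f₂, f₃ : Aⁿ → X and g₁, g₂, g₃ : A^{n−1} → X be mappings such that ‖D^n_{λ₁,…,λₙ}[f₁,f₂,f₃](a₁,b₁,…,aₙ,bₙ)‖ ≤ α, ‖δⁿ[f₁,f₂,f₃](a₁,…,a_{n+1})‖ ≤ β, ‖D^{n−1}_{λ₁,…,λ_{n−1}}[g₁,g₂,g₃](a₁,b₁,…,a_{n−1},b_{n−1})‖ ≤ γ, and ‖δ^{n−1}[g₁,g₂,g₃](a₁,…,aₙ) − f₁(a₁,…,aₙ)‖ ≤ η for all a₁,…,a_{n+1}, b₁,…,bₙ ∈ A and all λ₁,…,λₙ ∈ ℂ. Suppose for each 1 ≤ k ≤ 3 the maps f_k(a₁,…,aₙ) and g_k(a₁,…,a_{n−1}) vanish whenever any coordinate a_i = 0, and that g₁ is continuous at some point of A^{n−1}. Then there exist a unique n-cocycle F : Aⁿ → X and a unique continuous multi-linear mapping G : A^{n−1}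 → X such that ‖f₁ − F‖ ≤ 3·2ⁿ·α, ‖f₂ − F‖ ≤ 3·(1 + 1/n)·2ⁿ·α, ‖f₃ − F‖ ≤ 6·2ⁿ·α, ‖g₁ − G‖ ≤ 3·2ⁿ·γ, ‖g₂ − G‖ ≤ 3·(1 + 1/n)·2ⁿ·γ, ‖g₃ − G‖ ≤ 6·2ⁿ·γ (all bounds holding pointwise at every tuple of arguments), and F = δ^{n−1} G. -/
open Function Finset Filter

variable {A X : Type*}

section Aux

variable [NonUnitalNormedRing A] [NormedSpace ℂ A]
  [NormedAddCommGroup X] [NormedSpace ℂ X]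

lemma smul_eq_zero_of_bounded (x : X) (C : ℝ) (h : ∀ t : ℂ, ‖t • x‖ ≤ C) : x = 0 := by
  by_contra hx
  have hx' : 0 < ‖x‖ := norm_pos_iff.mpr hx
  have hC : 0 ≤ C := le_trans (by simp) (h 0)
  have h1 := h ((C / ‖x‖ + 1 : ℝ) : ℂ)
  rw [norm_smul, Complex.norm_real, Real.norm_eq_abs, abs_of_pos (by positivity)] at h1
  have h2 : (C / ‖x‖ + 1) * ‖x‖ = C + ‖x‖ := by field_simp
  nlinarith

lemma quad_zero (x : X) {b C : ℝ} (hb : 0 ≤ b) (hC : 0 ≤ C)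
    (h : ∀ s : ℝ, 1 ≤ s → s ^ 2 * ‖x‖ ≤ b + s * C) : x = 0 := by
  by_contra hx
  have hx' : 0 < ‖x‖ := norm_pos_iff.mpr hx
  have hs0 : 0 ≤ (b + C) / ‖x‖ := by positivity
  have hs : 1 ≤ (b + C) / ‖x‖ + 1 := by linarith
  set s := (b + C) / ‖x‖ + 1 with hs_def
  have h1 := h s hs
  have h2 : s * ‖x‖ = b + C + ‖x‖ := by
    rw [hs_def, add_mul, div_mul_cancel₀ _ (ne_of_gt hx'), one_mul]
  nlinarith [sq_nonneg s]

end Aux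

section Aux2

set_option linter.unusedSectionVars false

variable [NonUnitalNormedRing A] [NormedSpace ℂ A]
  [NormedAddCommGroup X] [NormedSpace ℂ X]

lemma update_inst_eq {n : ℕ} (inst : DecidableEq (Fin n)) (a : Fin n → A) (i : Fin n) (x : A) :
    @Function.update _ _ inst a i x = Function.update a i x := by
  rw [Subsingleton.elim inst (instDecidableEqFin n)]

/-- Package an `IsMultiLinear` function as a `MultilinearMap`. -/
def toML {n : ℕ} {F : (Fin n → A) → X} (hF : IsMultiLinear n F) :
    MultilinearMap ℂ (fun _ : Fin n => A) X where
  toFun := F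
  map_update_add' := by
    intro inst a i x y
    have e := Subsingleton.elim inst (instDecidableEqFin n)
    subst e
    exact (hF i a 1 x y).1
  map_update_smul' := by
    intro inst a i c x
    have e := Subsingleton.elim inst (instDecidableEqFin n)
    subst e
    exact (hF i a c x 0).2

lemma multi_smul {n : ℕ} {F : (Fin n → A) → X} (hF : IsMultiLinear n F) (t : ℂ)
    (a : Fin n → A) : F (fun i => t • a i) = t ^ n • F a := by
  have h := (toML hF).map_smul_univ (fun _ => t) a
  have h2 : (toML hF) (fun i => t • a i) = t ^ n • (toML hF) a := by
    simpa [Finset.prod_const] using h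
  exact h2

lemma isML_sub {n : ℕ} {F G : (Fin n → A) → X} (hF : IsMultiLinear n F)
    (hG : IsMultiLinear n G) : IsMultiLinear n (fun a => F a - G a) := by
  intro i a c x y
  refine ⟨?_, ?_⟩
  · simp only [(hF i a c x y).1, (hG i a c x y).1]; abel
  · simp only [(hF i a c x y).2, (hG i a c x y).2, smul_sub]

lemma ml_zero {n : ℕ} (hn : 0 < n) {H : (Fin n → A) → X} (hH : IsMultiLinear n H) {K : ℝ}
    (hb : ∀ a, ‖H a‖ ≤ K) (a : Fin n → A) : H a = 0 := by
  apply smul_eq_zero_of_bounded _ K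
  intro t
  have h := (hH ⟨0, hn⟩ a t (a ⟨0, hn⟩) 0).2
  rw [Function.update_eq_self] at h
  rw [← h]
  exact hb _

end Aux2

section Core

set_option linter.unusedSectionVars false

variable [NonUnitalNormedRing A] [NormedSpace ℂ A]
  [NormedAddCommGroup X] [NormedSpace ℂ X]

lemma core {n : ℕ} (hn : 0 < n) (f₁ f₂ f₃ : (Fin n → A) → X) {α : ℝ}
    (hD : ∀ (lam : Fin n → ℂ) (a b : Fin n → A), ‖Dmap n f₁ f₂ f₃ lam a b‖ ≤ α)
    (hv₁ : ∀ (a : Fin n → A) (i : Fin n), a i = 0 → f₁ a = 0)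
    (hv₂ : ∀ (a : Fin n → A) (i : Fin n), a i = 0 → f₂ a = 0)
    (hv₃ : ∀ (a : Fin n → A) (i : Fin n), a i = 0 → f₃ a = 0) :
    f₂ = f₃ ∧ IsMultiLinear n f₂ ∧ (∀ a, ‖f₁ a - f₂ a‖ ≤ α) := by
  -- the single-coordinate inequality
  have star : ∀ (k : Fin n) (t : ℂ) (a : Fin n → A) (y : A),
      ‖f₁ (Function.update a k (t • (a k + y))) - t • f₂ a
        - t • f₃ (Function.update a k y)‖ ≤ α := by
    intro k t a y
    have h := hD (Pi.single k t) a (Function.update a k y)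
    unfold Dmap at h
    rw [Finset.sum_eq_single k ?h1 ?h2] at h
    · simpa [Pi.single_eq_same, Function.update_self, smul_add] using h
    case h1 =>
      intro j _ hj
      rw [Pi.single_eq_of_ne hj]
      simp only [zero_smul, add_zero, zero_add, sub_zero]
      exact hv₁ _ j (Function.update_self _ _ _)
    case h2 => intro h; exact absurd (Finset.mem_univ k) h
  -- cancel-t tool
  have cancel : ∀ (u v : X) (W : ℂ → X),
      (∀ t : ℂ, ‖W t - t • u‖ ≤ α) → (∀ t : ℂ, ‖W t - t • v‖ ≤ α) → u = v := by
    intro u v W h1 h2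
    have : ∀ t : ℂ, ‖t • (u - v)‖ ≤ 2 * α := by
      intro t
      have e : t • (u - v) = (W t - t • v) - (W t - t • u) := by
        rw [smul_sub]; abel
      rw [e]
      calc ‖(W t - t • v) - (W t - t • u)‖ ≤ ‖W t - t • v‖ + ‖W t - t • u‖ :=
            norm_sub_le _ _
        _ ≤ 2 * α := by linarith [h1 t, h2 t]
    exact sub_eq_zero.mp (smul_eq_zero_of_bounded (u - v) (2 * α) this)
  -- step (a): value independent of the k-th coordinate
  have hUV : ∀ (k : Fin n) (a : Fin n → A) (y c : A),
      f₂ a + f₃ (Function.update a k (c - a k))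
        = f₂ (Function.update a k y) + f₃ (Function.update a k (c - y)) := by
    intro k a y c
    apply cancel _ _ (fun t => f₁ (Function.update a k (t • c)))
    · intro t
      have h := star k t a (c - a k)
      rw [add_sub_cancel] at h
      simpa [smul_add, sub_add_eq_sub_sub] using h
    · intro t
      have h := star k t (Function.update a k y) (c - y)
      rw [Function.update_self, add_sub_cancel, Function.update_idem,
        Function.update_idem] at h
      simpa [smul_add, sub_add_eq_sub_sub] using h
  -- f₂ = f₃
  have hkey : ∀ (k : Fin n) (a : Fin n → A) (c : A),
      f₂ (Function.update a k c) = f₂ a + f₃ (Function.update a k (c - a k)) := by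
    intro k a c
    have h := hUV k a c c
    rw [sub_self, hv₃ (Function.update a k 0) k (Function.update_self _ _ _), add_zero] at h
    exact h.symm
  have hkey2 : ∀ (k : Fin n) (a : Fin n → A) (c : A),
      f₃ (Function.update a k c) = f₂ a + f₃ (Function.update a k (c - a k)) := by
    intro k a c
    have h := hUV k a 0 c
    rw [hv₂ (Function.update a k 0) k (Function.update_self _ _ _), zero_add, sub_zero] at h
    exact h.symm
  have h23 : f₂ = f₃ := by
    funext a
    have k : Fin n := ⟨0, hn⟩
    have h := (hkey k a (a k)).trans (hkey2 k a (a k)).symm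
    simpa using h
  -- additivity
  have hadd : ∀ (k : Fin n) (a : Fin n → A) (x y : A),
      f₂ (Function.update a k (x + y))
        = f₂ (Function.update a k x) + f₂ (Function.update a k y) := by
    intro k a x y
    have h := hkey k (Function.update a k x) (x + y)
    rw [Function.update_idem, Function.update_idem, Function.update_self,
      add_sub_cancel_left, ← h23] at h
    exact h
  -- the special (y = 0) inequality
  have star2 : ∀ (k : Fin n) (t : ℂ) (a : Fin n → A),
      ‖f₁ (Function.update a k (t • a k)) - t • f₂ a‖ ≤ α := by
    intro k t a
    have h := star k t a 0
    rw [add_zero, hv₃ (Function.update a k 0) k (Function.update_self _ _ _),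
      smul_zero, sub_zero] at h
    exact h
  -- homogeneity
  have hsm0 : ∀ (k : Fin n) (a : Fin n → A) (s : ℂ),
      f₂ (Function.update a k (s • a k)) = s • f₂ a := by
    intro k a s
    have h1 : ∀ t : ℂ, ‖f₁ (Function.update a k (t • (s • a k))) - t • (s • f₂ a)‖ ≤ α := by
      intro t
      have h := star2 k (t * s) a
      rw [mul_smul, mul_smul] at h
      exact h
    have h2 : ∀ t : ℂ,
        ‖f₁ (Function.update a k (t • (s • a k)))
          - t • f₂ (Function.update a k (s • a k))‖ ≤ α := by
      intro t
      have h := star2 k t (Function.update a k (s • a k))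
      rwa [Function.update_self, Function.update_idem] at h
    exact cancel _ _ _ h2 h1
  have hsm : ∀ (k : Fin n) (a : Fin n → A) (s : ℂ) (x : A),
      f₂ (Function.update a k (s • x)) = s • f₂ (Function.update a k x) := by
    intro k a s x
    have h := hsm0 k (Function.update a k x) s
    rwa [Function.update_self, Function.update_idem] at h
  refine ⟨h23, fun i a c x y => ⟨hadd i a x y, hsm i a c x⟩, fun a => ?_⟩
  have h := star2 ⟨0, hn⟩ 1 a
  rwa [one_smul, one_smul, Function.update_eq_self] at h

end Core

section Delta

set_option linter.unusedSectionVars false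

variable [NonUnitalNormedRing A] [NormedSpace ℂ A]
  [IsScalarTower ℂ A A] [SMulCommClass ℂ A A]
  [NormedAddCommGroup X] [NormedSpace ℂ X]

lemma deltaMap_smul {n : ℕ} (l r : A →L[ℂ] X →L[ℂ] X) {F : (Fin n → A) → X}
    (hF : IsMultiLinear n F) (t : ℂ) (a : Fin (n + 1) → A) :
    deltaMap n l r F F F (fun i => t • a i) = t ^ (n + 1) • deltaMap n l r F F F a := by
  have hsmF : ∀ (b : Fin n → A), F (fun i => t • b i) = t ^ n • F b := multi_smul hF t
  unfold deltaMap
  rw [smul_add, smul_add]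
  congr 1
  · congr 1
    · -- first term
      show l (t • a 0) (F fun i => t • a i.succ) = _
      rw [hsmF, map_smul l, ContinuousLinearMap.smul_apply, map_smul (l (a 0)),
        smul_smul, ← pow_succ']
    · -- middle sum
      rw [Finset.smul_sum]
      refine Finset.sum_congr rfl fun j _ => ?_
      set B : Fin n → A := fun i : Fin n =>
        if (i : ℕ) < (j : ℕ) then a i.castSucc
        else if (i : ℕ) = (j : ℕ) then a j.castSucc * a j.succ
        else a i.succ with hB
      have hB' : (fun i : Fin n =>
          if (i : ℕ) < (j : ℕ) then (fun i => t • a i) i.castSucc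
          else if (i : ℕ) = (j : ℕ) then (fun i => t • a i) j.castSucc * (fun i => t • a i) j.succ
          else (fun i => t • a i) i.succ)
          = fun i => t • (Function.update B j (t • B j)) i := by
        funext i
        by_cases hij : i = j
        · subst hij
          simp [hB, smul_mul_assoc, mul_smul_comm]
        · have hij' : (i : ℕ) ≠ (j : ℕ) := fun h => hij (Fin.ext h)
          rw [Function.update_of_ne hij]
          simp only [hB]
          rcases lt_or_ge (i : ℕ) (j : ℕ) with h | h
          · simp [h]
          · have : ¬ (i : ℕ) < (j : ℕ) := not_lt.mpr h
            simp [this, hij']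
      rw [hB']
      rw [hsmF]
      have hupd : F (Function.update B j (t • B j)) = t • F B := by
        have h := (hF j B t (B j) 0).2
        rwa [Function.update_eq_self] at h
      rw [hupd, smul_smul, ← pow_succ, smul_comm]
  · -- last term
    show ((-1 : ℤ) ^ (n + 1)) • r (t • a (Fin.last n)) (F fun i => t • a i.castSucc) = _
    rw [hsmF, map_smul r, ContinuousLinearMap.smul_apply, map_smul (r (a (Fin.last n))),
      smul_smul, ← pow_succ', smul_comm]

end Delta

section Cont

set_option linter.unusedSectionVars false

variable [NonUnitalNormedRing A] [NormedSpace ℂ A]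
  [NormedAddCommGroup X] [NormedSpace ℂ X]

lemma continuous_of_ml_bounded {n : ℕ} {g : (Fin n → A) → X}
    (hg : IsMultiLinear n g) (e : Fin n → A) {M d : ℝ} (hd : 0 < d)
    (hb : ∀ x : Fin n → A, dist x e < d → ‖g x‖ ≤ M) : Continuous g := by
  set G := toML hg with hG
  have hGg : ∀ x, G x = g x := fun _ => rfl
  -- bound near zero
  have h0 : ∀ u : Fin n → A, (∀ i, ‖u i‖ < d) → ‖g u‖ ≤ 2 ^ n * M := by
    intro u hu
    have hpq : (fun i => e i + u i) + (fun i => -(e i)) = u := by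
      funext i; simp
    have hexp := G.map_add_univ (fun i => e i + u i) (fun i => -(e i))
    rw [hpq] at hexp
    rw [← hGg, hexp]
    have hbd : ∀ s : Finset (Fin n),
        ‖G (s.piecewise (fun i => e i + u i) (fun i => -(e i)))‖ ≤ M := by
      intro s
      have hre : s.piecewise (fun i => e i + u i) (fun i => -(e i))
          = fun i => (if i ∈ s then (1 : ℂ) else -1) • (s.piecewise (fun i => e i + u i) e) i := by
        funext i
        by_cases h : i ∈ s <;> simp [Finset.piecewise, h]
      rw [hre, G.map_smul_univ]
      rw [norm_smul]
      have h1 : ‖∏ i, if i ∈ s then (1 : ℂ) else -1‖ = 1 := by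
        rw [norm_prod]
        rw [Finset.prod_eq_one]
        intro i _
        by_cases h : i ∈ s <;> simp [h]
      rw [h1, one_mul]
      apply hb
      rw [dist_pi_lt_iff hd]
      intro i
      by_cases h : i ∈ s
      · simp only [Finset.piecewise, h, if_pos]
        rw [dist_eq_norm]
        simpa using hu i
      · simp [Finset.piecewise, h, hd]
    calc ‖∑ s : Finset (Fin n), G (s.piecewise (fun i => e i + u i) fun i => -(e i))‖
        ≤ ∑ s : Finset (Fin n), ‖G (s.piecewise (fun i => e i + u i) fun i => -(e i))‖ :=
          norm_sum_le _ _
      _ ≤ ∑ _s : Finset (Fin n), M := Finset.sum_le_sum fun s _ => hbd s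
      _ = 2 ^ n * M := by
          rw [Finset.sum_const, Finset.card_univ]
          simp [mul_comm]
  have hM : 0 ≤ 2 ^ n * M := le_trans (norm_nonneg _) (h0 0 (fun _ => by simpa using hd))
  -- global product bound
  set r : ℝ := d / 2 with hr
  have hr0 : 0 < r := by positivity
  have hC : ∀ u, ‖G u‖ ≤ (2 ^ n * M / r ^ n) * ∏ i, ‖u i‖ := by
    intro u
    by_cases hz : ∃ i, u i = 0
    · obtain ⟨i, hi⟩ := hz
      have hu : Function.update u i (0 : A) = u := by
        conv_rhs => rw [← Function.update_eq_self i u]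
        rw [hi]
      have hgz : g u = 0 := by
        have h := (hg i u 0 0 0).2
        rw [zero_smul, zero_smul, hu] at h
        exact h
      have hprod : (∏ j, ‖u j‖) = 0 :=
        Finset.prod_eq_zero (Finset.mem_univ i) (by rw [hi, norm_zero])
      rw [hGg, hgz, hprod, norm_zero, mul_zero]
    · push_neg at hz
      have hP : 0 < ∏ i, ‖u i‖ := Finset.prod_pos fun i _ => norm_pos_iff.mpr (hz i)
      set c : Fin n → ℂ := fun i => ((r / ‖u i‖ : ℝ) : ℂ) with hc
      have hnc : ∀ i, ‖c i‖ = r / ‖u i‖ := by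
        intro i
        have : 0 < r / ‖u i‖ := by
          have := norm_pos_iff.mpr (hz i); positivity
        rw [hc]
        rw [Complex.norm_real, Real.norm_eq_abs, abs_of_pos this]
      have hv : ∀ i, ‖c i • u i‖ < d := by
        intro i
        rw [norm_smul, hnc, div_mul_cancel₀ _ (norm_ne_zero_iff.mpr (hz i)), hr]
        linarith
      have h1 := h0 (fun i => c i • u i) hv
      have h2 : g (fun i => c i • u i) = (∏ i, c i) • G u := by
        rw [← hGg]; exact G.map_smul_univ c u
      rw [h2, norm_smul, norm_prod] at h1
      have h3 : (∏ i, ‖c i‖) = r ^ n / ∏ i, ‖u i‖ := by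
        calc (∏ i, ‖c i‖) = ∏ i : Fin n, r / ‖u i‖ :=
              Finset.prod_congr rfl fun i _ => hnc i
          _ = (∏ _i : Fin n, r) / ∏ i, ‖u i‖ := Finset.prod_div_distrib _ _
          _ = r ^ n / ∏ i, ‖u i‖ := by
              rw [Finset.prod_const, Finset.card_univ, Fintype.card_fin]
      rw [h3, div_mul_eq_mul_div, div_le_iff₀ hP] at h1
      have hrn : (0:ℝ) < r ^ n := pow_pos hr0 n
      calc ‖G u‖ = (r ^ n * ‖G u‖) / r ^ n := by field_simp
        _ ≤ (2 ^ n * M * ∏ i, ‖u i‖) / r ^ n := by gcongr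
        _ = (2 ^ n * M / r ^ n) * ∏ i, ‖u i‖ := by ring
  have hcont := (G.mkContinuous _ hC).coe_continuous
  rw [MultilinearMap.coe_mkContinuous] at hcont
  exact hcont

end Cont


/-- **Theorem 2.6**: Pexiderized stability of `n`-coboundaries, `n = m + 1 ≥ 2`. -/
theorem stability_of_coboundaries
    [NonUnitalNormedRing A] [NormedSpace ℂ A]
    [IsScalarTower ℂ A A] [SMulCommClass ℂ A A]
    [NormedAddCommGroup X] [NormedSpace ℂ X] [CompleteSpace X]
    (lsmul rsmul : A →L[ℂ] X →L[ℂ] X)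
    (hassoc_l : ∀ (a b : A) (x : X), lsmul (a * b) x = lsmul a (lsmul b x))
    (hassoc_r : ∀ (a b : A) (x : X), rsmul (a * b) x = rsmul b (rsmul a x))
    (hcompat : ∀ (a b : A) (x : X), rsmul b (lsmul a x) = lsmul a (rsmul b x))
    (m : ℕ) (hm : 1 ≤ m)  -- so `n := m + 1 ≥ 2`
    (α β γ η : ℝ) (hα : 0 < α) (hβ : 0 < β) (hγ : 0 < γ) (hη : 0 < η)
    (f₁ f₂ f₃ : (Fin (m + 1) → A) → X) (g₁ g₂ g₃ : (Fin m → A) → X)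
    (hDf : ∀ (lam : Fin (m + 1) → ℂ) (a b : Fin (m + 1) → A),
      ‖Dmap (m + 1) f₁ f₂ f₃ lam a b‖ ≤ α)
    (hδf : ∀ a : Fin (m + 2) → A, ‖deltaMap (m + 1) lsmul rsmul f₁ f₂ f₃ a‖ ≤ β)
    (hDg : ∀ (lam : Fin m → ℂ) (a b : Fin m → A),
      ‖Dmap m g₁ g₂ g₃ lam a b‖ ≤ γ)
    (hδg : ∀ a : Fin (m + 1) → A,
      ‖deltaMap m lsmul rsmul g₁ g₂ g₃ a - f₁ a‖ ≤ η)
    (hvf₁ : ∀ (a : Fin (m + 1) → A) (i : Fin (m + 1)), a i = 0 → f₁ a = 0)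
    (hvf₂ : ∀ (a : Fin (m + 1) → A) (i : Fin (m + 1)), a i = 0 → f₂ a = 0)
    (hvf₃ : ∀ (a : Fin (m + 1) → A) (i : Fin (m + 1)), a i = 0 → f₃ a = 0)
    (hvg₁ : ∀ (a : Fin m → A) (i : Fin m), a i = 0 → g₁ a = 0)
    (hvg₂ : ∀ (a : Fin m → A) (i : Fin m), a i = 0 → g₂ a = 0)
    (hvg₃ : ∀ (a : Fin m → A) (i : Fin m), a i = 0 → g₃ a = 0)
    (e : Fin m → A) (hcont : ContinuousAt g₁ e) :
    ∃! FG : ((Fin (m + 1) → A) → X) × ((Fin m → A) → X),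
      IsCocycle (m + 1) lsmul rsmul FG.1 ∧
      Continuous FG.2 ∧ IsMultiLinear m FG.2 ∧
      (∀ a : Fin (m + 1) → A,
        ‖f₁ a - FG.1 a‖ ≤ 3 * 2 ^ (m + 1) * α ∧
        ‖f₂ a - FG.1 a‖ ≤ 3 * (1 + 1 / ((m : ℝ) + 1)) * 2 ^ (m + 1) * α ∧
        ‖f₃ a - FG.1 a‖ ≤ 6 * 2 ^ (m + 1) * α) ∧
      (∀ a : Fin m → A,
        ‖g₁ a - FG.2 a‖ ≤ 3 * 2 ^ (m + 1) * γ ∧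
        ‖g₂ a - FG.2 a‖ ≤ 3 * (1 + 1 / ((m : ℝ) + 1)) * 2 ^ (m + 1) * γ ∧
        ‖g₃ a - FG.2 a‖ ≤ 6 * 2 ^ (m + 1) * γ) ∧
      (∀ a : Fin (m + 1) → A, FG.1 a = deltaMap m lsmul rsmul FG.2 FG.2 FG.2 a) := by
  obtain ⟨hf23, hf2ml, hf12⟩ :=
    core (Nat.succ_pos m) f₁ f₂ f₃ hDf hvf₁ hvf₂ hvf₃
  obtain ⟨hg23, hg2ml, hg12⟩ := core hm g₁ g₂ g₃ hDg hvg₁ hvg₂ hvg₃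
  rw [← hf23] at hδf
  rw [← hg23] at hδg
  -- numeric facts
  have hp : (1:ℝ) ≤ 2 ^ (m + 1) := one_le_pow₀ one_le_two
  have hfrac : (0:ℝ) < 1 + 1 / ((m : ℝ) + 1) := by positivity
  -- δf₂ = 0
  have key : ∀ b : Fin (m + 2) → A,
      ‖deltaMap (m + 1) lsmul rsmul f₂ f₂ f₂ b‖ ≤ β + ‖lsmul‖ * ‖b 0‖ * α := by
    intro b
    have hdiff : deltaMap (m + 1) lsmul rsmul f₂ f₂ f₂ b
        = deltaMap (m + 1) lsmul rsmul f₁ f₂ f₂ b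
          + ((lsmul (b 0)) (f₂ fun i => b i.succ) - (lsmul (b 0)) (f₁ fun i => b i.succ)) := by
      unfold deltaMap; abel
    rw [hdiff]
    have h2 : ‖(lsmul (b 0)) (f₂ fun i => b i.succ) - (lsmul (b 0)) (f₁ fun i => b i.succ)‖
        ≤ ‖lsmul‖ * ‖b 0‖ * α := by
      rw [← map_sub]
      calc ‖(lsmul (b 0)) ((f₂ fun i => b i.succ) - f₁ fun i => b i.succ)‖
          ≤ ‖lsmul (b 0)‖ * ‖(f₂ fun i => b i.succ) - f₁ fun i => b i.succ‖ :=
            ContinuousLinearMap.le_opNorm _ _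
        _ ≤ (‖lsmul‖ * ‖b 0‖) * α := by
            apply mul_le_mul (lsmul.le_opNorm (b 0)) ?_ (norm_nonneg _) (by positivity)
            rw [norm_sub_rev]
            exact hf12 _
        _ = ‖lsmul‖ * ‖b 0‖ * α := by ring
    calc ‖_ + _‖ ≤ ‖deltaMap (m + 1) lsmul rsmul f₁ f₂ f₂ b‖
          + ‖(lsmul (b 0)) (f₂ fun i => b i.succ) - (lsmul (b 0)) (f₁ fun i => b i.succ)‖ :=
        norm_add_le _ _
      _ ≤ β + ‖lsmul‖ * ‖b 0‖ * α := add_le_add (hδf b) h2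
  have hδf2 : ∀ a : Fin (m + 2) → A, deltaMap (m + 1) lsmul rsmul f₂ f₂ f₂ a = 0 := by
    intro a
    apply quad_zero _ hβ.le (show (0:ℝ) ≤ ‖lsmul‖ * ‖a 0‖ * α by positivity)
    intro s hs
    have hs0 : (0:ℝ) < s := lt_of_lt_of_le one_pos hs
    have hsc := deltaMap_smul lsmul rsmul hf2ml ((s : ℝ) : ℂ) a
    have h1 := key (fun i => ((s : ℝ) : ℂ) • a i)
    rw [hsc, norm_smul, norm_pow, Complex.norm_real, Real.norm_eq_abs, abs_of_pos hs0] at h1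
    have hb0 : ‖((s : ℝ) : ℂ) • a 0‖ = s * ‖a 0‖ := by
      rw [norm_smul, Complex.norm_real, Real.norm_eq_abs, abs_of_pos hs0]
    rw [hb0] at h1
    have hpow : s ^ 2 ≤ s ^ (m + 2) := pow_le_pow_right₀ hs (by omega)
    calc s ^ 2 * ‖deltaMap (m + 1) lsmul rsmul f₂ f₂ f₂ a‖
        ≤ s ^ (m + 2) * ‖deltaMap (m + 1) lsmul rsmul f₂ f₂ f₂ a‖ :=
          mul_le_mul_of_nonneg_right hpow (norm_nonneg _)
      _ ≤ β + ‖lsmul‖ * (s * ‖a 0‖) * α := h1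
      _ = β + s * (‖lsmul‖ * ‖a 0‖ * α) := by ring
  -- f₂ = δ g₂
  have key2 : ∀ b : Fin (m + 1) → A,
      ‖deltaMap m lsmul rsmul g₂ g₂ g₂ b - f₂ b‖ ≤ (η + α) + ‖lsmul‖ * ‖b 0‖ * γ := by
    intro b
    have hdiff : deltaMap m lsmul rsmul g₂ g₂ g₂ b - f₂ b
        = (deltaMap m lsmul rsmul g₁ g₂ g₂ b - f₁ b)
          + ((lsmul (b 0)) (g₂ fun i => b i.succ) - (lsmul (b 0)) (g₁ fun i => b i.succ))
          + (f₁ b - f₂ b) := by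
      unfold deltaMap; abel
    rw [hdiff]
    have h2 : ‖(lsmul (b 0)) (g₂ fun i => b i.succ) - (lsmul (b 0)) (g₁ fun i => b i.succ)‖
        ≤ ‖lsmul‖ * ‖b 0‖ * γ := by
      rw [← map_sub]
      calc ‖(lsmul (b 0)) ((g₂ fun i => b i.succ) - g₁ fun i => b i.succ)‖
          ≤ ‖lsmul (b 0)‖ * ‖(g₂ fun i => b i.succ) - g₁ fun i => b i.succ‖ :=
            ContinuousLinearMap.le_opNorm _ _
        _ ≤ (‖lsmul‖ * ‖b 0‖) * γ := by
            apply mul_le_mul (lsmul.le_opNorm (b 0)) ?_ (norm_nonneg _) (by positivity)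
            rw [norm_sub_rev]
            exact hg12 _
        _ = ‖lsmul‖ * ‖b 0‖ * γ := by ring
    calc ‖_ + _ + _‖
        ≤ ‖deltaMap m lsmul rsmul g₁ g₂ g₂ b - f₁ b‖
          + ‖(lsmul (b 0)) (g₂ fun i => b i.succ) - (lsmul (b 0)) (g₁ fun i => b i.succ)‖
          + ‖f₁ b - f₂ b‖ := norm_add₃_le
      _ ≤ η + ‖lsmul‖ * ‖b 0‖ * γ + α := add_le_add (add_le_add (hδg b) h2) (hf12 b)
      _ = (η + α) + ‖lsmul‖ * ‖b 0‖ * γ := by ring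
  have hfd : ∀ a : Fin (m + 1) → A,
      f₂ a = deltaMap m lsmul rsmul g₂ g₂ g₂ a := by
    intro a
    have hz : deltaMap m lsmul rsmul g₂ g₂ g₂ a - f₂ a = 0 := by
      apply quad_zero _ (show (0:ℝ) ≤ η + α by positivity)
        (show (0:ℝ) ≤ ‖lsmul‖ * ‖a 0‖ * γ by positivity)
      intro s hs
      have hs0 : (0:ℝ) < s := lt_of_lt_of_le one_pos hs
      have hsc := deltaMap_smul lsmul rsmul hg2ml ((s : ℝ) : ℂ) a
      have hscf := multi_smul hf2ml ((s : ℝ) : ℂ) a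
      have h1 := key2 (fun i => ((s : ℝ) : ℂ) • a i)
      rw [hsc, hscf, ← smul_sub, norm_smul, norm_pow, Complex.norm_real,
        Real.norm_eq_abs, abs_of_pos hs0] at h1
      have hb0 : ‖((s : ℝ) : ℂ) • a 0‖ = s * ‖a 0‖ := by
        rw [norm_smul, Complex.norm_real, Real.norm_eq_abs, abs_of_pos hs0]
      rw [hb0] at h1
      have hpow : s ^ 2 ≤ s ^ (m + 1) := pow_le_pow_right₀ hs (by omega)
      calc s ^ 2 * ‖deltaMap m lsmul rsmul g₂ g₂ g₂ a - f₂ a‖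
          ≤ s ^ (m + 1) * ‖deltaMap m lsmul rsmul g₂ g₂ g₂ a - f₂ a‖ :=
            mul_le_mul_of_nonneg_right hpow (norm_nonneg _)
        _ ≤ (η + α) + ‖lsmul‖ * (s * ‖a 0‖) * γ := h1
        _ = (η + α) + s * (‖lsmul‖ * ‖a 0‖ * γ) := by ring
    exact (sub_eq_zero.mp hz).symm
  -- continuity of g₂
  obtain ⟨d, hd, hball⟩ := Metric.continuousAt_iff.mp hcont 1 one_pos
  have hb : ∀ x : Fin m → A, dist x e < d → ‖g₂ x‖ ≤ γ + 1 + ‖g₁ e‖ := by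
    intro x hx
    have h1 : ‖g₁ x - g₂ x‖ ≤ γ := hg12 x
    have h2 : ‖g₁ x - g₁ e‖ < 1 := by rw [← dist_eq_norm]; exact hball hx
    have h3 : g₂ x = -(g₁ x - g₂ x) + (g₁ x - g₁ e) + g₁ e := by abel
    calc ‖g₂ x‖ = ‖-(g₁ x - g₂ x) + (g₁ x - g₁ e) + g₁ e‖ := by rw [← h3]
      _ ≤ ‖-(g₁ x - g₂ x)‖ + ‖g₁ x - g₁ e‖ + ‖g₁ e‖ := norm_add₃_le
      _ ≤ γ + 1 + ‖g₁ e‖ := by rw [norm_neg]; exact add_le_add (add_le_add h1 h2.le) le_rfl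
  have hcg2 : Continuous g₂ := continuous_of_ml_bounded hg2ml e hd hb
  refine ⟨(f₂, g₂), ⟨⟨hf2ml, hδf2⟩, hcg2, hg2ml, ?_, ?_, fun a => hfd a⟩, ?_⟩
  · intro a
    refine ⟨le_trans (hf12 a) ?_, ?_, ?_⟩
    · nlinarith
    · simp only [sub_self, norm_zero]; positivity
    · rw [← hf23]; simp only [sub_self, norm_zero]; positivity
  · intro a
    refine ⟨le_trans (hg12 a) ?_, ?_, ?_⟩
    · nlinarith
    · simp only [sub_self, norm_zero]; positivity
    · rw [← hg23]; simp only [sub_self, norm_zero]; positivity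
  · rintro ⟨F, G⟩ ⟨⟨hFml, _⟩, _, hGml, hfb, hgb, _⟩
    have hFe : F = f₂ := by
      funext a
      have hz := ml_zero (Nat.succ_pos m) (isML_sub hf2ml hFml)
        (K := α + 3 * 2 ^ (m + 1) * α) (fun b => ?_) a
      · exact (sub_eq_zero.mp hz).symm
      · calc ‖f₂ b - F b‖ = ‖-(f₁ b - f₂ b) + (f₁ b - F b)‖ := by congr 1; abel
          _ ≤ ‖-(f₁ b - f₂ b)‖ + ‖f₁ b - F b‖ := norm_add_le _ _
          _ ≤ α + 3 * 2 ^ (m + 1) * α := by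
              rw [norm_neg]; exact add_le_add (hf12 b) (hfb b).1
    have hGe : G = g₂ := by
      funext a
      have hz := ml_zero hm (isML_sub hg2ml hGml)
        (K := γ + 3 * 2 ^ (m + 1) * γ) (fun b => ?_) a
      · exact (sub_eq_zero.mp hz).symm
      · calc ‖g₂ b - G b‖ = ‖-(g₁ b - g₂ b) + (g₁ b - G b)‖ := by congr 1; abel
          _ ≤ ‖-(g₁ b - g₂ b)‖ + ‖g₁ b - G b‖ := norm_add_le _ _
          _ ≤ γ + 3 * 2 ^ (m + 1) * γ := by
              rw [norm_neg]; exact add_le_add (hg12 b) (hgb b).1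
    rw [hFe, hGe]
end

section
/- For each positive integer n, Hⁿ(A,X) = 0 if and only if the n-th cohomology group of A with coefficients in X approximately vanishes, i.e.: every bounded multi-linear F : Aⁿ → X with δⁿF = 0 lies in the image of δ^{n−1} on bounded (n−1)-linear maps (on X when n = 1) if and only if for every approximate n-cocycle f : Aⁿ → X there exist η > 0 and an approximate n-coboundary h : Aⁿ → X such that ‖h(a₁,…,aₙ) − f(a₁,…,aₙ)‖ ≤ η for all a₁,…,aₙ ∈ A. -/
set_option linter.unusedSectionVars false


open Function Finset Filter

variable {A X : Type*}

section Approx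

variable [NonUnitalNormedRing A] [NormedSpace ℂ A]
  [NormedAddCommGroup X] [NormedSpace ℂ X]

/-- An approximate `n`-cocycle: continuous at a point, vanishing whenever a
coordinate is `0`, with `Dⁿf` and `δⁿf` uniformly bounded. -/
def IsApproxCocycle (n : ℕ) (lsmul rsmul : A →L[ℂ] X →L[ℂ] X)
    (f : (Fin n → A) → X) : Prop :=
  (∃ e : Fin n → A, ContinuousAt f e) ∧
  (∀ (a : Fin n → A) (i : Fin n), a i = 0 → f a = 0) ∧
  ∃ α > (0 : ℝ), ∃ β > (0 : ℝ),
    (∀ (lam : Fin n → ℂ) (a b : Fin n → A), ‖Dmap n f f f lam a b‖ ≤ α) ∧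
    (∀ a : Fin (n + 1) → A, ‖deltaMap n lsmul rsmul f f f a‖ ≤ β)

/-- An approximate `(m+1)`-coboundary: a map of the form `δᵐ g` where `g` is
continuous at a point, vanishes whenever a coordinate is `0` and has `Dᵐ g`
uniformly bounded.  For `m = 0` all conditions on `g` are automatic and this
reduces to the usual `1`-coboundaries `a ↦ a·x − x·a`. -/
def IsApproxCoboundary (m : ℕ) (lsmul rsmul : A →L[ℂ] X →L[ℂ] X)
    (h : (Fin (m + 1) → A) → X) : Prop :=
  ∃ g : (Fin m → A) → X,
    (∃ e : Fin m → A, ContinuousAt g e) ∧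
    (∀ (a : Fin m → A) (i : Fin m), a i = 0 → g a = 0) ∧
    (∃ γ > (0 : ℝ), ∀ (lam : Fin m → ℂ) (a b : Fin m → A),
        ‖Dmap m g g g lam a b‖ ≤ γ) ∧
    ∀ a : Fin (m + 1) → A, h a = deltaMap m lsmul rsmul g g g a

end Approx

section AuxLemmas

variable [NonUnitalNormedRing A] [NormedSpace ℂ A]
  [NormedAddCommGroup X] [NormedSpace ℂ X]

/-- A vector whose norm, scaled by arbitrarily large reals, stays bounded is zero. -/
lemma aux_eq_zero_of_bound (v : X) (η : ℝ) (h : ∀ s : ℝ, 1 ≤ s → s * ‖v‖ ≤ η) : v = 0 := by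
  by_contra hv
  have hpos : 0 < ‖v‖ := norm_pos_iff.mpr hv
  have h1 := h 1 le_rfl
  have h2 := h _ (le_max_left 1 ((η + 1) / ‖v‖))
  have h3 : (η + 1) / ‖v‖ * ‖v‖ ≤ max 1 ((η + 1) / ‖v‖) * ‖v‖ :=
    mul_le_mul_of_nonneg_right (le_max_right _ _) hpos.le
  rw [div_mul_cancel₀ _ hpos.ne'] at h3
  linarith

/-- Superstability: a map vanishing on zero coordinates whose multi-linearity
defect is uniformly bounded is exactly multi-linear. -/
lemma aux_multilinear_of_D (n : ℕ) (f : (Fin n → A) → X)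
    (hz : ∀ (a : Fin n → A) (i : Fin n), a i = 0 → f a = 0)
    (α : ℝ)
    (hD : ∀ (lam : Fin n → ℂ) (a b : Fin n → A), ‖Dmap n f f f lam a b‖ ≤ α) :
    IsMultiLinear n f := by
  have key : ∀ (j : Fin n) (a : Fin n → A) (c : ℂ) (y : A),
      ‖f (Function.update a j (c • a j + c • y)) - c • f a
        - c • f (Function.update a j y)‖ ≤ α := by
    intro j a c y
    have hmain := hD (fun i => if i = j then c else 1) a (fun i => if i = j then y else 0)
    rw [Dmap, Finset.sum_eq_single j ?_ (by simp)] at hmain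
    · simpa using hmain
    · intro i _ hij
      have h2 : f (Function.update a i (0 : A)) = 0 :=
        hz _ i (Function.update_self i 0 a)
      simp [hij, h2, Function.update_eq_self]
  intro i a c₀ x₀ y₀
  have hg0 : f (Function.update a i 0) = 0 := hz _ i (Function.update_self i 0 a)
  have key2 : ∀ (c : ℂ) (x y : A),
      ‖f (Function.update a i (c • x + c • y)) - c • f (Function.update a i x)
        - c • f (Function.update a i y)‖ ≤ α := by
    intro c x y
    have := key i (Function.update a i x) c y
    simpa [Function.update_idem, Function.update_self] using this
  have hom0 : ∀ (c : ℂ) (x : A),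
      ‖f (Function.update a i (c • x)) - c • f (Function.update a i x)‖ ≤ α := by
    intro c x
    have := key2 c x 0
    simpa [hg0] using this
  have hadd : ∀ x y : A, f (Function.update a i (x + y))
      = f (Function.update a i x) + f (Function.update a i y) := by
    intro x y
    have hzero : f (Function.update a i (x + y)) - f (Function.update a i x)
        - f (Function.update a i y) = 0 := by
      apply aux_eq_zero_of_bound _ (α + α)
      intro s hs
      have e1 := hom0 (s : ℂ) (x + y)
      have e2 := key2 (s : ℂ) x y
      have hsplit : (s : ℂ) • (f (Function.update a i (x + y))
            - f (Function.update a i x) - f (Function.update a i y))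
          = -(f (Function.update a i ((s:ℂ) • (x + y)))
              - (s:ℂ) • f (Function.update a i (x + y)))
            + (f (Function.update a i ((s:ℂ) • x + (s:ℂ) • y))
              - (s:ℂ) • f (Function.update a i x)
              - (s:ℂ) • f (Function.update a i y)) := by
        rw [smul_add]
        simp only [smul_sub]
        abel
      calc s * ‖f (Function.update a i (x + y)) - f (Function.update a i x)
              - f (Function.update a i y)‖
          = ‖(s : ℂ) • (f (Function.update a i (x + y)) - f (Function.update a i x)
              - f (Function.update a i y))‖ := by
            rw [norm_smul, Complex.norm_real, Real.norm_of_nonneg (by linarith)]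
        _ ≤ α + α := by
            rw [hsplit]
            refine (norm_add_le _ _).trans (add_le_add ?_ e2)
            rw [norm_neg]; exact e1
    rw [sub_sub] at hzero
    exact sub_eq_zero.mp hzero
  have hhom : ∀ (c : ℂ) (x : A), f (Function.update a i (c • x))
      = c • f (Function.update a i x) := by
    intro c x
    have hzero : f (Function.update a i (c • x)) - c • f (Function.update a i x) = 0 := by
      apply aux_eq_zero_of_bound _ (α + α)
      intro s hs
      have e1 := hom0 (s : ℂ) (c • x)
      have e2 := hom0 ((s : ℂ) * c) x
      have hsplit : (s : ℂ) • (f (Function.update a i (c • x))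
            - c • f (Function.update a i x))
          = -(f (Function.update a i ((s:ℂ) • (c • x)))
              - (s:ℂ) • f (Function.update a i (c • x)))
            + (f (Function.update a i (((s:ℂ) * c) • x))
              - ((s:ℂ) * c) • f (Function.update a i x)) := by
        rw [smul_smul, smul_sub, smul_smul]
        abel
      calc s * ‖f (Function.update a i (c • x)) - c • f (Function.update a i x)‖
          = ‖(s : ℂ) • (f (Function.update a i (c • x))
              - c • f (Function.update a i x))‖ := by
            rw [norm_smul, Complex.norm_real, Real.norm_of_nonneg (by linarith)]
        _ ≤ α + α := by
            rw [hsplit]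
            refine (norm_add_le _ _).trans (add_le_add ?_ e2)
            rw [norm_neg]; exact e1
    exact sub_eq_zero.mp hzero
  exact ⟨hadd x₀ y₀, hhom c₀ x₀⟩

/-- A multi-linear map vanishes when one coordinate is zero. -/
lemma aux_vanish (n : ℕ) (F : (Fin n → A) → X) (hF : IsMultiLinear n F)
    (a : Fin n → A) (i : Fin n) (h : a i = 0) : F a = 0 := by
  have h2 := (hF i a (0 : ℂ) 0 0).2
  simp only [smul_zero, zero_smul] at h2
  rwa [← h, Function.update_eq_self] at h2

/-- Scaling each coordinate of a multi-linear map. -/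
lemma aux_smul_prod (n : ℕ) (F : (Fin n → A) → X) (hF : IsMultiLinear n F)
    (d : Fin n → ℂ) (v : Fin n → A) (s : Finset (Fin n)) :
    F (fun i => if i ∈ s then d i • v i else v i) = (∏ i ∈ s, d i) • F v := by
  induction s using Finset.induction_on with
  | empty => simp
  | @insert j s hj ih =>
    have hfun : (fun i => if i ∈ insert j s then d i • v i else v i)
        = Function.update (fun i => if i ∈ s then d i • v i else v i) j (d j • v j) := by
      funext i
      by_cases h : i = j
      · subst h; simp [hj]
      · simp [Function.update_of_ne h, Finset.mem_insert, h]
    have hupd := (hF j (fun i => if i ∈ s then d i • v i else v i) (d j) (v j) 0).2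
    have hvj : Function.update (fun i => if i ∈ s then d i • v i else v i) j (v j)
        = fun i => if i ∈ s then d i • v i else v i := by
      have : v j = (fun i => if i ∈ s then d i • v i else v i) j := by simp [hj]
      rw [this, Function.update_eq_self]
    rw [hfun, hupd, hvj, ih, Finset.prod_insert hj, mul_smul]

lemma aux_smul_all (n : ℕ) (F : (Fin n → A) → X) (hF : IsMultiLinear n F)
    (d : Fin n → ℂ) (v : Fin n → A) :
    F (fun i => d i • v i) = (∏ i, d i) • F v := by
  have := aux_smul_prod n F hF d v Finset.univ
  simpa using this

/-- The defect operator vanishes identically on multi-linear maps. -/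
lemma aux_D_zero (n : ℕ) (f : (Fin n → A) → X) (hf : IsMultiLinear n f)
    (lam : Fin n → ℂ) (a b : Fin n → A) : Dmap n f f f lam a b = 0 := by
  rw [Dmap]
  apply Finset.sum_eq_zero
  intro j _
  have hadd := (hf j a (lam j) (a j) (b j)).1
  have hsm := (hf j a (lam j) (a j + b j) 0).2
  rw [← smul_add, hsm, hadd, Function.update_eq_self, smul_add]
  abel

/-- Scaling behaviour of the Hochschild coboundary of a multi-linear map. -/
lemma aux_delta_smul [IsScalarTower ℂ A A] [SMulCommClass ℂ A A]
    (n : ℕ) (lsmul rsmul : A →L[ℂ] X →L[ℂ] X)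
    (g : (Fin n → A) → X) (hg : IsMultiLinear n g) (c : ℂ) (a : Fin (n + 1) → A) :
    deltaMap n lsmul rsmul g g g (fun k => c • a k)
      = c ^ (n + 1) • deltaMap n lsmul rsmul g g g a := by
  have hconst : ∀ v : Fin n → A, g (fun i => c • v i) = c ^ n • g v := by
    intro v
    have := aux_smul_all n g hg (fun _ => c) v
    simpa using this
  simp only [deltaMap]
  have h1 : lsmul (c • a 0) (g fun i => c • a i.succ)
      = c ^ (n + 1) • lsmul (a 0) (g fun i => a i.succ) := by
    rw [hconst, map_smul, map_smul lsmul c (a 0), ContinuousLinearMap.smul_apply,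
      smul_smul, ← pow_succ]
  have h3 : ((-1 : ℤ) ^ (n + 1)) • rsmul (c • a (Fin.last n)) (g fun i => c • a i.castSucc)
      = c ^ (n + 1) •
        (((-1 : ℤ) ^ (n + 1)) • rsmul (a (Fin.last n)) (g fun i => a i.castSucc)) := by
    rw [hconst, map_smul, map_smul rsmul c (a (Fin.last n)), ContinuousLinearMap.smul_apply,
      smul_smul, ← pow_succ, smul_comm]
  have h2 : (∑ j : Fin n, ((-1 : ℤ) ^ ((j : ℕ) + 1)) •
        g (fun i : Fin n =>
          if (i : ℕ) < (j : ℕ) then c • a i.castSucc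
          else if (i : ℕ) = (j : ℕ) then (c • a j.castSucc) * (c • a j.succ)
          else c • a i.succ))
      = c ^ (n + 1) • ∑ j : Fin n, ((-1 : ℤ) ^ ((j : ℕ) + 1)) •
        g (fun i : Fin n =>
          if (i : ℕ) < (j : ℕ) then a i.castSucc
          else if (i : ℕ) = (j : ℕ) then a j.castSucc * a j.succ
          else a i.succ) := by
    rw [Finset.smul_sum]
    apply Finset.sum_congr rfl
    intro j _
    have hwc : (fun i : Fin n =>
          if (i : ℕ) < (j : ℕ) then c • a i.castSucc
          else if (i : ℕ) = (j : ℕ) then (c • a j.castSucc) * (c • a j.succ)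
          else c • a i.succ)
        = fun i => (if i = j then c ^ 2 else c) •
            (if (i : ℕ) < (j : ℕ) then a i.castSucc
             else if (i : ℕ) = (j : ℕ) then a j.castSucc * a j.succ
             else a i.succ) := by
      funext i
      by_cases h1' : (i : ℕ) < (j : ℕ)
      · have h2' : ¬ i = j := by
          intro h; subst h; exact lt_irrefl _ h1'
        simp [h1', h2']
      · by_cases h2' : (i : ℕ) = (j : ℕ)
        · have h4 : i = j := Fin.ext h2'
          simp only [h1', if_false, h2', if_true, h4, if_pos rfl]
          rw [smul_mul_assoc, mul_smul_comm, smul_smul, ← sq]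
          simp
        · have h4 : ¬ i = j := fun h => h2' (by rw [h])
          simp [h1', h2', h4]
    have hprod : (∏ i : Fin n, if i = j then c ^ 2 else c) = c ^ (n + 1) := by
      have hsplit : ∀ i : Fin n, (if i = j then c ^ 2 else c)
          = c * (if i = j then c else 1) := by
        intro i
        by_cases h : i = j
        · simp [h, sq]
        · simp [h]
      rw [Finset.prod_congr rfl (fun i _ => hsplit i), Finset.prod_mul_distrib,
        Finset.prod_const, Finset.prod_ite_eq' Finset.univ j (fun _ => c)]
      simp [pow_succ]
    rw [hwc, aux_smul_all n g hg, hprod, smul_comm]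
  rw [h1, h2, h3, smul_add, smul_add]

/-- A multi-linear map which is continuous at one point is continuous. -/
lemma aux_continuous (n : ℕ) (F : (Fin n → A) → X) (hF : IsMultiLinear n F)
    (e : Fin n → A) (hc : ContinuousAt F e) : Continuous F := by
  obtain ⟨δ, hδ, hball⟩ := Metric.continuousAt_iff.mp hc 1 one_pos
  set r : ℝ := δ / 2 with hr
  have hr0 : 0 < r := by positivity
  set M : ℝ := ‖F e‖ + 1 with hM
  have hM0 : 0 < M := by positivity
  have hMb : ∀ u : Fin n → A, (∀ i, ‖u i‖ ≤ r) → ‖F (e + u)‖ ≤ M := by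
    intro u hu
    have h1 : dist (e + u) e < δ := by
      rw [dist_eq_norm, add_sub_cancel_left]
      calc ‖u‖ ≤ r := (pi_norm_le_iff_of_nonneg hr0.le).mpr hu
        _ < δ := by rw [hr]; linarith
    have h2 := hball h1
    rw [dist_eq_norm] at h2
    have h3 := norm_sub_norm_le (F (e + u)) (F e)
    rw [hM]; linarith
  have tele : ∀ k : ℕ, k ≤ n → ∀ u : Fin n → A, (∀ i, ‖u i‖ ≤ r) →
      ‖F (fun i => if (i : ℕ) < k then u i else e i + u i)‖ ≤ 2 ^ k * M := by
    intro k
    induction k with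
    | zero =>
      intro _ u hu
      have heq : (fun i : Fin n => if (i : ℕ) < 0 then u i else e i + u i) = e + u := by
        funext i; simp
      rw [heq]
      simpa using hMb u hu
    | succ k ih =>
      intro hk u hu
      have hkn : k < n := hk
      set j : Fin n := ⟨k, hkn⟩ with hj
      set v : Fin n → A := fun i => if (i : ℕ) < k then u i else e i + u i with hv
      have hw : (fun i : Fin n => if (i : ℕ) < k + 1 then u i else e i + u i)
          = Function.update v j (u j) := by
        funext i
        by_cases h : i = j
        · subst h
          rw [Function.update_self]
          simp [hj, Nat.lt_succ_self]
        · have hij : (i : ℕ) ≠ k := fun hh => h (Fin.ext hh)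
          rw [Function.update_of_ne h, hv]
          by_cases h2 : (i : ℕ) < k
          · simp [h2, Nat.lt_succ_of_lt h2]
          · have h3 : ¬ (i : ℕ) < k + 1 := by omega
            simp [h2, h3]
      have hvj : v j = e j + u j := by
        rw [hv]; simp [hj]
      have hadd := (hF j v 1 (e j) (u j)).1
      have hveq : Function.update v j (e j + u j) = v := by
        rw [← hvj, Function.update_eq_self]
      have hsub : F (Function.update v j (u j))
          = F v - F (Function.update v j (e j)) := by
        rw [hveq] at hadd
        exact eq_sub_of_add_eq' hadd.symm
      have hu' : ∀ i, ‖Function.update u j 0 i‖ ≤ r := by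
        intro i
        by_cases h : i = j
        · subst h; simp [hr0.le]
        · rw [Function.update_of_ne h]; exact hu i
      have he2 : Function.update v j (e j) = fun i : Fin n =>
          if (i : ℕ) < k then Function.update u j 0 i
          else e i + Function.update u j 0 i := by
        funext i
        by_cases h : i = j
        · subst h
          rw [Function.update_self, Function.update_self]
          simp [hj]
        · rw [Function.update_of_ne h, Function.update_of_ne h, hv]
      calc ‖F (fun i => if (i : ℕ) < k + 1 then u i else e i + u i)‖
          = ‖F v - F (Function.update v j (e j))‖ := by rw [hw, hsub]
        _ ≤ ‖F v‖ + ‖F (Function.update v j (e j))‖ := norm_sub_le _ _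
        _ ≤ 2 ^ k * M + 2 ^ k * M := by
            refine add_le_add (ih (le_of_lt hkn) u hu) ?_
            rw [he2]; exact ih (le_of_lt hkn) _ hu'
        _ = 2 ^ (k + 1) * M := by ring
  have hbound : ∀ x : Fin n → A, ‖F x‖ ≤ (2 ^ n * M / r ^ n) * ∏ i, ‖x i‖ := by
    intro x
    by_cases hx : ∀ i, x i ≠ 0
    · have hxn : ∀ i, 0 < ‖x i‖ := fun i => norm_pos_iff.mpr (hx i)
      set d : Fin n → ℂ := fun i => ((r / ‖x i‖ : ℝ) : ℂ) with hd
      have hdn : ∀ i, ‖d i‖ = r / ‖x i‖ := by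
        intro i
        rw [hd]
        rw [Complex.norm_real, Real.norm_of_nonneg (by positivity)]
      have hun : ∀ i, ‖d i • x i‖ ≤ r := by
        intro i
        rw [norm_smul, hdn i, div_mul_cancel₀ _ (hxn i).ne']
      have h1 : ‖F (fun i => d i • x i)‖ ≤ 2 ^ n * M := by
        have ht := tele n le_rfl (fun i => d i • x i) hun
        have heq : (fun i : Fin n => if (i : ℕ) < n then d i • x i
            else e i + d i • x i) = fun i => d i • x i := by
          funext i; simp [i.isLt]
        rwa [heq] at ht
      rw [aux_smul_all n F hF d x, norm_smul, norm_prod,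
        Finset.prod_congr rfl (fun i _ => hdn i), Finset.prod_div_distrib,
        Finset.prod_const, Finset.card_univ, Fintype.card_fin] at h1
      have hP : 0 < ∏ i, ‖x i‖ := Finset.prod_pos (fun i _ => hxn i)
      have hrn : (0 : ℝ) < r ^ n := pow_pos hr0 n
      have h2 := mul_le_mul_of_nonneg_left h1 (le_of_lt (div_pos hP hrn))
      calc ‖F x‖ = (∏ i, ‖x i‖) / r ^ n * ((r ^ n / ∏ i, ‖x i‖) * ‖F x‖) := by
            field_simp
        _ ≤ (∏ i, ‖x i‖) / r ^ n * (2 ^ n * M) := h2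
        _ = 2 ^ n * M / r ^ n * ∏ i, ‖x i‖ := by ring
    · push_neg at hx
      obtain ⟨i, hi⟩ := hx
      rw [aux_vanish n F hF x i hi, norm_zero,
        Finset.prod_eq_zero (Finset.mem_univ i) (by rw [hi, norm_zero]), mul_zero]
  have hsub : ∀ inst : DecidableEq (Fin n), inst = instDecidableEqFin n :=
    fun inst => Subsingleton.elim _ _
  let Fm : MultilinearMap ℂ (fun _ : Fin n => A) X :=
    { toFun := F
      map_update_add' := by
        intro inst m i x y
        rw [hsub inst]
        exact (hF i m 1 x y).1
      map_update_smul' := by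
        intro inst m i c x
        rw [hsub inst]
        exact (hF i m c x x).2 }
  exact Fm.continuous_of_bound _ hbound

end AuxLemmas


/-- **Theorem 3.1**: for `n = m + 1 ≥ 1`, `Hⁿ(A,X) = 0` iff the `n`-th
cohomology group of `A` with coefficients in `X` approximately vanishes.
(For `m = 0`, a bounded `0`-linear map `(Fin 0 → A) → X` is just an element
of `X` and `δ⁰x (a) = a·x − x·a`.) -/
theorem cohomology_vanishes_iff_approximately_vanishes
    [NonUnitalNormedRing A] [NormedSpace ℂ A] [CompleteSpace A]
    [IsScalarTower ℂ A A] [SMulCommClass ℂ A A]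
    [NormedAddCommGroup X] [NormedSpace ℂ X] [CompleteSpace X]
    (lsmul rsmul : A →L[ℂ] X →L[ℂ] X)
    (hassoc_l : ∀ (a b : A) (x : X), lsmul (a * b) x = lsmul a (lsmul b x))
    (hassoc_r : ∀ (a b : A) (x : X), rsmul (a * b) x = rsmul b (rsmul a x))
    (hcompat : ∀ (a b : A) (x : X), rsmul b (lsmul a x) = lsmul a (rsmul b x))
    (m : ℕ) :
    (∀ F : (Fin (m + 1) → A) → X,
        Continuous F → IsMultiLinear (m + 1) F →
        (∀ a : Fin (m + 2) → A, deltaMap (m + 1) lsmul rsmul F F F a = 0) →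
        ∃ G : (Fin m → A) → X, Continuous G ∧ IsMultiLinear m G ∧
          ∀ a : Fin (m + 1) → A, F a = deltaMap m lsmul rsmul G G G a)
    ↔
    (∀ f : (Fin (m + 1) → A) → X, IsApproxCocycle (m + 1) lsmul rsmul f →
      ∃ η > (0 : ℝ), ∃ h : (Fin (m + 1) → A) → X,
        IsApproxCoboundary m lsmul rsmul h ∧
        ∀ a : Fin (m + 1) → A, ‖h a - f a‖ ≤ η) := by
  constructor
  · rintro H f ⟨⟨e, hce⟩, hz, α, hα, β, hβ, hD, hδ⟩
    have hml : IsMultiLinear (m + 1) f := aux_multilinear_of_D (m + 1) f hz α hD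
    have hcont : Continuous f := aux_continuous (m + 1) f hml e hce
    have hcoc : ∀ a : Fin (m + 2) → A, deltaMap (m + 1) lsmul rsmul f f f a = 0 := by
      intro a
      apply aux_eq_zero_of_bound _ β
      intro s hs
      have hb := hδ (fun k => (s : ℂ) • a k)
      rw [aux_delta_smul (m + 1) lsmul rsmul f hml (s : ℂ) a, norm_smul, norm_pow,
        Complex.norm_real, Real.norm_of_nonneg (by linarith)] at hb
      calc s * ‖deltaMap (m + 1) lsmul rsmul f f f a‖
          ≤ s ^ (m + 1 + 1) * ‖deltaMap (m + 1) lsmul rsmul f f f a‖ := by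
            exact mul_le_mul_of_nonneg_right (le_self_pow₀ hs (by omega)) (norm_nonneg _)
        _ ≤ β := hb
    obtain ⟨G, hGc, hGml, hGeq⟩ := H f hcont hml hcoc
    refine ⟨1, one_pos, f, ⟨G, ⟨fun _ => 0, hGc.continuousAt⟩,
      fun a i hi => aux_vanish m G hGml a i hi, ⟨1, one_pos, ?_⟩, hGeq⟩, ?_⟩
    · intro lam a b
      rw [aux_D_zero m G hGml lam a b, norm_zero]
      exact zero_le_one
    · intro a
      simp
  · intro H F hFc hFml hFcoc
    have happrox : IsApproxCocycle (m + 1) lsmul rsmul F := by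
      refine ⟨⟨fun _ => 0, hFc.continuousAt⟩,
        fun a i hi => aux_vanish _ F hFml a i hi, 1, one_pos, 1, one_pos, ?_, ?_⟩
      · intro lam a b
        rw [aux_D_zero _ F hFml]
        simp
      · intro a
        rw [hFcoc]
        simp
    obtain ⟨η, hη, h, ⟨g, ⟨e, hge⟩, hgz, ⟨γ, hγ, hgD⟩, hgδ⟩, hhf⟩ := H F happrox
    have hgml : IsMultiLinear m g := aux_multilinear_of_D m g hgz γ hgD
    have hgc : Continuous g := aux_continuous m g hgml e hge
    refine ⟨g, hgc, hgml, fun a => ?_⟩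
    have hdiff : deltaMap m lsmul rsmul g g g a - F a = 0 := by
      apply aux_eq_zero_of_bound _ η
      intro s hs
      have h1 : deltaMap m lsmul rsmul g g g (fun k => (s : ℂ) • a k)
            - F (fun k => (s : ℂ) • a k)
          = (s : ℂ) ^ (m + 1) • (deltaMap m lsmul rsmul g g g a - F a) := by
        rw [aux_delta_smul m lsmul rsmul g hgml, smul_sub]
        congr 1
        have hFs := aux_smul_all (m + 1) F hFml (fun _ => (s : ℂ)) a
        simp only [Finset.prod_const, Finset.card_univ, Fintype.card_fin] at hFs
        rw [hFs]
      have h2 : ‖deltaMap m lsmul rsmul g g g (fun k => (s : ℂ) • a k)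
          - F (fun k => (s : ℂ) • a k)‖ ≤ η := by
        rw [← hgδ]
        exact hhf _
      rw [h1, norm_smul, norm_pow, Complex.norm_real,
        Real.norm_of_nonneg (by linarith)] at h2
      calc s * ‖deltaMap m lsmul rsmul g g g a - F a‖
          ≤ s ^ (m + 1) * ‖deltaMap m lsmul rsmul g g g a - F a‖ := by
            exact mul_le_mul_of_nonneg_right (le_self_pow₀ hs (by omega)) (norm_nonneg _)
        _ ≤ η := h2
    exact (sub_eq_zero.mp hdiff).symm
end

section
/- A complex Banach algebra A is contractible if and only if it is approximately contractible; that is, H¹(A,X) = 0 for every Banach A-bimodule X (every bounded derivation from A into X is inner) if and only if for every Banach A-bimodule X, every approximate derivation f : A → X that is continuous at some point is near an inner derivation: there exist x ∈ X and η > 0 with ‖f(a) − (a·x − x·a)‖ ≤ η for all a ∈ A. -/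
open Filter Topology

private lemma hyers_aux {A X : Type*} [NormedAddCommGroup A] [NormedSpace ℂ A]
    [NormedAddCommGroup X] [NormedSpace ℂ X] [CompleteSpace X]
    (f : A → X) (hf0 : f 0 = 0) {α : ℝ} (hα : 0 < α)
    (hadd : ∀ (lam : ℂ) (a b : A), ‖f (lam • a + lam • b) - lam • f a - lam • f b‖ ≤ α) :
    ∃ d : A → X,
      (∀ a b, d (a + b) = d a + d b) ∧
      (∀ (c : ℂ) (a : A), d (c • a) = c • d a) ∧
      (∀ a, ‖f a - d a‖ ≤ α) ∧
      (∀ a, Tendsto (fun n : ℕ => ((2:ℂ)^n)⁻¹ • f ((2:ℂ)^n • a)) atTop (𝓝 (d a))) := by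
  have hα' : (0:ℝ) ≤ α := hα.le
  set g : A → ℕ → X := fun a n => ((2:ℂ)^n)⁻¹ • f ((2:ℂ)^n • a) with hg
  have h2pos : ∀ n : ℕ, ((2:ℂ)^n) ≠ 0 := fun n => pow_ne_zero n two_ne_zero
  have hnorm2 : ∀ n : ℕ, ‖((2:ℂ)^n)⁻¹‖ = (1/2:ℝ)^n := by
    intro n
    simp [norm_inv, norm_pow, inv_pow]
  -- doubling estimate
  have hdouble : ∀ a : A, ‖f ((2:ℂ) • a) - (2:ℂ) • f a‖ ≤ α := by
    intro a
    have := hadd 1 a a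
    simp only [one_smul] at this
    have h2 : (2:ℂ) • a = a + a := two_smul ℂ a
    have h2' : (2:ℂ) • f a = f a + f a := two_smul ℂ (f a)
    rw [h2, h2']
    calc ‖f (a + a) - (f a + f a)‖ = ‖f (a + a) - f a - f a‖ := by abel_nf
    _ ≤ α := this
  -- consecutive difference
  have hstep : ∀ a : A, ∀ n : ℕ, ‖g a (n+1) - g a n‖ ≤ α * (1/2:ℝ)^(n+1) := by
    intro a n
    have key : g a (n+1) - g a n
        = ((2:ℂ)^(n+1))⁻¹ • (f ((2:ℂ) • ((2:ℂ)^n • a)) - (2:ℂ) • f ((2:ℂ)^n • a)) := by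
      rw [smul_sub]
      congr 1
      · simp [hg, pow_succ, mul_smul, mul_comm]
      · rw [smul_smul]
        show ((2:ℂ)^n)⁻¹ • f ((2:ℂ)^n • a) = _
        congr 1
        rw [pow_succ]
        field_simp
    rw [key, norm_smul, hnorm2]
    calc (1/2:ℝ)^(n+1) * ‖f ((2:ℂ) • ((2:ℂ)^n • a)) - (2:ℂ) • f ((2:ℂ)^n • a)‖
        ≤ (1/2:ℝ)^(n+1) * α := by
          apply mul_le_mul_of_nonneg_left (hdouble _) (by positivity)
      _ = α * (1/2:ℝ)^(n+1) := mul_comm _ _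
  -- Cauchy
  have hcauchy : ∀ a : A, CauchySeq (g a) := by
    intro a
    apply cauchySeq_of_le_geometric (1/2 : ℝ) (α/2) (by norm_num)
    intro n
    rw [dist_eq_norm, norm_sub_rev]
    calc ‖g a (n+1) - g a n‖ ≤ α * (1/2:ℝ)^(n+1) := hstep a n
      _ = α/2 * (1/2:ℝ)^n := by ring
  have hlim : ∀ a : A, ∃ x : X, Tendsto (g a) atTop (𝓝 x) :=
    fun a => cauchySeq_tendsto_of_complete (hcauchy a)
  choose d hd using hlim
  -- geometric tail tendsto 0
  have hgeo : ∀ C : ℝ, Tendsto (fun n : ℕ => C * (1/2:ℝ)^n) atTop (𝓝 0) := by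
    intro C
    have := tendsto_pow_atTop_nhds_zero_of_lt_one (by norm_num : (0:ℝ) ≤ 1/2)
      (by norm_num : (1/2:ℝ) < 1)
    simpa using this.const_mul C
  refine ⟨d, ?_, ?_, ?_, hd⟩
  · -- additivity
    intro a b
    have key : ∀ n : ℕ, ‖g (a+b) n - g a n - g b n‖ ≤ α * (1/2:ℝ)^n := by
      intro n
      have : g (a+b) n - g a n - g b n
          = ((2:ℂ)^n)⁻¹ • (f ((2:ℂ)^n • a + (2:ℂ)^n • b) - f ((2:ℂ)^n • a)
              - f ((2:ℂ)^n • b)) := by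
        simp [hg, smul_sub, smul_add]
      rw [this, norm_smul, hnorm2]
      have hineq := hadd 1 ((2:ℂ)^n • a) ((2:ℂ)^n • b)
      simp only [one_smul] at hineq
      calc (1/2:ℝ)^n * ‖f ((2:ℂ)^n • a + (2:ℂ)^n • b) - f ((2:ℂ)^n • a) - f ((2:ℂ)^n • b)‖
          ≤ (1/2:ℝ)^n * α := mul_le_mul_of_nonneg_left hineq (by positivity)
        _ = α * (1/2:ℝ)^n := mul_comm _ _
    have t1 : Tendsto (fun n => g (a+b) n - g a n - g b n) atTop
        (𝓝 (d (a+b) - d a - d b)) := ((hd (a+b)).sub (hd a)).sub (hd b)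
    have t0 : Tendsto (fun n => g (a+b) n - g a n - g b n) atTop (𝓝 0) :=
      squeeze_zero_norm key (hgeo α)
    have h := tendsto_nhds_unique t1 t0
    rw [sub_sub, sub_eq_zero] at h
    exact h
  · -- homogeneity
    intro c a
    have key : ∀ n : ℕ, ‖g (c • a) n - c • g a n‖ ≤ α * (1/2:ℝ)^n := by
      intro n
      have hrw : g (c • a) n - c • g a n
          = ((2:ℂ)^n)⁻¹ • (f (c • ((2:ℂ)^n • a)) - c • f ((2:ℂ)^n • a)) := by
        simp only [hg]
        rw [smul_comm c ((2:ℂ)^n)⁻¹, ← smul_sub, smul_comm ((2:ℂ)^n) c]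
      have hineq := hadd c ((2:ℂ)^n • a) 0
      simp only [smul_zero, add_zero, hf0, sub_zero] at hineq
      rw [hrw, norm_smul, hnorm2]
      calc (1/2:ℝ)^n * ‖f (c • ((2:ℂ)^n • a)) - c • f ((2:ℂ)^n • a)‖
          ≤ (1/2:ℝ)^n * α := mul_le_mul_of_nonneg_left hineq (by positivity)
        _ = α * (1/2:ℝ)^n := mul_comm _ _
    have t1 : Tendsto (fun n => g (c • a) n - c • g a n) atTop
        (𝓝 (d (c • a) - c • d a)) := (hd (c • a)).sub ((hd a).const_smul c)
    have t0 : Tendsto (fun n => g (c • a) n - c • g a n) atTop (𝓝 0) :=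
      squeeze_zero_norm key (hgeo α)
    exact sub_eq_zero.mp (tendsto_nhds_unique t1 t0)
  · -- closeness
    intro a
    have hb : ∀ n : ℕ, ‖g a n - f a‖ ≤ α * (1 - (1/2:ℝ)^n) := by
      intro n
      induction n with
      | zero => simp [hg]
      | succ n ih =>
        calc ‖g a (n+1) - f a‖ ≤ ‖g a (n+1) - g a n‖ + ‖g a n - f a‖ := by
              have : g a (n+1) - f a = (g a (n+1) - g a n) + (g a n - f a) := by abel
              rw [this]; exact norm_add_le _ _
          _ ≤ α * (1/2:ℝ)^(n+1) + α * (1 - (1/2:ℝ)^n) := add_le_add (hstep a n) ih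
          _ = α * (1 - (1/2:ℝ)^(n+1)) := by ring
    have hb' : ∀ n : ℕ, ‖f a - g a n‖ ≤ α := by
      intro n
      rw [norm_sub_rev]
      refine (hb n).trans ?_
      have : (0:ℝ) ≤ (1/2:ℝ)^n := by positivity
      nlinarith
    have t1 : Tendsto (fun n => ‖f a - g a n‖) atTop (𝓝 ‖f a - d a‖) :=
      (tendsto_const_nhds.sub (hd a)).norm
    exact le_of_tendsto t1 (Eventually.of_forall hb')


/-- **Corollary 3.2**: a complex Banach algebra `A` is contractible if and only
if it is approximately contractible.  Bimodule actions on a Banach space `X`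
are encoded by continuous bilinear maps `lsmul` (for `a·x`) and `rsmul`
(for `x·a`) satisfying the bimodule axioms. -/
theorem contractible_iff_approximately_contractible
    {A : Type*} [NonUnitalNormedRing A] [NormedSpace ℂ A]
    [IsScalarTower ℂ A A] [SMulCommClass ℂ A A] [CompleteSpace A] :
    -- `A` is contractible: every bounded derivation into any Banach
    -- `A`-bimodule is inner
    (∀ (X : Type u) [NormedAddCommGroup X] [NormedSpace ℂ X] [CompleteSpace X]
        (lsmul rsmul : A →L[ℂ] X →L[ℂ] X),
        (∀ (a b : A) (x : X), lsmul (a * b) x = lsmul a (lsmul b x)) →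
        (∀ (a b : A) (x : X), rsmul (a * b) x = rsmul b (rsmul a x)) →
        (∀ (a b : A) (x : X), rsmul b (lsmul a x) = lsmul a (rsmul b x)) →
        ∀ d : A →L[ℂ] X, (∀ a b : A, d (a * b) = lsmul a (d b) + rsmul b (d a)) →
          ∃ x : X, ∀ a : A, d a = lsmul a x - rsmul a x)
    ↔
    -- `A` is approximately contractible: every approximate derivation into any
    -- Banach `A`-bimodule which is continuous at a point is near an inner
    -- derivation
    (∀ (X : Type u) [NormedAddCommGroup X] [NormedSpace ℂ X] [CompleteSpace X]
        (lsmul rsmul : A →L[ℂ] X →L[ℂ] X),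
        (∀ (a b : A) (x : X), lsmul (a * b) x = lsmul a (lsmul b x)) →
        (∀ (a b : A) (x : X), rsmul (a * b) x = rsmul b (rsmul a x)) →
        (∀ (a b : A) (x : X), rsmul b (lsmul a x) = lsmul a (rsmul b x)) →
        ∀ f : A → X, f 0 = 0 →
        (∃ α > (0 : ℝ), ∃ β > (0 : ℝ),
          (∀ (lam : ℂ) (a b : A),
            ‖f (lam • a + lam • b) - lam • f a - lam • f b‖ ≤ α) ∧
          (∀ a b : A, ‖lsmul a (f b) - f (a * b) + rsmul b (f a)‖ ≤ β)) →
        (∃ e : A, ContinuousAt f e) →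
        ∃ x : X, ∃ η > (0 : ℝ), ∀ a : A, ‖f a - (lsmul a x - rsmul a x)‖ ≤ η) := by

  constructor
  · -- contractible → approximately contractible
    intro H X _ _ _ lsmul rsmul hl hr hc f hf0 happrox hcont
    obtain ⟨α, hα, β, hβ, hadd, hder⟩ := happrox
    obtain ⟨e, he⟩ := hcont
    obtain ⟨d, dadd, dsmul, dclose, dlim⟩ := hyers_aux f hf0 hα hadd
    have h2pos : ∀ n : ℕ, ((2:ℂ)^n) ≠ 0 := fun n => pow_ne_zero n two_ne_zero
    have hnorm2 : ∀ n : ℕ, ‖((2:ℂ)^n)⁻¹‖ = (1/2:ℝ)^n := by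
      intro n; simp [norm_inv, norm_pow, inv_pow]
    have hgeo : ∀ C : ℝ, Filter.Tendsto (fun n : ℕ => C * (1/2:ℝ)^n) Filter.atTop (nhds 0) := by
      intro C
      have := tendsto_pow_atTop_nhds_zero_of_lt_one (by norm_num : (0:ℝ) ≤ 1/2)
        (by norm_num : (1/2:ℝ) < 1)
      simpa using this.const_mul C
    have d0 : d 0 = 0 := by simpa using dsmul 0 0
    -- (★)
    have hstar : ∀ a b : A, lsmul a (f b) - d (a * b) + rsmul b (d a) = 0 := by
      intro a b
      set s : ℕ → X := fun n => lsmul a (f b) - ((2:ℂ)^n)⁻¹ • f ((2:ℂ)^n • (a*b))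
          + rsmul b (((2:ℂ)^n)⁻¹ • f ((2:ℂ)^n • a)) with hs
      have hbound : ∀ n, ‖s n‖ ≤ β * (1/2:ℝ)^n := by
        intro n
        have key : s n = ((2:ℂ)^n)⁻¹ • (lsmul ((2:ℂ)^n • a) (f b)
            - f (((2:ℂ)^n • a) * b) + rsmul b (f ((2:ℂ)^n • a))) := by
          have e1 : ((2:ℂ)^n)⁻¹ • lsmul ((2:ℂ)^n • a) (f b) = lsmul a (f b) := by
            rw [map_smul, ContinuousLinearMap.smul_apply, inv_smul_smul₀ (h2pos n)]
          have e2 : ((2:ℂ)^n • a) * b = (2:ℂ)^n • (a*b) := smul_mul_assoc _ _ _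
          have e3 : ((2:ℂ)^n)⁻¹ • rsmul b (f ((2:ℂ)^n • a))
              = rsmul b (((2:ℂ)^n)⁻¹ • f ((2:ℂ)^n • a)) := (map_smul _ _ _).symm
          rw [smul_add, smul_sub, e1, e2, e3]
        rw [key, norm_smul, hnorm2]
        calc (1/2:ℝ)^n * ‖lsmul ((2:ℂ)^n • a) (f b)
              - f (((2:ℂ)^n • a) * b) + rsmul b (f ((2:ℂ)^n • a))‖
            ≤ (1/2:ℝ)^n * β := mul_le_mul_of_nonneg_left (hder _ _) (by positivity)
          _ = β * (1/2:ℝ)^n := mul_comm _ _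
      have t1 : Filter.Tendsto s Filter.atTop
          (nhds (lsmul a (f b) - d (a*b) + rsmul b (d a))) := by
        refine (Filter.Tendsto.sub tendsto_const_nhds (dlim (a*b))).add ?_
        exact ((rsmul b).continuous.tendsto (d a)).comp (dlim a)
      have t0 : Filter.Tendsto s Filter.atTop (nhds 0) :=
        squeeze_zero_norm hbound (hgeo β)
      exact tendsto_nhds_unique t1 t0
    -- d is a derivation
    have hderiv : ∀ a b : A, d (a * b) = lsmul a (d b) + rsmul b (d a) := by
      intro a b
      have hconst : ∀ n : ℕ, lsmul a (((2:ℂ)^n)⁻¹ • f ((2:ℂ)^n • b))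
          = d (a*b) - rsmul b (d a) := by
        intro n
        have h := hstar a ((2:ℂ)^n • b)
        rw [mul_smul_comm, dsmul] at h
        have hr2 : rsmul ((2:ℂ)^n • b) (d a) = (2:ℂ)^n • rsmul b (d a) := by
          rw [map_smul]; rfl
        rw [hr2] at h
        have h2 : lsmul a (f ((2:ℂ)^n • b)) = (2:ℂ)^n • (d (a*b) - rsmul b (d a)) := by
          rw [← sub_eq_zero]
          rw [smul_sub]
          calc lsmul a (f ((2:ℂ)^n • b)) - ((2:ℂ)^n • d (a*b) - (2:ℂ)^n • rsmul b (d a))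
              = lsmul a (f ((2:ℂ)^n • b)) - (2:ℂ)^n • d (a*b)
                + (2:ℂ)^n • rsmul b (d a) := by abel
            _ = 0 := h
        rw [map_smul, h2, inv_smul_smul₀ (h2pos n)]
      have t1 : Filter.Tendsto (fun n : ℕ => lsmul a (((2:ℂ)^n)⁻¹ • f ((2:ℂ)^n • b)))
          Filter.atTop (nhds (lsmul a (d b))) :=
        ((lsmul a).continuous.tendsto (d b)).comp (dlim b)
      have t2 : Filter.Tendsto (fun n : ℕ => lsmul a (((2:ℂ)^n)⁻¹ • f ((2:ℂ)^n • b)))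
          Filter.atTop (nhds (d (a*b) - rsmul b (d a))) := by
        simp only [hconst]; exact tendsto_const_nhds
      have := tendsto_nhds_unique t1 t2
      rw [this]; abel
    -- d is bounded
    obtain ⟨δ, hδ, hf_near⟩ : ∃ δ > 0, ∀ x : A, dist x e < δ → dist (f x) (f e) < 1 := by
      have := Metric.continuousAt_iff.mp he 1 one_pos
      obtain ⟨δ, hδ, hh⟩ := this
      exact ⟨δ, hδ, fun x hx => hh hx⟩
    have hDbound : ∀ a : A, ‖d a‖ ≤ ((2*α+1) * (2/δ)) * ‖a‖ := by
      intro a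
      rcases eq_or_ne a 0 with rfl | ha
      · simp [d0]
      · have hnapos : (0:ℝ) < ‖a‖ := norm_pos_iff.mpr ha
        set c : ℂ := ((2 * ‖a‖ / δ : ℝ) : ℂ) with hcdef
        have hcr : (0:ℝ) < 2 * ‖a‖ / δ := by positivity
        have hc0 : c ≠ 0 := by
          simp only [hcdef, Ne, Complex.ofReal_eq_zero]
          exact ne_of_gt hcr
        have hnc : ‖c‖ = 2 * ‖a‖ / δ := by
          rw [hcdef, Complex.norm_real, Real.norm_eq_abs, abs_of_pos hcr]
        set v : A := c⁻¹ • a with hvdef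
        have hnv : ‖v‖ = δ/2 := by
          rw [hvdef, norm_smul, norm_inv, hnc]
          field_simp
        have hdist : dist (e + v) e < δ := by
          rw [dist_eq_norm, add_sub_cancel_left, hnv]
          linarith
        have hval : d v = (d (e+v) - f (e+v)) + (f (e+v) - f e) + (f e - d e) := by
          have := dadd e v
          rw [this]; abel
        have hdv : ‖d v‖ ≤ 2*α + 1 := by
          rw [hval]
          calc ‖(d (e+v) - f (e+v)) + (f (e+v) - f e) + (f e - d e)‖
              ≤ ‖d (e+v) - f (e+v)‖ + ‖f (e+v) - f e‖ + ‖f e - d e‖ := by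
                refine (norm_add_le _ _).trans ?_
                gcongr
                exact norm_add_le _ _
            _ ≤ α + 1 + α := by
                gcongr
                · rw [norm_sub_rev]; exact dclose _
                · rw [← dist_eq_norm]; exact (hf_near _ hdist).le
                · exact dclose _
            _ = 2*α + 1 := by ring
        have hav : a = c • v := (smul_inv_smul₀ hc0 a).symm
        calc ‖d a‖ = ‖c • d v‖ := by rw [hav, dsmul]
          _ = (2 * ‖a‖ / δ) * ‖d v‖ := by rw [norm_smul, hnc]
          _ ≤ (2 * ‖a‖ / δ) * (2*α+1) := by
              apply mul_le_mul_of_nonneg_left hdv (le_of_lt (by positivity))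
          _ = ((2*α+1) * (2/δ)) * ‖a‖ := by ring
    -- package as continuous linear map
    let Dlin : A →ₗ[ℂ] X :=
      { toFun := d, map_add' := dadd, map_smul' := fun c a => dsmul c a }
    let D : A →L[ℂ] X := LinearMap.mkContinuous Dlin ((2*α+1) * (2/δ)) hDbound
    obtain ⟨x, hx⟩ := H X lsmul rsmul hl hr hc D (fun a b => hderiv a b)
    refine ⟨x, α, hα, fun a => ?_⟩
    have hda : d a = lsmul a x - rsmul a x := hx a
    rw [← hda]
    exact dclose a
  · -- approximately contractible → contractible
    intro H X _ _ _ lsmul rsmul hl hr hc d hd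
    obtain ⟨x, η, hη, hx⟩ := H X lsmul rsmul hl hr hc d (map_zero d)
      ⟨1, one_pos, 1, one_pos,
        fun lam a b => by simp [map_add, map_smul],
        fun a b => by
          have : lsmul a (d b) - d (a*b) + rsmul b (d a) = 0 := by
            rw [hd a b]; abel
          rw [this, norm_zero]; exact zero_le_one⟩
      ⟨0, d.continuous.continuousAt⟩
    refine ⟨x, fun a => ?_⟩
    by_contra hne
    set v : X := d a - (lsmul a x - rsmul a x) with hv
    have hv0 : v ≠ 0 := sub_ne_zero.mpr hne
    have hvpos : (0:ℝ) < ‖v‖ := norm_pos_iff.mpr hv0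
    have hvn : ∀ n : ℕ, (n:ℝ) * ‖v‖ ≤ η := by
      intro n
      have h := hx ((n:ℂ) • a)
      have e1 : d ((n:ℂ) • a) = (n:ℂ) • d a := map_smul d _ _
      have e2 : lsmul ((n:ℂ) • a) x = (n:ℂ) • lsmul a x := by rw [map_smul]; rfl
      have e3 : rsmul ((n:ℂ) • a) x = (n:ℂ) • rsmul a x := by rw [map_smul]; rfl
      rw [e1, e2, e3] at h
      have e4 : (n:ℂ) • d a - ((n:ℂ) • lsmul a x - (n:ℂ) • rsmul a x)
          = (n:ℂ) • v := by rw [hv, smul_sub, smul_sub]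
      rw [e4, norm_smul] at h
      simpa using h
    obtain ⟨n, hn⟩ := exists_nat_gt (η / ‖v‖)
    have : η < (n:ℝ) * ‖v‖ := by
      rw [div_lt_iff₀ hvpos] at hn
      linarith
    linarith [hvn n]
end

section
/- A complex Banach algebra A is amenable if and only if it is approximately amenable; that is, H¹(A,Y*) = 0 for every dual Banach A-bimodule Y* (every bounded derivation from A into Y* is inner) if and only if for every Banach A-bimodule Y, every approximate derivation f : A → Y* that is continuous at some point is near an inner derivation: there exist φ ∈ Y* and η > 0 with ‖f(a) − (a·φ − φ·a)‖ ≤ η for all a ∈ A. -/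
open Filter Topology

lemma limit_eq_zero_of_norm_tendsto {F : Type*} [NormedAddCommGroup F] {u : ℕ → F} {L : F}
    (h : Tendsto u atTop (𝓝 L)) (hb : Tendsto (fun n => ‖u n‖) atTop (𝓝 0)) : L = 0 := by
  have h1 : Tendsto (fun n => ‖u n‖) atTop (𝓝 ‖L‖) := (continuous_norm.tendsto L).comp h
  have : ‖L‖ = 0 := tendsto_nhds_unique h1 hb
  simpa using this

lemma hyers {E F : Type*} [NormedAddCommGroup E] [NormedSpace ℂ E]
    [NormedAddCommGroup F] [NormedSpace ℂ F] [CompleteSpace F]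
    (f : E → F) (α : ℝ) (hf0 : f 0 = 0)
    (hα : ∀ (lam : ℂ) (a b : E), ‖f (lam • a + lam • b) - lam • f a - lam • f b‖ ≤ α) :
    ∃ d : E → F,
      (∀ a, Tendsto (fun n : ℕ => ((2:ℂ)^n)⁻¹ • f ((2:ℂ)^n • a)) atTop (𝓝 (d a))) ∧
      (∀ a, ‖f a - d a‖ ≤ α) ∧
      (∀ a b, d (a + b) = d a + d b) ∧
      (∀ (c : ℂ) (a : E), d (c • a) = c • d a) := by
  -- basic inequalities
  have hadd : ∀ a b : E, ‖f (a + b) - f a - f b‖ ≤ α := by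
    intro a b; simpa using hα 1 a b
  have hhom : ∀ (c : ℂ) (a : E), ‖f (c • a) - c • f a‖ ≤ α := by
    intro c a
    have := hα c a 0
    simpa [hf0] using this
  set seq : E → ℕ → F := fun a n => ((2:ℂ)^n)⁻¹ • f ((2:ℂ)^n • a) with hseq
  have hnorm2 : ∀ n : ℕ, ‖((2:ℂ)^(n+1))⁻¹‖ = ((2:ℝ)^(n+1))⁻¹ := by
    intro n
    rw [norm_inv, norm_pow]
    norm_num
  have hdist : ∀ (a : E) (n : ℕ), dist (seq a n) (seq a (n+1)) ≤ (α/2) * (1/2)^n := by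
    intro a n
    have hx : (2:ℂ)^(n+1) • a = (2:ℂ)^n • a + (2:ℂ)^n • a := by
      rw [pow_succ, mul_comm, mul_smul, two_smul]
    set x := (2:ℂ)^n • a with hxdef
    have h1 : seq a n = ((2:ℂ)^(n+1))⁻¹ • (f x + f x) := by
      rw [hseq]
      simp only [← hxdef]
      rw [pow_succ, mul_inv, mul_smul]
      congr 1
      rw [← two_smul ℂ (f x), smul_smul]
      norm_num
    have h2 : seq a (n+1) = ((2:ℂ)^(n+1))⁻¹ • f (x + x) := by
      rw [hseq]; simp only [hx]
    rw [dist_eq_norm, h1, h2, ← smul_sub, norm_smul, hnorm2]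
    have hb : ‖f x + f x - f (x + x)‖ ≤ α := by
      have := hadd x x
      calc ‖f x + f x - f (x + x)‖ = ‖f (x + x) - f x - f x‖ := by
            rw [← norm_neg]; congr 1; abel
        _ ≤ α := this
    calc ((2:ℝ)^(n+1))⁻¹ * ‖f x + f x - f (x + x)‖
        ≤ ((2:ℝ)^(n+1))⁻¹ * α := by
          apply mul_le_mul_of_nonneg_left hb; positivity
      _ = (α/2) * (1/2)^n := by rw [one_div, inv_pow, pow_succ, mul_inv]; ring
  have hcauchy : ∀ a : E, CauchySeq (seq a) :=
    fun a => cauchySeq_of_le_geometric (1/2) (α/2) (by norm_num) (hdist a)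
  choose d hd using fun a => cauchySeq_tendsto_of_complete (hcauchy a)
  refine ⟨d, hd, ?_, ?_, ?_⟩
  · -- ‖f a - d a‖ ≤ α
    intro a
    have h0 : seq a 0 = f a := by simp [hseq]
    have := dist_le_of_le_geometric_of_tendsto₀ (1/2) (α/2) (by norm_num) (hdist a) (hd a)
    rw [h0, dist_eq_norm] at this
    calc ‖f a - d a‖ ≤ (α/2) / (1 - 1/2) := this
      _ = α := by ring
  · -- additivity
    intro a b
    have htend : Tendsto (fun n => seq a n + seq b n - seq (a+b) n) atTop
        (𝓝 (d a + d b - d (a+b))) := ((hd a).add (hd b)).sub (hd (a+b))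
    have hb : Tendsto (fun n => ‖seq a n + seq b n - seq (a+b) n‖) atTop (𝓝 0) := by
      have hbound : ∀ n : ℕ, ‖seq a n + seq b n - seq (a+b) n‖ ≤ ((2:ℝ)^n)⁻¹ * α := by
        intro n
        have key : seq a n + seq b n - seq (a+b) n
            = ((2:ℂ)^n)⁻¹ • (f ((2:ℂ)^n • a) + f ((2:ℂ)^n • b) - f ((2:ℂ)^n • a + (2:ℂ)^n • b)) := by
          rw [hseq]; simp only [smul_add, smul_sub]
        rw [key, norm_smul, norm_inv, norm_pow]
        have : ‖f ((2:ℂ)^n • a) + f ((2:ℂ)^n • b) - f ((2:ℂ)^n • a + (2:ℂ)^n • b)‖ ≤ α := by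
          rw [← norm_neg]
          have := hadd ((2:ℂ)^n • a) ((2:ℂ)^n • b)
          calc ‖-(f ((2:ℂ)^n • a) + f ((2:ℂ)^n • b) - f ((2:ℂ)^n • a + (2:ℂ)^n • b))‖
              = ‖f ((2:ℂ)^n • a + (2:ℂ)^n • b) - f ((2:ℂ)^n • a) - f ((2:ℂ)^n • b)‖ := by
                congr 1; abel
            _ ≤ α := this
        have h2 : ‖(2:ℂ)‖ = (2:ℝ) := by norm_num
        rw [h2]
        apply mul_le_mul_of_nonneg_left this; positivity
      apply squeeze_zero (fun n => norm_nonneg _) hbound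
      have : Tendsto (fun n : ℕ => ((2:ℝ)^n)⁻¹ * α) atTop (𝓝 (0 * α)) := by
        apply Tendsto.mul_const
        simpa using tendsto_pow_atTop_nhds_zero_of_lt_one (by norm_num : (0:ℝ) ≤ (2:ℝ)⁻¹) (by norm_num)
          |>.congr (fun n => by rw [inv_pow])
      simpa using this
    have := limit_eq_zero_of_norm_tendsto htend hb
    have : d a + d b - d (a+b) = 0 := this
    linear_combination (norm := abel) -this
  · -- homogeneity
    intro c a
    have htend : Tendsto (fun n => seq (c • a) n - c • seq a n) atTop
        (𝓝 (d (c • a) - c • d a)) := (hd (c • a)).sub ((hd a).const_smul c)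
    have hb : Tendsto (fun n => ‖seq (c • a) n - c • seq a n‖) atTop (𝓝 0) := by
      have hbound : ∀ n : ℕ, ‖seq (c • a) n - c • seq a n‖ ≤ ((2:ℝ)^n)⁻¹ * α := by
        intro n
        have key : seq (c • a) n - c • seq a n
            = ((2:ℂ)^n)⁻¹ • (f (c • ((2:ℂ)^n • a)) - c • f ((2:ℂ)^n • a)) := by
          rw [hseq]
          simp only [smul_sub, smul_comm c ((2:ℂ)^n)⁻¹, smul_comm ((2:ℂ)^n) c]
        rw [key, norm_smul, norm_inv, norm_pow]
        have h2 : ‖(2:ℂ)‖ = (2:ℝ) := by norm_num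
        rw [h2]
        apply mul_le_mul_of_nonneg_left (hhom c ((2:ℂ)^n • a))
        positivity
      apply squeeze_zero (fun n => norm_nonneg _) hbound
      have : Tendsto (fun n : ℕ => ((2:ℝ)^n)⁻¹ * α) atTop (𝓝 (0 * α)) := by
        apply Tendsto.mul_const
        simpa using tendsto_pow_atTop_nhds_zero_of_lt_one (by norm_num : (0:ℝ) ≤ (2:ℝ)⁻¹) (by norm_num)
          |>.congr (fun n => by rw [inv_pow])
      simpa using this
    have := limit_eq_zero_of_norm_tendsto htend hb
    linear_combination (norm := abel) this

lemma tendsto_comp_right {Y : Type*} [NormedAddCommGroup Y] [NormedSpace ℂ Y]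
    {u : ℕ → (Y →L[ℂ] ℂ)} {L : Y →L[ℂ] ℂ} (T : Y →L[ℂ] Y)
    (h : Tendsto u atTop (𝓝 L)) :
    Tendsto (fun n => (u n).comp T) atTop (𝓝 (L.comp T)) := by
  have hc := ((ContinuousLinearMap.compL ℂ Y Y ℂ).flip T).continuous
  exact (hc.tendsto L).comp h

set_option maxHeartbeats 1000000 in
/-- **Corollary 3.3**: a complex Banach algebra `A` is amenable if and only if
it is approximately amenable.  A Banach `A`-bimodule `Y` is encoded by
continuous bilinear actions `lsmul` (for `a·y`) and `rsmul` (for `y·a`)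
satisfying the bimodule axioms; its dual `Y →L[ℂ] ℂ` carries the dual bimodule
actions `a·φ = φ ∘ rsmul a` (i.e. `(a·φ)(y) = φ(y·a)`) and
`φ·a = φ ∘ lsmul a` (i.e. `(φ·a)(y) = φ(a·y)`). -/
theorem amenable_iff_approximately_amenable
    {A : Type*} [NonUnitalNormedRing A] [NormedSpace ℂ A]
    [IsScalarTower ℂ A A] [SMulCommClass ℂ A A] [CompleteSpace A] :
    -- `A` is amenable: every bounded derivation into the dual of any Banach
    -- `A`-bimodule is inner
    (∀ (Y : Type u) [NormedAddCommGroup Y] [NormedSpace ℂ Y] [CompleteSpace Y]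
        (lsmul rsmul : A →L[ℂ] Y →L[ℂ] Y),
        (∀ (a b : A) (y : Y), lsmul (a * b) y = lsmul a (lsmul b y)) →
        (∀ (a b : A) (y : Y), rsmul (a * b) y = rsmul b (rsmul a y)) →
        (∀ (a b : A) (y : Y), rsmul b (lsmul a y) = lsmul a (rsmul b y)) →
        ∀ d : A →L[ℂ] (Y →L[ℂ] ℂ),
          (∀ a b : A,
            d (a * b) = (d b).comp (rsmul a) + (d a).comp (lsmul b)) →
          ∃ φ : Y →L[ℂ] ℂ, ∀ a : A, d a = φ.comp (rsmul a) - φ.comp (lsmul a))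
    ↔
    -- `A` is approximately amenable: every approximate derivation into the
    -- dual of any Banach `A`-bimodule which is continuous at a point is near
    -- an inner derivation
    (∀ (Y : Type u) [NormedAddCommGroup Y] [NormedSpace ℂ Y] [CompleteSpace Y]
        (lsmul rsmul : A →L[ℂ] Y →L[ℂ] Y),
        (∀ (a b : A) (y : Y), lsmul (a * b) y = lsmul a (lsmul b y)) →
        (∀ (a b : A) (y : Y), rsmul (a * b) y = rsmul b (rsmul a y)) →
        (∀ (a b : A) (y : Y), rsmul b (lsmul a y) = lsmul a (rsmul b y)) →
        ∀ f : A → (Y →L[ℂ] ℂ), f 0 = 0 →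
        (∃ α > (0 : ℝ), ∃ β > (0 : ℝ),
          (∀ (lam : ℂ) (a b : A),
            ‖f (lam • a + lam • b) - lam • f a - lam • f b‖ ≤ α) ∧
          (∀ a b : A,
            ‖(f b).comp (rsmul a) - f (a * b) + (f a).comp (lsmul b)‖ ≤ β)) →
        (∃ e : A, ContinuousAt f e) →
        ∃ φ : Y →L[ℂ] ℂ, ∃ η > (0 : ℝ),
          ∀ a : A, ‖f a - (φ.comp (rsmul a) - φ.comp (lsmul a))‖ ≤ η) := by
  constructor
  · -- amenable → approximately amenable
    intro hAm Y _ _ _ lsmul rsmul hl hr hlr f hf0 hab hc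
    obtain ⟨α, hα0, β, hβ0, hα, hβ⟩ := hab
    obtain ⟨e, hce⟩ := hc
    obtain ⟨d, hd, hfd, hdadd, hdsmul⟩ := hyers f α hf0 hα
    have hpow_ne : ∀ n : ℕ, ((2:ℂ)^n) ≠ 0 := fun n => pow_ne_zero n two_ne_zero
    have h2c : ‖(2:ℂ)‖ = (2:ℝ) := by norm_num
    have hto0 : ∀ C : ℝ, Tendsto (fun n : ℕ => ((2:ℝ)^n)⁻¹ * C) atTop (𝓝 0) := by
      intro C
      have : Tendsto (fun n : ℕ => ((2:ℝ)^n)⁻¹ * C) atTop (𝓝 (0 * C)) := by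
        apply Tendsto.mul_const
        simpa using tendsto_pow_atTop_nhds_zero_of_lt_one
          (by norm_num : (0:ℝ) ≤ (2:ℝ)⁻¹) (by norm_num)
          |>.congr (fun n => by rw [inv_pow])
      simpa using this
    -- Step A
    have stepA : ∀ a b : A,
        (d b).comp (rsmul a) - d (a*b) + (f a).comp (lsmul b) = 0 := by
      intro a b
      have htend : Tendsto (fun n : ℕ =>
          (((2:ℂ)^n)⁻¹ • f ((2:ℂ)^n • b)).comp (rsmul a)
            - ((2:ℂ)^n)⁻¹ • f ((2:ℂ)^n • (a*b)) + (f a).comp (lsmul b)) atTop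
          (𝓝 ((d b).comp (rsmul a) - d (a*b) + (f a).comp (lsmul b))) :=
        ((tendsto_comp_right (rsmul a) (hd b)).sub (hd (a*b))).add tendsto_const_nhds
      apply limit_eq_zero_of_norm_tendsto htend
      have hbound : ∀ n : ℕ,
          ‖(((2:ℂ)^n)⁻¹ • f ((2:ℂ)^n • b)).comp (rsmul a)
            - ((2:ℂ)^n)⁻¹ • f ((2:ℂ)^n • (a*b)) + (f a).comp (lsmul b)‖
          ≤ ((2:ℝ)^n)⁻¹ * β := by
        intro n
        have e1 : a * ((2:ℂ)^n • b) = (2:ℂ)^n • (a*b) := mul_smul_comm _ _ _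
        have e2 : (f a).comp (lsmul ((2:ℂ)^n • b)) = (2:ℂ)^n • (f a).comp (lsmul b) := by
          rw [map_smul, ContinuousLinearMap.comp_smul]
        have key : (((2:ℂ)^n)⁻¹ • f ((2:ℂ)^n • b)).comp (rsmul a)
            - ((2:ℂ)^n)⁻¹ • f ((2:ℂ)^n • (a*b)) + (f a).comp (lsmul b)
            = ((2:ℂ)^n)⁻¹ • ((f ((2:ℂ)^n • b)).comp (rsmul a) - f (a * ((2:ℂ)^n • b))
                + (f a).comp (lsmul ((2:ℂ)^n • b))) := by
          rw [e1, e2, smul_add, smul_sub, inv_smul_smul₀ (hpow_ne n),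
            ContinuousLinearMap.smul_comp]
        rw [key]
        have hns : ‖((2:ℂ)^n)⁻¹ • ((f ((2:ℂ)^n • b)).comp (rsmul a) - f (a * ((2:ℂ)^n • b))
              + (f a).comp (lsmul ((2:ℂ)^n • b)))‖
            = ‖((2:ℂ)^n)⁻¹‖ * ‖(f ((2:ℂ)^n • b)).comp (rsmul a) - f (a * ((2:ℂ)^n • b))
              + (f a).comp (lsmul ((2:ℂ)^n • b))‖ :=
          norm_smul ((2:ℂ)^n)⁻¹ ((f ((2:ℂ)^n • b)).comp (rsmul a) - f (a * ((2:ℂ)^n • b))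
              + (f a).comp (lsmul ((2:ℂ)^n • b)))
        rw [hns, norm_inv, norm_pow, h2c]
        exact mul_le_mul_of_nonneg_left (hβ a ((2:ℂ)^n • b)) (by positivity)
      exact squeeze_zero (fun n => norm_nonneg _) hbound (hto0 β)
    -- Step B : d is a derivation
    have stepB : ∀ a b : A,
        d (a*b) = (d b).comp (rsmul a) + (d a).comp (lsmul b) := by
      intro a b
      have hconst : ∀ m : ℕ,
          (((2:ℂ)^m)⁻¹ • f ((2:ℂ)^m • a)).comp (lsmul b)
            = d (a*b) - (d b).comp (rsmul a) := by
        intro m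
        have h0 := stepA ((2:ℂ)^m • a) b
        have e1 : rsmul ((2:ℂ)^m • a) = (2:ℂ)^m • rsmul a := map_smul _ _ _
        have e2 : ((2:ℂ)^m • a) * b = (2:ℂ)^m • (a*b) := smul_mul_assoc _ _ _
        rw [e1, ContinuousLinearMap.comp_smul, e2, hdsmul] at h0
        have h1 : (f ((2:ℂ)^m • a)).comp (lsmul b)
            = (2:ℂ)^m • (d (a*b) - (d b).comp (rsmul a)) := by
          rw [smul_sub]
          have h2 : (f ((2:ℂ)^m • a)).comp (lsmul b)
              = ((2:ℂ)^m • ((d b).comp (rsmul a)) - (2:ℂ)^m • d (a*b)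
                  + (f ((2:ℂ)^m • a)).comp (lsmul b))
                + ((2:ℂ)^m • d (a*b) - (2:ℂ)^m • ((d b).comp (rsmul a))) := by abel
          rw [h2, h0, zero_add]
        calc (((2:ℂ)^m)⁻¹ • f ((2:ℂ)^m • a)).comp (lsmul b)
            = ((2:ℂ)^m)⁻¹ • ((f ((2:ℂ)^m • a)).comp (lsmul b)) :=
              ContinuousLinearMap.smul_comp _ _ _
          _ = ((2:ℂ)^m)⁻¹ • ((2:ℂ)^m • (d (a*b) - (d b).comp (rsmul a))) := by rw [h1]
          _ = d (a*b) - (d b).comp (rsmul a) := inv_smul_smul₀ (hpow_ne m) _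
      have htend : Tendsto (fun m : ℕ =>
          (((2:ℂ)^m)⁻¹ • f ((2:ℂ)^m • a)).comp (lsmul b)) atTop
          (𝓝 ((d a).comp (lsmul b))) := tendsto_comp_right (lsmul b) (hd a)
      have h2 : (d a).comp (lsmul b) = d (a*b) - (d b).comp (rsmul a) :=
        tendsto_nhds_unique htend
          (Tendsto.congr (fun m => (hconst m).symm) tendsto_const_nhds)
      rw [h2]; abel
    -- d is bounded
    rw [Metric.continuousAt_iff] at hce
    obtain ⟨δ, hδ0, hδ⟩ := hce 1 one_pos
    set M : ℝ := 2*‖f e‖ + 1 + 2*α with hM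
    have hdf : ∀ x : A, ‖d x‖ ≤ ‖f x‖ + α := by
      intro x
      have h1 := hfd x
      calc ‖d x‖ = ‖f x - (f x - d x)‖ := by congr 1; abel
        _ ≤ ‖f x‖ + ‖f x - d x‖ := norm_sub_le _ _
        _ ≤ ‖f x‖ + α := by linarith
    have hball : ∀ x : A, ‖x‖ < δ → ‖d x‖ ≤ M := by
      intro x hx
      have h1 : ‖f (x+e)‖ ≤ ‖f e‖ + 1 := by
        have h2 : dist (x+e) e < δ := by
          rw [dist_eq_norm]; simpa using hx
        have h3 : dist (f (x+e)) (f e) < 1 := hδ h2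
        rw [dist_eq_norm] at h3
        calc ‖f (x+e)‖ = ‖(f (x+e) - f e) + f e‖ := by congr 1; abel
          _ ≤ ‖f (x+e) - f e‖ + ‖f e‖ := norm_add_le _ _
          _ ≤ ‖f e‖ + 1 := by linarith
      have hdx : d x = d (x+e) - d e := by rw [hdadd]; abel
      calc ‖d x‖ = ‖d (x+e) - d e‖ := by rw [hdx]
        _ ≤ ‖d (x+e)‖ + ‖d e‖ := norm_sub_le _ _
        _ ≤ (‖f (x+e)‖ + α) + (‖f e‖ + α) := by
            have := hdf (x+e); have := hdf e; linarith
        _ ≤ M := by rw [hM]; linarith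
    have hbound : ∀ x : A, ‖d x‖ ≤ (2*M/δ) * ‖x‖ := by
      intro x
      rcases eq_or_ne x 0 with rfl | hx0
      · have h0 : d 0 = 0 := by
          have := hdadd 0 0; simpa using this
        simp [h0]
      · have hxpos : 0 < ‖x‖ := norm_pos_iff.mpr hx0
        set c : ℂ := ((δ/(2*‖x‖) : ℝ) : ℂ) with hc
        have hcnorm : ‖c‖ = δ/(2*‖x‖) := by
          rw [hc, Complex.norm_real]
          exact abs_of_pos (by positivity)
        have hcx : ‖c • x‖ < δ := by
          have hns : ‖c • x‖ = ‖c‖ * ‖x‖ := norm_smul c x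
          rw [hns, hcnorm]
          have hval : δ/(2*‖x‖) * ‖x‖ = δ/2 := by field_simp
          rw [hval]
          exact half_lt_self hδ0
        have h1 : ‖d (c • x)‖ ≤ M := hball _ hcx
        rw [hdsmul] at h1
        have h1' : ‖c‖ * ‖d x‖ ≤ M := by
          rw [← norm_smul c (d x)]; exact h1
        rw [hcnorm] at h1'
        have hδ' : δ ≠ 0 := ne_of_gt hδ0
        have hx' : ‖x‖ ≠ 0 := ne_of_gt hxpos
        have step : ‖d x‖ = (2*‖x‖/δ) * ((δ/(2*‖x‖)) * ‖d x‖) := by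
          field_simp
        rw [step]
        calc (2*‖x‖/δ) * ((δ/(2*‖x‖)) * ‖d x‖) ≤ (2*‖x‖/δ) * M :=
              mul_le_mul_of_nonneg_left h1' (by positivity)
          _ = (2*M/δ) * ‖x‖ := by ring
    let Dlin : A →ₗ[ℂ] (Y →L[ℂ] ℂ) :=
      { toFun := d, map_add' := hdadd, map_smul' := hdsmul }
    let D : A →L[ℂ] (Y →L[ℂ] ℂ) := Dlin.mkContinuous (2*M/δ) hbound
    have hDa : ∀ a : A, D a = d a := fun a => rfl
    have hder : ∀ a b : A, D (a*b) = (D b).comp (rsmul a) + (D a).comp (lsmul b) := by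
      intro a b; simp only [hDa]; exact stepB a b
    obtain ⟨φ, hφ⟩ := hAm Y lsmul rsmul hl hr hlr D hder
    refine ⟨φ, α, hα0, fun a => ?_⟩
    rw [← hφ a, hDa a]
    exact hfd a
  · -- approximately amenable → amenable
    intro happrox Y _ _ _ lsmul rsmul hl hr hlr D hder
    have h1 : ∀ (lam : ℂ) (a b : A),
        ‖D (lam • a + lam • b) - lam • D a - lam • D b‖ ≤ (1:ℝ) := by
      intro lam a b
      simp [map_add, map_smul]
    have h2 : ∀ a b : A,
        ‖(D b).comp (rsmul a) - D (a*b) + (D a).comp (lsmul b)‖ ≤ (1:ℝ) := by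
      intro a b
      rw [hder a b]
      have : (D b).comp (rsmul a) - ((D b).comp (rsmul a) + (D a).comp (lsmul b))
          + (D a).comp (lsmul b) = 0 := by abel
      rw [this]; simp
    obtain ⟨φ, η, hη0, hne⟩ := happrox Y lsmul rsmul hl hr hlr (⇑D)
      (map_zero D) ⟨1, one_pos, 1, one_pos, h1, h2⟩ ⟨0, D.continuous.continuousAt⟩
    refine ⟨φ, fun a => ?_⟩
    ext y
    have key : ∀ n : ℕ, (n:ℝ) * ‖D a y - (φ ((rsmul a) y) - φ ((lsmul a) y))‖ ≤ η * ‖y‖ := by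
      intro n
      have h3 := hne ((n:ℂ) • a)
      have h4 : ‖(D ((n:ℂ) • a) - (φ.comp (rsmul ((n:ℂ) • a)) - φ.comp (lsmul ((n:ℂ) • a)))) y‖
          ≤ η * ‖y‖ := by
        refine le_trans (ContinuousLinearMap.le_opNorm _ y) ?_
        exact mul_le_mul_of_nonneg_right h3 (norm_nonneg y)
      have h5 : (D ((n:ℂ) • a) - (φ.comp (rsmul ((n:ℂ) • a)) - φ.comp (lsmul ((n:ℂ) • a)))) y
          = (n:ℂ) * (D a y - (φ ((rsmul a) y) - φ ((lsmul a) y))) := by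
        simp only [ContinuousLinearMap.sub_apply, ContinuousLinearMap.comp_apply, map_smul,
          ContinuousLinearMap.smul_apply, smul_eq_mul]
        ring
      rw [h5] at h4
      calc (n:ℝ) * ‖D a y - (φ ((rsmul a) y) - φ ((lsmul a) y))‖
          = ‖(n:ℂ) * (D a y - (φ ((rsmul a) y) - φ ((lsmul a) y)))‖ := by
            rw [norm_mul]; norm_num
        _ ≤ η * ‖y‖ := h4
    have hz : ‖D a y - (φ ((rsmul a) y) - φ ((lsmul a) y))‖ = 0 := by
      by_contra h
      have hpos : 0 < ‖D a y - (φ ((rsmul a) y) - φ ((lsmul a) y))‖ :=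
        lt_of_le_of_ne (norm_nonneg _) (Ne.symm h)
      obtain ⟨n, hn⟩ := exists_nat_gt ((η * ‖y‖) / ‖D a y - (φ ((rsmul a) y) - φ ((lsmul a) y))‖)
      have hk := key n
      rw [div_lt_iff₀ hpos] at hn
      linarith
    have h6 : D a y - (φ ((rsmul a) y) - φ ((lsmul a) y)) = 0 := norm_eq_zero.mp hz
    have h7 : D a y = φ ((rsmul a) y) - φ ((lsmul a) y) := by
      rw [← sub_eq_zero]; exact h6
    simpa using h7
end

section
/- Let α > 0, n ≥ 1 and f₁, f₂, f₃ : Aⁿ → X be mappings such that ‖D^n_{λ₁,…,λₙ}[f₁,f₂,f₃](a₁,b₁,…,aₙ,bₙ)‖ ≤ α for all a₁,…,aₙ,b₁,…,bₙ ∈ A and all λ₁,…,λₙ ∈ ℂ, and such that f₃(a₁,…,aₙ) = 0 whenever a_i = 0 for some i. Then ‖f₁(a₁,…,aₙ) − f₂(a₁,…,aₙ)‖ ≤ α/n for all a₁,…,aₙ ∈ A. -/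
open Function Finset Filter

variable {A X : Type*}

/-- Inequality (3) in the proof of Theorem 2.1. -/
theorem f1_close_to_f2
    [NonUnitalNormedRing A] [NormedSpace ℂ A]
    [IsScalarTower ℂ A A] [SMulCommClass ℂ A A]
    [NormedAddCommGroup X] [NormedSpace ℂ X] [CompleteSpace X]
    (n : ℕ) (hn : 1 ≤ n) (α : ℝ) (hα : 0 < α)
    (f₁ f₂ f₃ : (Fin n → A) → X)
    (hD : ∀ (lam : Fin n → ℂ) (a b : Fin n → A),
      ‖Dmap n f₁ f₂ f₃ lam a b‖ ≤ α)
    (hv₃ : ∀ (a : Fin n → A) (i : Fin n), a i = 0 → f₃ a = 0) :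
    ∀ a : Fin n → A, ‖f₁ a - f₂ a‖ ≤ α / n := by
  intro a
  have h := hD (fun _ => 1) a 0
  have heq : Dmap n f₁ f₂ f₃ (fun _ => 1) a 0 = (n : ℂ) • (f₁ a - f₂ a) := by
    unfold Dmap
    have : ∀ j : Fin n,
        (f₁ (Function.update a j ((1:ℂ) • a j + (1:ℂ) • (0:A)))
          - (1:ℂ) • f₂ a - (1:ℂ) • f₃ (Function.update a j (0:A)))
        = f₁ a - f₂ a := by
      intro j
      rw [hv₃ (Function.update a j (0:A)) j (by simp)]
      simp [Function.update_eq_self]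
    calc (∑ j : Fin n,
        (f₁ (Function.update a j ((fun _ => (1:ℂ)) j • a j + (fun _ => (1:ℂ)) j • (0:Fin n → A) j))
          - (fun _ => (1:ℂ)) j • f₂ a - (fun _ => (1:ℂ)) j • f₃ (Function.update a j ((0:Fin n → A) j))))
        = ∑ j : Fin n, (f₁ a - f₂ a) := Finset.sum_congr rfl (fun j _ => this j)
      _ = (n : ℂ) • (f₁ a - f₂ a) := by simp [Finset.sum_const, Nat.cast_smul_eq_nsmul, smul_sub]
  rw [heq] at h
  rw [norm_smul] at h
  simp only [Complex.norm_natCast] at h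
  have hn' : (0 : ℝ) < n := by exact_mod_cast hn
  rw [le_div_iff₀ hn', mul_comm]
  exact h
end

section
/- Let α > 0, n ≥ 1 and f₁, f₂, f₃ : Aⁿ → X be mappings such that ‖D^n_{λ₁,…,λₙ}[f₁,f₂,f₃](a₁,b₁,…,aₙ,bₙ)‖ ≤ α for all a₁,…,aₙ,b₁,…,bₙ ∈ A and all λ₁,…,λₙ ∈ ℂ, and such that f₁ and f₂ vanish whenever some coordinate is 0. Then ‖f₁(b₁,…,bₙ) − f₃(b₁,…,bₙ)‖ ≤ α for all b₁,…,bₙ ∈ A. -/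
open Function Finset Filter

variable {A X : Type*}

/-- Inequality (4) in the proof of Theorem 2.1. -/
theorem f1_close_to_f3
    [NonUnitalNormedRing A] [NormedSpace ℂ A]
    [IsScalarTower ℂ A A] [SMulCommClass ℂ A A]
    [NormedAddCommGroup X] [NormedSpace ℂ X] [CompleteSpace X]
    (n : ℕ) (hn : 1 ≤ n) (α : ℝ) (hα : 0 < α)
    (f₁ f₂ f₃ : (Fin n → A) → X)
    (hD : ∀ (lam : Fin n → ℂ) (a b : Fin n → A),
      ‖Dmap n f₁ f₂ f₃ lam a b‖ ≤ α)
    (hv₁ : ∀ (a : Fin n → A) (i : Fin n), a i = 0 → f₁ a = 0)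
    (hv₂ : ∀ (a : Fin n → A) (i : Fin n), a i = 0 → f₂ a = 0) :
    ∀ b : Fin n → A, ‖f₁ b - f₃ b‖ ≤ α := by
  intro b
  set j₀ : Fin n := ⟨0, hn⟩ with hj₀
  set lam : Fin n → ℂ := fun j => if j = j₀ then 1 else 0 with hlam
  set a : Fin n → A := Function.update b j₀ 0 with ha
  have key : Dmap n f₁ f₂ f₃ lam a b = f₁ b - f₃ b := by
    unfold Dmap
    rw [Finset.sum_eq_single j₀]
    · have haj : a j₀ = 0 := by simp [ha]
      have h2 : Function.update a j₀ (b j₀) = b := by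
        simp [ha, Function.update_idem, Function.update_eq_self]
      have h1 : Function.update a j₀ (a j₀ + b j₀) = b := by
        rw [haj, zero_add]; exact h2
      have h3 : f₂ a = 0 := hv₂ a j₀ haj
      simp [h1, h2, h3, hlam]
    · intro j _ hj
      have hl : lam j = 0 := by simp [hlam, hj]
      have hf : f₁ (Function.update a j (0:A)) = 0 := hv₁ _ j (by simp)
      simp [hl, hf]
    · intro h; exact absurd (Finset.mem_univ j₀) h
  calc ‖f₁ b - f₃ b‖ = ‖Dmap n f₁ f₂ f₃ lam a b‖ := by rw [key]
    _ ≤ α := hD lam a b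
end

section
/- Let α > 0, n ≥ 1 and f₁, f₂, f₃ : Aⁿ → X be mappings such that ‖D^n_{λ₁,…,λₙ}[f₁,f₂,f₃](a₁,b₁,…,aₙ,bₙ)‖ ≤ α for all a₁,…,aₙ,b₁,…,bₙ ∈ A and all λ₁,…,λₙ ∈ ℂ, and such that for each 1 ≤ k ≤ 3, f_k vanishes whenever some coordinate is 0. Then for each 1 ≤ i ≤ n and all a₁,…,aₙ ∈ A, ‖f₁(a₁,…,a_{i−1}, 2a_i, a_{i+1},…,aₙ) − 2·f₁(a₁,…,aₙ)‖ ≤ 3α. -/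
open Function Finset Filter

variable {A X : Type*}

/-- Inequality (5) in the proof of Theorem 2.1. -/
theorem doubling_estimate
    [NonUnitalNormedRing A] [NormedSpace ℂ A]
    [IsScalarTower ℂ A A] [SMulCommClass ℂ A A]
    [NormedAddCommGroup X] [NormedSpace ℂ X] [CompleteSpace X]
    (n : ℕ) (hn : 1 ≤ n) (α : ℝ) (hα : 0 < α)
    (f₁ f₂ f₃ : (Fin n → A) → X)
    (hD : ∀ (lam : Fin n → ℂ) (a b : Fin n → A),
      ‖Dmap n f₁ f₂ f₃ lam a b‖ ≤ α)
    (hv₁ : ∀ (a : Fin n → A) (i : Fin n), a i = 0 → f₁ a = 0)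
    (hv₂ : ∀ (a : Fin n → A) (i : Fin n), a i = 0 → f₂ a = 0)
    (hv₃ : ∀ (a : Fin n → A) (i : Fin n), a i = 0 → f₃ a = 0) :
    ∀ (i : Fin n) (a : Fin n → A),
      ‖f₁ (Function.update a i ((2 : ℂ) • a i)) - (2 : ℂ) • f₁ a‖ ≤ 3 * α := by
  intro i a
  set lam : Fin n → ℂ := fun j => if j = i then 1 else 0 with hlam
  have hterm : ∀ (a b : Fin n → A),
      Dmap n f₁ f₂ f₃ lam a b
        = f₁ (Function.update a i (a i + b i)) - f₂ a
            - f₃ (Function.update a i (b i)) := by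
    intro a b
    unfold Dmap
    rw [Finset.sum_eq_single i]
    · simp [hlam]
    · intro j _ hj
      have h0 : f₁ (Function.update a j (0:A)) = 0 :=
        hv₁ _ j (by simp)
      simp [hlam, hj, h0]
    · simp
  have claim1 : ‖f₁ (Function.update a i ((2:ℂ) • a i)) - f₂ a - f₃ a‖ ≤ α := by
    have := hD lam a a
    rw [hterm a a] at this
    simpa [two_smul, Function.update_eq_self] using this
  have claim2 : ‖f₁ a - f₂ a‖ ≤ α := by
    have := hD lam a (fun _ => 0)
    rw [hterm a (fun _ => 0)] at this
    have h3 : f₃ (Function.update a i (0:A)) = 0 := hv₃ _ i (by simp)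
    simpa [h3, Function.update_eq_self] using this
  have claim3 : ‖f₁ a - f₃ a‖ ≤ α := by
    have := hD lam (Function.update a i 0) a
    rw [hterm (Function.update a i 0) a] at this
    have h2 : f₂ (Function.update a i (0:A)) = 0 := hv₂ _ i (by simp)
    simpa [h2, Function.update_idem, Function.update_eq_self] using this
  have key : f₁ (Function.update a i ((2:ℂ) • a i)) - (2:ℂ) • f₁ a
      = (f₁ (Function.update a i ((2:ℂ) • a i)) - f₂ a - f₃ a)
          + (f₂ a - f₁ a) + (f₃ a - f₁ a) := by
    module
  rw [key]
  calc ‖_ + _ + _‖ ≤ ‖f₁ (Function.update a i ((2:ℂ) • a i)) - f₂ a - f₃ a‖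
        + ‖f₂ a - f₁ a‖ + ‖f₃ a - f₁ a‖ := norm_add₃_le
    _ ≤ α + α + α := by
        gcongr
        · rw [norm_sub_rev]; exact claim2
        · rw [norm_sub_rev]; exact claim3
    _ = 3 * α := by ring
end
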